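/- arXiv:1910.05932 — 14 statements merged into one kernel-verified Lean document; each statement's English description precedes it below -/
import Mathlib

section
/- Let O_1, …, O_n be pairwise incomparable valuation subrings of a field K and let R = O_1 ∩ ⋯ ∩ O_n. Then every finitely generated R-submodule of K (where K is viewed as an R-module) is generated by a single element. -/
/-!
Let `t ∈ K`. Choose `N ≥ 2` such that, whenever `t ∈ O i`, the residues of `t ^ N - t + 1` and
`t ^ (N + 1) - t ^ 2 + 1` are nonzero: `N = k ! + 1` with `k` large works, because then
`x ^ N = x` for every residue `x` of finite order, while `N ↦ x ^ N` is injective for the others.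
Both polynomials then have valuation `max 1 (v t) ^ deg` at every `O i`, so
`α = (1 - t) / (t ^ N - t + 1)` lies in `R` and `t + α`, their quotient, has valuation
`max 1 (v t)` everywhere. For `a ≠ 0` and `t = b / a`, the element `b + α a` therefore divides
both `a` and `b` in `R`, so it generates `R a + R b`.
-/

open Filter Nat

section Field

variable {F : Type*} [Field F]

lemma eventually_pow_factorial_add_sub_pow_add_one_ne_zero (x : F) {m : ℕ} (hm : m ≠ 0) :
    ∀ᶠ k in atTop, x ^ (k ! + m) - x ^ m + 1 ≠ 0 := by
  by_cases hx0 : x = 0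
  · subst hx0
    exact Eventually.of_forall fun k => by simp [hm]
  by_cases hfin : IsOfFinOrder x
  · filter_upwards [eventually_ge_atTop (orderOf x)] with k hk
    have hpow : x ^ k ! = 1 := orderOf_dvd_iff_pow_eq_one.1 (Nat.dvd_factorial hfin.orderOf_pos hk)
    simp [pow_add, hpow]
  · have hinj : Function.Injective (fun N : ℕ => x ^ N) := by
      have : ¬ IsOfFinOrder (Units.mk0 x hx0) := by rwa [← Units.isOfFinOrder_val]
      exact Units.val_injective.comp (injective_pow_iff_not_isOfFinOrder.2 this)
    have hne : ∀ᶠ N in atTop, x ^ N ≠ x ^ m - 1 := by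
      rw [← Nat.cofinite_eq_atTop]
      exact hinj.tendsto_cofinite.eventually (eventually_cofinite_ne _)
    have htend : Tendsto (fun k => k ! + m) atTop atTop :=
      tendsto_atTop_mono (fun k => (self_le_factorial k).trans (le_add_right le_rfl)) tendsto_id
    filter_upwards [htend.eventually hne] with k hk h
    exact hk (by linear_combination h)

lemma exists_forall_pow_sub_add_one_ne_zero {ι : Type*} [Finite ι] {k : ι → Type*}
    [∀ i, Field (k i)] (x : ∀ i, k i) :
    ∃ N, 2 ≤ N ∧ ∀ i, x i ^ N - x i + 1 ≠ 0 ∧ x i ^ (N + 1) - x i ^ 2 + 1 ≠ 0 := by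
  have h := eventually_all.2 fun i =>
    (eventually_pow_factorial_add_sub_pow_add_one_ne_zero (x i) one_ne_zero).and
      (eventually_pow_factorial_add_sub_pow_add_one_ne_zero (x i) two_ne_zero)
  obtain ⟨k, hk⟩ := h.exists
  exact ⟨k ! + 1, by linarith [k.factorial_pos], fun i => by simpa [add_assoc] using hk i⟩

end Field

namespace Valuation

variable {R Γ₀ : Type*} [Ring R] [LinearOrderedCommGroupWithZero Γ₀] (v : Valuation R Γ₀)
  {t : R} {m M : ℕ}

lemma map_pow_sub_pow_add_one_of_one_lt (hmM : m < M) (ht : 1 < v t) :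
    v (t ^ M - t ^ m + 1) = v t ^ M := by
  have hM : 1 < v t ^ M := one_lt_pow₀ ht (by omega)
  rw [map_add_eq_of_lt_left, map_sub_eq_of_lt_left, map_pow]
  · simpa only [map_pow] using pow_lt_pow_right₀ ht hmM
  · rwa [map_sub_eq_of_lt_left, map_one, map_pow]
    simpa only [map_pow] using pow_lt_pow_right₀ ht hmM

lemma map_pow_sub_pow_add_one_eq_max_pow (hmM : m < M)
    (h : v t ≤ 1 → v (t ^ M - t ^ m + 1) = 1) :
    v (t ^ M - t ^ m + 1) = max 1 (v t) ^ M := by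
  rcases le_or_gt (v t) 1 with ht | ht
  · rw [max_eq_left ht, one_pow, h ht]
  · rw [max_eq_right ht.le, v.map_pow_sub_pow_add_one_of_one_lt hmM ht]

end Valuation

namespace ValuationSubring

variable {K : Type*} [Field K]

lemma valuation_pow_sub_pow_add_one_eq_max_pow {A : ValuationSubring K} {t : K} {m M : ℕ}
    (hmM : m < M) (hres : ∀ ht : t ∈ A,
      IsLocalRing.residue A ⟨t, ht⟩ ^ M - IsLocalRing.residue A ⟨t, ht⟩ ^ m + 1 ≠ 0) :
    A.valuation (t ^ M - t ^ m + 1) = max 1 (A.valuation t) ^ M :=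
  A.valuation.map_pow_sub_pow_add_one_eq_max_pow hmM fun ht => by
    let z : A := ⟨t, (A.valuation_le_one_iff t).1 ht⟩
    have hunit : IsUnit (z ^ M - z ^ m + 1) := (IsLocalRing.residue_ne_zero_iff_isUnit _).1
      (by simpa only [map_add, map_sub, map_pow, map_one] using hres z.2)
    exact_mod_cast (A.valuation_eq_one_iff _).1 hunit

variable {ι : Type*} (O : ι → ValuationSubring K)

theorem exists_mem_iInf_valuation_add_eq_max [Finite ι] (t : K) :
    ∃ α ∈ ⨅ i, (O i).toSubring,
      ∀ i, (O i).valuation (t + α) = max 1 ((O i).valuation t) := by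
  obtain ⟨N, hN, hres⟩ := exists_forall_pow_sub_add_one_ne_zero
    fun i : {i // t ∈ O i} => IsLocalRing.residue (O i) ⟨t, i.2⟩
  have ha : ∀ i, (O i).valuation (t ^ N - t ^ 1 + 1) = max 1 ((O i).valuation t) ^ N := fun i =>
    valuation_pow_sub_pow_add_one_eq_max_pow (by omega) fun ht => by
      simpa only [pow_one] using (hres ⟨i, ht⟩).1
  have hb : ∀ i, (O i).valuation (t ^ (N + 1) - t ^ 2 + 1) =
      max 1 ((O i).valuation t) ^ (N + 1) := fun i =>
    valuation_pow_sub_pow_add_one_eq_max_pow (by omega) fun ht => (hres ⟨i, ht⟩).2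
  rw [pow_one] at ha
  have hμ : ∀ i, 0 < max 1 ((O i).valuation t) := fun i => zero_lt_one.trans_le (le_max_left _ _)
  have ha0 : ∀ i, t ^ N - t + 1 ≠ 0 := fun i h =>
    (pow_pos (hμ i) N).ne' (by rw [← ha i, h, map_zero])
  refine ⟨(1 - t) / (t ^ N - t + 1), Subring.mem_iInf.2 fun i => ?_, fun i => ?_⟩
  · refine ((O i).valuation_le_one_iff _).1 ?_
    rw [map_div₀, ha, div_le_one₀ (pow_pos (hμ i) N)]
    calc (O i).valuation (1 - t) ≤ max 1 ((O i).valuation t) := by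
          simpa only [map_one] using (O i).valuation.map_sub 1 t
      _ ≤ max 1 ((O i).valuation t) ^ N := le_self_pow₀ (le_max_left _ _) (by omega)
  · have hsum :
        t + (1 - t) / (t ^ N - t + 1) = (t ^ (N + 1) - t ^ 2 + 1) / (t ^ N - t + 1) := by
      field_simp [ha0 i]
      ring
    rw [hsum, map_div₀, ha, hb, pow_succ, mul_div_cancel_left₀ _ (pow_pos (hμ i) N).ne']

lemma mem_span_singleton_of_valuation_le {c x : K} (hc : c ≠ 0)
    (h : ∀ i, (O i).valuation x ≤ (O i).valuation c) :
    x ∈ Submodule.span ↥(⨅ i, (O i).toSubring) {c} := by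
  have hmem : x / c ∈ ⨅ i, (O i).toSubring := Subring.mem_iInf.2 fun i =>
    ((O i).valuation_le_one_iff _).1 (by rw [map_div₀]; exact div_le_one_of_le₀ (h i) zero_le)
  exact Submodule.mem_span_singleton.2 ⟨⟨x / c, hmem⟩, div_mul_cancel₀ x hc⟩

theorem exists_span_pair_eq_span_singleton [Finite ι] [Nonempty ι] (a b : K) :
    ∃ c, Submodule.span ↥(⨅ i, (O i).toSubring) {a, b} =
      Submodule.span ↥(⨅ i, (O i).toSubring) {c} := by
  rcases eq_or_ne a 0 with rfl | ha
  · exact ⟨b, Submodule.span_insert_zero⟩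
  obtain ⟨α, hαR, hα⟩ := exists_mem_iInf_valuation_add_eq_max O (b / a)
  have hv : ∀ i, (O i).valuation (α * a + b) =
      max ((O i).valuation a) ((O i).valuation b) := fun i => by
    rw [show α * a + b = a * (b / a + α) by field_simp; ring, map_mul, hα, mul_max, mul_one,
      ← map_mul, mul_div_cancel₀ _ ha]
  have hc : α * a + b ≠ 0 := fun h => by
    obtain ⟨i⟩ := ‹Nonempty ι›
    have hle := (le_max_left ((O i).valuation a) ((O i).valuation b)).trans_eq (hv i).symm
    rw [h, map_zero, le_zero_iff, Valuation.zero_iff] at hle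
    exact ha hle
  refine ⟨α * a + b, le_antisymm ?_ ?_⟩
  · rw [Submodule.span_le, Set.insert_subset_iff, Set.singleton_subset_iff]
    exact ⟨mem_span_singleton_of_valuation_le O hc fun i => (hv i).symm ▸ le_max_left _ _,
      mem_span_singleton_of_valuation_le O hc fun i => (hv i).symm ▸ le_max_right _ _⟩
  · rw [Submodule.span_singleton_le_iff_mem, Submodule.mem_span_pair]
    exact ⟨⟨α, hαR⟩, 1, by simp [Subring.smul_def]⟩

end ValuationSubring

theorem finitely_generated_submodule_of_multiValuationRing_is_principal_general
    {K : Type*} [Field K] (n : ℕ) (hn : 0 < n)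
    (O : Fin n → ValuationSubring K)
    (R : Subring K) (hR : R = ⨅ i, (O i).toSubring)
    (M : Submodule ↥R K) (hM : M.FG) :
    ∃ a : K, M = Submodule.span ↥R {a} := by
  subst hR
  have : Nonempty (Fin n) := ⟨⟨0, hn⟩⟩
  induction M, hM using Submodule.fg_induction with
  | singleton x => exact ⟨x, rfl⟩
  | sup N₁ N₂ _ _ ih₁ ih₂ =>
    obtain ⟨a, rfl⟩ := ih₁
    obtain ⟨b, rfl⟩ := ih₂
    rw [← Submodule.span_insert]
    exact ValuationSubring.exists_span_pair_eq_span_singleton O a b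

/-- Let `O_1, …, O_n` be pairwise incomparable valuation subrings of a field `K` and let
`R = O_1 ∩ ⋯ ∩ O_n`.  Then every finitely generated `R`-submodule of `K` is generated by
a single element. -/
theorem finitely_generated_submodule_of_multiValuationRing_is_principal
    {K : Type*} [Field K] (n : ℕ) (hn : 0 < n)
    (O : Fin n → ValuationSubring K)
    (hincomp : ∀ i j, i ≠ j → ¬ O i ≤ O j)
    (R : Subring K) (hR : R = ⨅ i, (O i).toSubring)
    (M : Submodule ↥R K) (hM : M.FG) :
    ∃ a : K, M = Submodule.span ↥R {a} :=
  finitely_generated_submodule_of_multiValuationRing_is_principal_general n hn O R hR M hM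
end

section
/- Let O_1, …, O_n be pairwise incomparable valuation subrings of a field K and let R = O_1 ∩ ⋯ ∩ O_n. Then R is a Bezout domain: every finitely generated ideal of R is principal. -/
/-!
For `x, y ∈ R` with `y ≠ 0` it suffices to find `r ∈ R` with `(r + x / y)⁻¹ ∈ R`: then `x + r y`
divides `y = (x + r y) (r + x / y)⁻¹`, so `(x, y) = (x + r y, y) = (x + r y)`.

Such an `r` comes from a weak approximation argument. Incomparability and an avoidance argument
give `eᵢ ∈ R` with `vᵢ(eᵢ) = 1` and `vⱼ(eᵢ) < 1` for `j ≠ i`, and `r = ∑ {eᵢ | vᵢ(x / y) < 1}`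
makes `vᵢ(r + x / y) ≥ 1` for all `i`.
-/

namespace ValuationSubring

variable {K : Type*} [Field K]

theorem one_lt_valuation_iff (A : ValuationSubring K) (x : K) : 1 < A.valuation x ↔ x ∉ A := by
  rw [← not_le, valuation_le_one_iff]

theorem pow_sub_pow_notMem {A : ValuationSubring K} {s : K} (hs : s ∉ A) {k l : ℕ}
    (hkl : k < l) : s ^ k - s ^ l ∉ A := by
  have hv : 1 < A.valuation s := (one_lt_valuation_iff A s).2 hs
  rw [← valuation_le_one_iff, Valuation.map_sub_eq_of_lt_right, map_pow, not_le]
  · exact one_lt_pow₀ hv (by omega)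
  · rw [map_pow, map_pow]
    exact pow_lt_pow_right₀ hv hkl

theorem setOf_pow_add_mem_subsingleton {A : ValuationSubring K} {s : K} (hs : s ∉ A) (t : K) :
    {k : ℕ | s ^ k + t ∈ A}.Subsingleton := by
  intro k (hk : s ^ k + t ∈ A) l (hl : s ^ l + t ∈ A)
  by_contra hne
  rcases Nat.lt_or_gt_of_ne hne with h | h
  · exact pow_sub_pow_notMem hs h (by simpa using sub_mem hk hl)
  · exact pow_sub_pow_notMem hs h (by simpa using sub_mem hl hk)

theorem exists_mem_forall_notMem_of_not_le {ι : Type*} (A : ValuationSubring K)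
    (B : ι → ValuationSubring K) (S : Finset ι) (h : ∀ j ∈ S, ¬ A ≤ B j) :
    ∃ a ∈ A, ∀ j ∈ S, a ∉ B j := by
  classical
  induction S using Finset.induction_on with
  | empty => exact ⟨0, zero_mem A, by simp⟩
  | insert j₀ S _ ih =>
    obtain ⟨s, hsA, hsS⟩ := ih fun j hj => h j (Finset.mem_insert_of_mem hj)
    simp only [Finset.forall_mem_insert] at h ⊢
    by_cases hs₀ : s ∈ B j₀
    swap
    · exact ⟨s, hsA, hs₀, hsS⟩
    obtain ⟨t, htA, ht₀⟩ := Set.not_subset.1 h.1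
    -- `s ^ k + t ∉ B j₀` for every `k`, and each `B j` with `j ∈ S` rules out at most one `k`.
    have hfin : (⋃ j ∈ S, {k : ℕ | s ^ k + t ∈ B j}).Finite :=
      S.finite_toSet.biUnion fun j hj => (setOf_pow_add_mem_subsingleton (hsS j hj) t).finite
    obtain ⟨k, hk⟩ := hfin.exists_notMem
    simp only [Set.mem_iUnion, Set.mem_ofPred_eq, not_exists] at hk
    refine ⟨s ^ k + t, A.add_mem _ _ (pow_mem hsA k) htA, fun hmem => ht₀ ?_, hk⟩
    simpa using sub_mem hmem (pow_mem hs₀ k)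

variable {ι : Type*} [Fintype ι]

theorem exists_valuation_eq_one_and_lt_one (O : ι → ValuationSubring K) (i : ι)
    (h : ∀ j, j ≠ i → ¬ O i ≤ O j) :
    ∃ e, (O i).valuation e = 1 ∧ ∀ j, j ≠ i → (O j).valuation e < 1 := by
  classical
  obtain ⟨a, haO, ha⟩ := exists_mem_forall_notMem_of_not_le (O i) O (Finset.univ.erase i)
    fun j hj => h j (Finset.ne_of_mem_erase hj)
  have hv : ∀ j, j ≠ i → 1 < (O j).valuation a := fun j hj =>
    (one_lt_valuation_iff _ a).2 <| ha j (Finset.mem_erase.2 ⟨hj, Finset.mem_univ j⟩)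
  obtain ⟨s, hs, hsv⟩ : ∃ s, (O i).valuation s = 1 ∧ ∀ j, j ≠ i → 1 < (O j).valuation s := by
    rcases ((O i).valuation_le_one ⟨a, haO⟩).lt_or_eq with hlt | heq
    · refine ⟨1 + a, Valuation.map_one_add_of_lt _ hlt, fun j hj => ?_⟩
      rw [Valuation.map_add_eq_of_lt_right _ (by rw [map_one]; exact hv j hj)]
      exact hv j hj
    · exact ⟨a, heq, hv⟩
  refine ⟨s⁻¹, by rw [map_inv₀, hs, inv_one], fun j hj => ?_⟩
  rw [map_inv₀]
  exact inv_lt_one_of_one_lt₀ (hsv j hj)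

theorem exists_forall_mem_one_le_valuation_add (O : ι → ValuationSubring K)
    (hincomp : ∀ i j, i ≠ j → ¬ O i ≤ O j) (t : K) :
    ∃ r, (∀ i, r ∈ O i) ∧ ∀ i, 1 ≤ (O i).valuation (r + t) := by
  classical
  choose e he₁ he₂ using fun i =>
    exists_valuation_eq_one_and_lt_one O i fun j hj => hincomp i j hj.symm
  set S := Finset.univ.filter fun i => (O i).valuation t < 1
  have hsum_of_mem : ∀ i ∈ S, (O i).valuation (∑ j ∈ S, e j) = 1 := fun i hi => by
    rw [Valuation.map_sum_eq_of_lt _ hi, he₁]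
    intro j hj
    rw [he₁]
    exact he₂ j i (Ne.symm <| Finset.notMem_singleton.1 (Finset.mem_sdiff.1 hj).2)
  have hsum_of_notMem : ∀ i ∉ S, (O i).valuation (∑ j ∈ S, e j) < 1 := fun i hi =>
    Valuation.map_sum_lt _ one_ne_zero fun j hj => he₂ j i (ne_of_mem_of_not_mem hj hi).symm
  refine ⟨∑ j ∈ S, e j, fun i => ?_, fun i => ?_⟩
  · rw [← valuation_le_one_iff]
    by_cases hi : i ∈ S
    · exact (hsum_of_mem i hi).le
    · exact (hsum_of_notMem i hi).le
  · by_cases hi : i ∈ S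
    · have hti : (O i).valuation t < 1 := (Finset.mem_filter.1 hi).2
      rw [Valuation.map_add_eq_of_lt_left _ (by rwa [hsum_of_mem i hi]), hsum_of_mem i hi]
    · have hti : 1 ≤ (O i).valuation t := by simpa [S] using hi
      rwa [Valuation.map_add_eq_of_lt_right _ ((hsum_of_notMem i hi).trans_le hti)]

end ValuationSubring

theorem Subring.isBezout_of_forall_exists_add_mul_eq_one {K : Type*} [Field K] (R : Subring K)
    (h : ∀ t : K, ∃ r ∈ R, ∃ s ∈ R, (r + t) * s = 1) : IsBezout R := by
  rw [IsBezout.iff_span_pair_isPrincipal]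
  intro x y
  obtain ⟨r, hr, s, hs, hrs⟩ := h (x / y)
  rw [← Ideal.span_pair_add_mul_right x y ⟨r, hr⟩]
  have hdvd : x + ⟨r, hr⟩ * y ∣ y := by
    rcases eq_or_ne y 0 with rfl | hy
    · exact dvd_zero _
    have hy' : (y : K) ≠ 0 := fun h0 => hy (Subtype.ext h0)
    refine ⟨⟨s, hs⟩, Subtype.ext ?_⟩
    change (y : K) = (x + r * y) * s
    calc (y : K) = y * ((r + x / y) * s) := by rw [hrs, mul_one]
      _ = (x + r * y) * s := by field_simp; ring
  exact ⟨⟨_, Ideal.span_pair_eq_span_left_iff_dvd.2 hdvd⟩⟩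

theorem ValuationSubring.isBezout_iInf_toSubring {K : Type*} [Field K] {ι : Type*} [Fintype ι]
    [Nonempty ι] (O : ι → ValuationSubring K) (hincomp : ∀ i j, i ≠ j → ¬ O i ≤ O j) :
    IsBezout ↥(⨅ i, (O i).toSubring) := by
  refine Subring.isBezout_of_forall_exists_add_mul_eq_one _ fun t => ?_
  obtain ⟨r, hr, hle⟩ := exists_forall_mem_one_le_valuation_add O hincomp t
  have hne : r + t ≠ 0 := fun h0 => by simpa [h0] using hle (Classical.arbitrary ι)
  refine ⟨r, Subring.mem_iInf.2 hr, (r + t)⁻¹, Subring.mem_iInf.2 fun i => ?_, mul_inv_cancel₀ hne⟩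
  change (r + t)⁻¹ ∈ O i
  rw [← valuation_le_one_iff, map_inv₀]
  exact inv_le_one_of_one_le₀ (hle i)

/-- Let `O_1, …, O_n` be pairwise incomparable valuation subrings of a field `K` and let
`R = O_1 ∩ ⋯ ∩ O_n`.  Then `R` is a Bezout domain: every finitely generated ideal of `R`
is principal. -/
theorem multiValuationRing_is_bezout
    {K : Type*} [Field K] (n : ℕ) (hn : 0 < n)
    (O : Fin n → ValuationSubring K)
    (hincomp : ∀ i j, i ≠ j → ¬ O i ≤ O j)
    (R : Subring K) (hR : R = ⨅ i, (O i).toSubring)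
    (I : Ideal ↥R) (hI : I.FG) :
    I.IsPrincipal := by
  subst hR
  have : Nonempty (Fin n) := ⟨⟨0, hn⟩⟩
  have : IsBezout ↥(⨅ i, (O i).toSubring) := ValuationSubring.isBezout_iInf_toSubring O hincomp
  exact IsBezout.isPrincipal_of_FG I hI
end

section
/- Let O_1, …, O_n be pairwise incomparable valuation subrings of a field K and let R = O_1 ∩ ⋯ ∩ O_n. Then the fraction field of R is K: every element x ∈ K can be written as x = a/s with a ∈ R and s a nonzero element of R. -/
/-- Auxiliary: if `B ⊆ ℕ` does not contain `0` and is closed under the operation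
`r, r' ∈ B, r' < r → r - r' - 1 ∈ B`, then there is at most one prime `p` with `p - 1 ∈ B`. -/
lemma badPrime_unique (B : ℕ → Prop) (h0 : ¬ B 0)
    (hsub : ∀ r r', B r → B r' → r' < r → B (r - r' - 1))
    {p q : ℕ} (hp : p.Prime) (hq : q.Prime) (hBp : B (p - 1)) (hBq : B (q - 1)) :
    p = q := by
  classical
  set E : ℕ → Prop := fun d => 1 ≤ d ∧ B (d - 1) with hE
  have hEp : E p := ⟨hp.one_lt.le.trans' (by norm_num), hBp⟩
  have hEq : E q := ⟨hq.one_lt.le.trans' (by norm_num), hBq⟩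
  have hex : ∃ d, E d := ⟨p, hEp⟩
  set d := Nat.find hex with hd
  have hdE : E d := Nat.find_spec hex
  have hd1 : d ≠ 1 := by
    intro h
    exact h0 (by simpa [h] using hdE.2)
  have hd2 : 2 ≤ d := by
    have := hdE.1; omega
  -- closure of E under subtraction
  have hEsub : ∀ a b, E a → E b → b < a → E (a - b) := by
    intro a b ha hb hba
    refine ⟨by omega, ?_⟩
    have := hsub (a - 1) (b - 1) ha.2 hb.2 (by omega)
    have heq : a - 1 - (b - 1) - 1 = a - b - 1 := by omega
    rwa [heq] at this
  -- d divides every element of E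
  have hdvd : ∀ a, E a → d ∣ a := by
    intro a
    induction a using Nat.strong_induction_on with
    | _ a ih =>
      intro ha
      have hda : d ≤ a := Nat.find_min' hex ha
      rcases eq_or_lt_of_le hda with h | h
      · exact h ▸ dvd_refl d
      · have h1 : E (a - d) := hEsub a d ha hdE h
        have h2 : d ∣ (a - d) := ih (a - d) (by omega) h1
        have h3 : a - d + d = a := by omega
        exact h3 ▸ dvd_add h2 dvd_rfl
  have hdp : d = p := ((hp.eq_one_or_self_of_dvd d (hdvd p hEp)).resolve_left hd1).symm ▸ rfl
  have hdq : d = q := ((hq.eq_one_or_self_of_dvd d (hdvd q hEq)).resolve_left hd1).symm ▸ rfl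
  omega

/-- Let `O_1, …, O_n` be pairwise incomparable valuation subrings of a field `K` and let
`R = O_1 ∩ ⋯ ∩ O_n`.  Then the fraction field of `R` is `K`: every element `x ∈ K` can be
written as `x = a / s` with `a ∈ R` and `s` a nonzero element of `R`. -/
theorem multiValuationRing_fractionField
    {K : Type*} [Field K] (n : ℕ) (hn : 0 < n)
    (O : Fin n → ValuationSubring K)
    (hincomp : ∀ i j, i ≠ j → ¬ O i ≤ O j)
    (R : Subring K) (hR : R = ⨅ i, (O i).toSubring)
    (x : K) :
    ∃ a s : K, a ∈ R ∧ s ∈ R ∧ s ≠ 0 ∧ x = a / s := by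
  classical
  subst hR
  by_cases hx : x = 0
  · exact ⟨0, 1, zero_mem _, one_mem _, one_ne_zero, by simp [hx]⟩
  set t : K := x⁻¹ with ht
  have htne : t ≠ 0 := inv_ne_zero hx
  set g : ℕ → K := fun r => ∑ i ∈ Finset.range (r + 1), t ^ i with hgdef
  -- algebraic identity
  have hid : ∀ r r' : ℕ, r' < r → g r - g r' = t ^ (r' + 1) * g (r - r' - 1) := by
    intro r r' hlt
    have h1 : r + 1 = (r' + 1) + ((r - r' - 1) + 1) := by omega
    rw [hgdef]
    simp only []
    rw [h1, Finset.sum_range_add, add_sub_cancel_left, Finset.mul_sum]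
    exact Finset.sum_congr rfl fun i _ => pow_add t (r' + 1) i
  -- basic valuation computations
  have hvg_lt : ∀ (j : Fin n), (O j).valuation t < 1 → ∀ r, (O j).valuation (g r) = 1 := by
    intro j hvt r
    set v := (O j).valuation
    have hsum : v (∑ i ∈ Finset.range r, t ^ i) ≤ 1 :=
      Valuation.map_sum_le v fun i _ => by
        rw [map_pow]; exact pow_le_one' hvt.le i
    have hlt : v (t * ∑ i ∈ Finset.range r, t ^ i) < 1 := by
      rw [Valuation.map_mul]
      calc v t * v (∑ i ∈ Finset.range r, t ^ i) ≤ v t * 1 := mul_le_mul_right hsum _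
        _ = v t := mul_one _
        _ < 1 := hvt
    have : g r = (t * ∑ i ∈ Finset.range r, t ^ i) + 1 := geom_sum_succ
    rw [this, Valuation.map_add_eq_of_lt_right v (by simpa using hlt), map_one]
  have hvg_gt : ∀ (j : Fin n), 1 < (O j).valuation t →
      ∀ r, (O j).valuation (g r) = (O j).valuation t ^ r := by
    intro j hvt r
    set v := (O j).valuation
    have hpow : v (t ^ r) = v t ^ r := map_pow v t r
    have hsum : v (∑ i ∈ Finset.range r, t ^ i) < v (t ^ r) := by
      rw [hpow]
      refine Valuation.map_sum_lt v (pow_ne_zero r (by simp [v.ne_zero_iff, htne])) ?_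
      intro i hi
      rw [map_pow]
      exact pow_lt_pow_right₀ hvt (Finset.mem_range.mp hi)
    have : g r = t ^ r + ∑ i ∈ Finset.range r, t ^ i := geom_sum_succ'
    rw [this, Valuation.map_add_eq_of_lt_left v hsum, hpow]
  have hvg_le : ∀ (j : Fin n), (O j).valuation t = 1 → ∀ r, (O j).valuation (g r) ≤ 1 := by
    intro j hvt r
    exact Valuation.map_sum_le _ fun i _ => by rw [map_pow, hvt, one_pow]
  -- at most one bad prime per index with v t = 1
  have key : ∀ j : Fin n, (O j).valuation t = 1 → ∀ p q : ℕ, p.Prime → q.Prime →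
      (O j).valuation (g (p - 1)) < 1 → (O j).valuation (g (q - 1)) < 1 → p = q := by
    intro j hvt p q hp hq hbp hbq
    refine badPrime_unique (fun r => (O j).valuation (g r) < 1) ?_ ?_ hp hq hbp hbq
    · simp [hgdef]
    · intro r r' hr hr' hlt
      have hsub : (O j).valuation (g r - g r') < 1 :=
        lt_of_le_of_lt (Valuation.map_sub _ _ _) (max_lt hr hr')
      rwa [hid r r' hlt, Valuation.map_mul, map_pow, hvt, one_pow, one_mul] at hsub
  -- choose a prime q avoiding all bad primes
  set f : Fin n → ℕ := fun j =>
    if h : ∃ p : ℕ, p.Prime ∧ (O j).valuation (g (p - 1)) < 1 then h.choose else 0 with hf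
  obtain ⟨q, hqge, hq⟩ := Nat.exists_infinite_primes ((Finset.univ.sup f) + 1)
  have hqgood : ∀ j : Fin n, (O j).valuation t = 1 → ¬ (O j).valuation (g (q - 1)) < 1 := by
    intro j hvt hbad
    have hex : ∃ p : ℕ, p.Prime ∧ (O j).valuation (g (p - 1)) < 1 := ⟨q, hq, hbad⟩
    have hspec := hex.choose_spec
    have hfj : f j = hex.choose := by rw [hf]; simp only [dif_pos hex]
    have : q = f j := by
      rw [hfj]; exact key j hvt q _ hq hspec.1 hbad hspec.2
    have hle : f j ≤ Finset.univ.sup f := Finset.le_sup (Finset.mem_univ j)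
    omega
  set m : ℕ := q - 1 with hm
  have hm1 : 1 ≤ m := by have := hq.two_le; omega
  -- the denominator is nonzero
  have hvgne : ∀ j : Fin n, (O j).valuation (g m) ≠ 0 := by
    intro j
    rcases lt_trichotomy ((O j).valuation t) 1 with h | h | h
    · rw [hvg_lt j h m]; exact one_ne_zero
    · have h1 : (O j).valuation (g m) = 1 :=
        le_antisymm (hvg_le j h m) (not_lt.mp (hqgood j h))
      rw [h1]; exact one_ne_zero
    · rw [hvg_gt j h m]
      exact pow_ne_zero m (by simp [Valuation.ne_zero_iff, htne])
  have hgm_ne : g m ≠ 0 := by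
    intro h
    exact hvgne ⟨0, hn⟩ (by rw [h, map_zero])
  -- now define a and s
  refine ⟨1 / g m, t / g m, ?_, ?_, ?_, ?_⟩
  · rw [Subring.mem_iInf]
    intro j
    apply (O j).mem_of_valuation_le_one
    rw [Valuation.map_div, map_one]
    rcases lt_trichotomy ((O j).valuation t) 1 with h | h | h
    · rw [hvg_lt j h m]; norm_num
    · rw [le_antisymm (hvg_le j h m) (not_lt.mp (hqgood j h))]; norm_num
    · rw [hvg_gt j h m,
        div_le_one₀ (zero_lt_iff.mpr (pow_ne_zero m ((Valuation.ne_zero_iff _).mpr htne)))]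
      exact h.le.trans (le_self_pow₀ h.le (by omega))
  · rw [Subring.mem_iInf]
    intro j
    apply (O j).mem_of_valuation_le_one
    rw [Valuation.map_div]
    rcases lt_trichotomy ((O j).valuation t) 1 with h | h | h
    · rw [hvg_lt j h m, div_one]; exact h.le
    · rw [le_antisymm (hvg_le j h m) (not_lt.mp (hqgood j h)), div_one, h]
    · rw [hvg_gt j h m,
        div_le_one₀ (zero_lt_iff.mpr (pow_ne_zero m ((Valuation.ne_zero_iff _).mpr htne)))]
      exact le_self_pow₀ h.le (by omega)
  · exact div_ne_zero htne hgm_ne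
  · rw [ht]
    field_simp
end

section
/- Let O_1, …, O_n be pairwise incomparable valuation subrings of a field K and let R = O_1 ∩ ⋯ ∩ O_n. Then for every R-submodule M of K and every x ∈ K: x ∈ M if and only if for each i ∈ {1,…,n} there is some a ∈ M with x ∈ a·O_i (i.e., x = a·r for some r ∈ O_i). In other words, M is determined coordinatewise by the valuations: membership in M is equivalent to having, at each valuation, value at least that of some element of M. -/
/-!
Write `v_i` for the valuation of `O_i` and `x = a_i r_i` with `a_i ∈ M`, `v_i(r_i) ≤ 1`.
Incomparability yields, for each `i`, an element `s_i` with `v_i(s_i) = 1`, `v_j(s_i) < 1` for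
`j ≠ i`, and `s_i r_i ∈ R`: take `s_i = (1 + w)⁻¹` for some `w` with `v_i(w) < 1` and
`1 < v_j(w)`, `v_j(r_i) ≤ v_j(w)` for `j ≠ i`. Then `g = ∑ s_i` has value `1` at every `O_j`,
so `g` is a unit of `R`, and `g x = ∑ (s_i r_i) a_i ∈ M`; hence `x = g⁻¹ (g x) ∈ M`.
-/

open Filter

lemma eventually_pow_ne {Γ₀ : Type*} [LinearOrderedCommGroupWithZero Γ₀] {γ c : Γ₀}
    (h : 1 < γ ∨ 1 < c) : ∀ᶠ m in atTop, γ ^ m ≠ c := by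
  by_cases hγ : 1 < γ
  · rw [← Nat.cofinite_eq_atTop]
    exact (pow_right_strictMono₀ hγ).injective.tendsto_cofinite.eventually
      (eventually_cofinite_ne c)
  · exact Eventually.of_forall fun m =>
      ((pow_le_one₀ zero_le (not_lt.1 hγ)).trans_lt (h.resolve_left hγ)).ne

namespace ValuationSubring

variable {K : Type*} [Field K]

lemma exists_valuation_lt_one_lt_valuation {A B : ValuationSubring K} (hAB : ¬ A ≤ B)
    (hBA : ¬ B ≤ A) : ∃ a, A.valuation a < 1 ∧ 1 < B.valuation a := by
  obtain ⟨b, hbA, hbB⟩ := SetLike.not_le_iff_exists.1 hAB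
  obtain ⟨c, hcB, hcA⟩ := SetLike.not_le_iff_exists.1 hBA
  have hc0 : c ≠ 0 := by rintro rfl; exact hcA A.zero_mem
  rw [← valuation_le_one_iff, not_le] at hbB hcA
  rw [← valuation_le_one_iff] at hbA hcB
  refine ⟨b / c, ?_, ?_⟩
  · rw [map_div₀, div_lt_one₀ (zero_lt_one.trans hcA)]
    exact hbA.trans_lt hcA
  · rw [map_div₀, one_lt_div₀ (zero_lt_iff.2 ((Valuation.ne_zero_iff _).2 hc0))]
    exact hcB.trans_lt hbB

variable {ι : Type*} {O : ι → ValuationSubring K}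

lemma exists_valuation_lt_one_forall_mem_one_lt_valuation (i : ι) (T : Finset ι)
    (hT : ∀ j ∈ T, ¬ O i ≤ O j ∧ ¬ O j ≤ O i) :
    ∃ a, (O i).valuation a < 1 ∧ ∀ j ∈ T, 1 < (O j).valuation a := by
  classical
  induction T using Finset.induction_on with
  | empty => exact ⟨0, by simp, by simp⟩
  | insert j₀ T _ ih =>
    obtain ⟨a, hai, haT⟩ := ih fun j hj => hT j (Finset.mem_insert_of_mem hj)
    obtain ⟨b, hbi, hbj₀⟩ := exists_valuation_lt_one_lt_valuation
      (hT j₀ (Finset.mem_insert_self j₀ T)).1 (hT j₀ (Finset.mem_insert_self j₀ T)).2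
    -- the value groups need not be archimedean, so `m` is chosen only to avoid cancellation
    -- in `a + b ^ m`
    have hne : ∀ j ∈ insert j₀ T,
        ∀ᶠ m in atTop, (O j).valuation b ^ m ≠ (O j).valuation a := by
      intro j hj
      apply eventually_pow_ne
      rcases Finset.mem_insert.1 hj with rfl | hj
      · exact Or.inl hbj₀
      · exact Or.inr (haT j hj)
    obtain ⟨m, hm, hm0⟩ :=
      (((eventually_all_finset _).2 hne).and (eventually_ne_atTop 0)).exists
    refine ⟨a + b ^ m, ?_, fun j hj => ?_⟩
    · refine ((O i).valuation.map_add _ _).trans_lt (max_lt hai ?_)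
      rw [map_pow]
      exact pow_lt_one₀ zero_le hbi hm0
    · rw [Valuation.map_add_of_distinct_val _ (by rw [map_pow]; exact (hm j hj).symm), map_pow]
      rcases Finset.mem_insert.1 hj with rfl | hj
      · exact lt_max_of_lt_right (one_lt_pow₀ hbj₀ hm0)
      · exact lt_max_of_lt_left (haT j hj)

variable [Finite ι]

lemma exists_valuation_lt_one_forall_ne_one_lt_valuation (hO : Pairwise fun i j => ¬ O i ≤ O j)
    (i : ι) : ∃ a, (O i).valuation a < 1 ∧ ∀ j ≠ i, 1 < (O j).valuation a := by
  classical
  have := Fintype.ofFinite ι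
  obtain ⟨a, hai, ha⟩ :=
    exists_valuation_lt_one_forall_mem_one_lt_valuation i (Finset.univ.erase i)
    fun j hj => ⟨hO (Finset.ne_of_mem_erase hj).symm, hO (Finset.ne_of_mem_erase hj)⟩
  exact ⟨a, hai, fun j hj => ha j (Finset.mem_erase.2 ⟨hj, Finset.mem_univ j⟩)⟩

lemma exists_valuation_lt_one_forall_ne_one_lt_and_le_valuation
    (hO : Pairwise fun i j => ¬ O i ≤ O j) (i : ι) (r : K) (hr : (O i).valuation r ≤ 1) :
    ∃ w, (O i).valuation w < 1 ∧
      ∀ j ≠ i, 1 < (O j).valuation w ∧ (O j).valuation r ≤ (O j).valuation w := by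
  obtain ⟨a, hai, ha⟩ := exists_valuation_lt_one_forall_ne_one_lt_valuation hO i
  have hne : ∀ j,
      ∀ᶠ m in atTop, j ≠ i → (O j).valuation a ^ m ≠ ((O j).valuation r)⁻¹ := by
    intro j
    by_cases hj : j = i
    · exact Eventually.of_forall fun _ h => absurd hj h
    · exact (eventually_pow_ne (Or.inl (ha j hj))).mono fun _ h _ => h
  obtain ⟨m, hm, hm0⟩ := ((eventually_all.2 hne).and (eventually_ne_atTop 0)).exists
  refine ⟨a ^ m * (1 + r * a ^ m), ?_, fun j hj => ?_⟩
  · have ham : (O i).valuation (a ^ m) < 1 := by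
      rw [map_pow]
      exact pow_lt_one₀ zero_le hai hm0
    rw [map_mul, Valuation.map_one_add_of_lt, mul_one]
    · exact ham
    · rw [map_mul]
      exact Right.mul_lt_one_of_le_of_lt hr ham
  · have hγ : 1 < (O j).valuation a ^ m := one_lt_pow₀ (ha j hj) hm0
    have hsum : (O j).valuation (1 + r * a ^ m) =
        max 1 ((O j).valuation r * (O j).valuation a ^ m) := by
      have hne1 : (O j).valuation 1 ≠ (O j).valuation (r * a ^ m) := by
        rw [map_one, map_mul, map_pow]
        exact fun h => hm j hj (eq_inv_of_mul_eq_one_right h.symm)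
      rw [Valuation.map_add_of_distinct_val _ hne1, map_one, map_mul, map_pow]
    rw [map_mul, map_pow, hsum]
    refine ⟨one_lt_mul_of_lt_of_le' hγ (le_max_left _ _), ?_⟩
    calc (O j).valuation r ≤ (O j).valuation r * (O j).valuation a ^ m :=
          le_mul_of_one_le_right' hγ.le
      _ ≤ max 1 ((O j).valuation r * (O j).valuation a ^ m) := le_max_right _ _
      _ ≤ _ := le_mul_of_one_le_left' hγ.le

lemma exists_valuation_eq_one_forall_ne_lt_one_and_mul_le_one
    (hO : Pairwise fun i j => ¬ O i ≤ O j) (i : ι) (r : K) (hr : (O i).valuation r ≤ 1) :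
    ∃ s, (O i).valuation s = 1 ∧ (∀ j ≠ i, (O j).valuation s < 1) ∧
      ∀ j, (O j).valuation (s * r) ≤ 1 := by
  obtain ⟨w, hwi, hw⟩ := exists_valuation_lt_one_forall_ne_one_lt_and_le_valuation hO i r hr
  have hwj : ∀ j ≠ i, (O j).valuation (1 + w) = (O j).valuation w := fun j hj =>
    Valuation.map_add_eq_of_lt_right _ (by rw [map_one]; exact (hw j hj).1)
  refine ⟨(1 + w)⁻¹, ?_, fun j hj => ?_, fun j => ?_⟩
  · rw [map_inv₀, Valuation.map_one_add_of_lt _ hwi, inv_one]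
  · rw [map_inv₀, hwj j hj]
    exact inv_lt_one_of_one_lt₀ (hw j hj).1
  · rw [map_mul, map_inv₀, ← div_eq_inv_mul]
    rcases eq_or_ne j i with rfl | hj
    · rwa [Valuation.map_one_add_of_lt _ hwi, div_one]
    · rw [hwj j hj]
      exact div_le_one_of_le₀ (hw j hj).2 zero_le

theorem mem_submodule_iff_forall_exists_mul [Fintype ι] [Nonempty ι]
    (hO : Pairwise fun i j => ¬ O i ≤ O j) (M : Submodule ↥(⨅ i, (O i).toSubring) K)
    (x : K) :
    x ∈ M ↔ ∀ i, ∃ a ∈ M, ∃ r ∈ O i, x = a * r := by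
  classical
  refine ⟨fun hx i => ⟨x, hx, 1, one_mem _, (mul_one x).symm⟩, fun h => ?_⟩
  choose a haM r hr hx using h
  have hmem : ∀ y : K, (∀ j, (O j).valuation y ≤ 1) → y ∈ ⨅ i, (O i).toSubring :=
    fun y hy => Subring.mem_iInf.2 fun j => (O j).mem_of_valuation_le_one y (hy j)
  choose s hsi hsj hsr using fun i => exists_valuation_eq_one_forall_ne_lt_one_and_mul_le_one hO i
    (r i) (((O i).valuation_le_one_iff _).2 (hr i))
  have hg : ∀ j, (O j).valuation (∑ i, s i) = 1 := fun j => by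
    refine (Valuation.map_sum_eq_of_lt _ (Finset.mem_univ j) fun i hi => ?_).trans (hsi j)
    rw [hsi]
    exact hsj i j (by simpa [eq_comm] using hi)
  have hgx : (∑ i, s i) * x ∈ M := by
    rw [Finset.sum_mul]
    refine M.sum_mem fun i _ => ?_
    rw [hx i, ← mul_assoc, mul_right_comm]
    exact M.smul_mem ⟨s i * r i, hmem _ (hsr i)⟩ (haM i)
  have hg0 : ∑ i, s i ≠ 0 := fun h0 => by simpa [h0] using hg (Classical.arbitrary ι)
  have hginv : (∑ i, s i)⁻¹ ∈ ⨅ i, (O i).toSubring :=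
    hmem _ fun j => by rw [map_inv₀, hg, inv_one]
  rw [← inv_mul_cancel_left₀ hg0 x]
  exact M.smul_mem ⟨_, hginv⟩ hgx

end ValuationSubring

/-- Let `O_1, …, O_n` be pairwise incomparable valuation subrings of a field `K` and let
`R = O_1 ∩ ⋯ ∩ O_n`.  Then for every `R`-submodule `M` of `K` and every `x ∈ K`: `x ∈ M`
if and only if for each `i` there is some `a ∈ M` with `x ∈ a·O_i`, i.e. `x = a * r` for
some `r ∈ O_i`. -/
theorem mem_submodule_iff_forall_exists_dvd
    {K : Type*} [Field K] (n : ℕ) (hn : 0 < n)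
    (O : Fin n → ValuationSubring K)
    (hincomp : ∀ i j, i ≠ j → ¬ O i ≤ O j)
    (R : Subring K) (hR : R = ⨅ i, (O i).toSubring)
    (M : Submodule ↥R K) (x : K) :
    x ∈ M ↔ ∀ i, ∃ a ∈ M, ∃ r ∈ O i, x = a * r := by
  subst hR
  have : Nonempty (Fin n) := ⟨⟨0, hn⟩⟩
  exact ValuationSubring.mem_submodule_iff_forall_exists_mul hincomp M x
end

section
/- Let O_1, …, O_n be pairwise incomparable valuation subrings of a field K, with m_i the maximal ideal of O_i and k_i = O_i/m_i its residue field, and let R = O_1 ∩ ⋯ ∩ O_n. Then for each i, the composite ring homomorphism R ↪ O_i → k_i (inclusion followed by the residue map) is surjective; consequently it induces a ring isomorphism R/(R ∩ m_i) ≅ k_i. -/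
open IsLocalRing

/-- Combination lemma: given, for each `j` in a finite set `T`, an element `t j` that is
small at `i` and big at `j`, produce a single element small at `i` and at least as big as
`t j` at every `j ∈ T`. -/
lemma exists_valuation_combination {K : Type*} [Field K] {n : ℕ}
    (O : Fin n → ValuationSubring K) (i : Fin n) (t : Fin n → K) (T : Finset (Fin n))
    (ht1 : ∀ j ∈ T, (O i).valuation (t j) < 1)
    (htj : ∀ j ∈ T, 1 < (O j).valuation (t j)) :
    ∃ s : K, (O i).valuation s < 1 ∧
      ∀ j ∈ T, 1 < (O j).valuation s ∧ (O j).valuation (t j) ≤ (O j).valuation s := by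
  classical
  induction T using Finset.induction_on with
  | empty => exact ⟨0, by simp, by simp⟩
  | @insert j₀ T hj₀T IH =>
    obtain ⟨s, hsi, hsT⟩ := IH (fun j hj => ht1 j (Finset.mem_insert_of_mem hj))
      (fun j hj => htj j (Finset.mem_insert_of_mem hj))
    set y := t j₀ with hy
    have hyj₀ : 1 < (O j₀).valuation y := htj j₀ (Finset.mem_insert_self _ _)
    have hyi : (O i).valuation y < 1 := ht1 j₀ (Finset.mem_insert_self _ _)
    -- bad exponents
    have hbad : (⋃ j ∈ (insert j₀ T : Finset (Fin n)),
        {m : ℕ | (O j).valuation y ≠ 1 ∧ ((O j).valuation y) ^ m = (O j).valuation s}).Finite := by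
      apply Set.Finite.biUnion (Finset.finite_toSet _)
      intro j _
      apply Set.Subsingleton.finite
      intro m₁ hm₁ m₂ hm₂
      have hyne : (O j).valuation y ≠ 0 := by
        intro h0
        have : y = 0 := by
          by_contra hy0
          exact ((O j).valuation.ne_zero_iff).mpr hy0 h0
        rw [this] at hyj₀
        simp at hyj₀
      exact pow_right_injective₀ (zero_lt_iff.mpr hyne) hm₁.1 (hm₁.2.trans hm₂.2.symm)
    obtain ⟨m, hm⟩ := (hbad.union (Set.finite_singleton 0)).infinite_compl.nonempty
    simp only [Set.mem_compl_iff, Set.mem_union, Set.mem_singleton_iff, not_or] at hm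
    have hm0 : m ≠ 0 := hm.2
    have hmgood : ∀ j ∈ (insert j₀ T : Finset (Fin n)),
        (O j).valuation y ≠ 1 → ((O j).valuation y) ^ m ≠ (O j).valuation s := by
      intro j hj hne heq
      exact hm.1 (Set.mem_biUnion hj ⟨hne, heq⟩)
    refine ⟨s + y ^ m, ?_, ?_⟩
    · refine lt_of_le_of_lt ((O i).valuation.map_add s (y ^ m)) (max_lt hsi ?_)
      rw [map_pow]
      exact pow_lt_one₀ zero_le' hyi hm0
    · intro j hj
      have hdist : (O j).valuation s ≠ (O j).valuation (y ^ m) := by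
        rw [map_pow]
        by_cases h1 : (O j).valuation y = 1
        · rw [h1, one_pow]
          rcases Finset.mem_insert.mp hj with rfl | hjT
          · exact absurd h1 (ne_of_gt hyj₀)
          · exact (ne_of_gt (hsT j hjT).1)
        · exact (hmgood j hj h1).symm
      have hmax : (O j).valuation (s + y ^ m)
          = max ((O j).valuation s) ((O j).valuation (y ^ m)) :=
        Valuation.map_add_of_distinct_val _ hdist
      rcases Finset.mem_insert.mp hj with rfl | hjT
      · have h1 : 1 < ((O j).valuation y) ^ m := one_lt_pow₀ hyj₀ hm0
        have h2 : (O j).valuation y ≤ ((O j).valuation y) ^ m := le_self_pow₀ hyj₀.le hm0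
        rw [hmax, map_pow]
        exact ⟨lt_max_of_lt_right h1, le_max_of_le_right h2⟩
      · rw [hmax]
        exact ⟨lt_max_of_lt_left (hsT j hjT).1, le_max_of_le_left (hsT j hjT).2⟩

/-- Let `O_1, …, O_n` be pairwise incomparable valuation subrings of a field `K`, with
`m_i` the maximal ideal of `O_i` and `k_i = O_i/m_i` its residue field, and let
`R = O_1 ∩ ⋯ ∩ O_n`.  Then for each `i`, the composite ring homomorphism
`R ↪ O_i → k_i` is surjective; consequently it induces a ring isomorphism
`R/(R ∩ m_i) ≅ k_i`. -/
theorem residue_surjective_of_multiValuationRing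
    {K : Type*} [Field K] (n : ℕ) (hn : 0 < n)
    (O : Fin n → ValuationSubring K)
    (hincomp : ∀ i j, i ≠ j → ¬ O i ≤ O j)
    (R : Subring K) (hR : R = ⨅ i, (O i).toSubring)
    (hle : ∀ i, R ≤ (O i).toSubring) (i : Fin n) :
    Function.Surjective
      ((IsLocalRing.residue ↥(O i)).comp (Subring.inclusion (hle i))) ∧
    ∃ e : (↥R ⧸ Ideal.comap (Subring.inclusion (hle i))
            (IsLocalRing.maximalIdeal ↥(O i))) ≃+* IsLocalRing.ResidueField ↥(O i),
      ∀ x : ↥R, e (Ideal.Quotient.mk _ x) =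
        IsLocalRing.residue ↥(O i) (Subring.inclusion (hle i) x) := by
  classical
  set f := (IsLocalRing.residue ↥(O i)).comp (Subring.inclusion (hle i)) with hfdef
  have hsurj : Function.Surjective f := by
    intro ab
    obtain ⟨a', rfl⟩ := IsLocalRing.residue_surjective (R := ↥(O i)) ab
    set a : K := (a' : K) with hadef
    have ha : (O i).valuation a ≤ 1 := (O i).valuation_le_one a'
    -- pairwise elements
    have hc : ∀ j : Fin n, ∃ c : K,
        j ≠ i → ((O i).valuation c < 1 ∧ 1 < (O j).valuation c) := by
      intro j
      by_cases hj : j ≠ i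
      · obtain ⟨x, hxi, hxj⟩ := SetLike.not_le_iff_exists.mp (hincomp i j (Ne.symm hj))
        obtain ⟨z, hzj, hzi⟩ := SetLike.not_le_iff_exists.mp (hincomp j i hj)
        have hvx_i : (O i).valuation x ≤ 1 := ((O i).valuation_le_one_iff x).mpr hxi
        have hvx_j : 1 < (O j).valuation x :=
          not_le.mp (fun h => hxj (((O j).valuation_le_one_iff x).mp h))
        have hvz_j : (O j).valuation z ≤ 1 := ((O j).valuation_le_one_iff z).mpr hzj
        have hvz_i : 1 < (O i).valuation z :=
          not_le.mp (fun h => hzi (((O i).valuation_le_one_iff z).mp h))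
        have hz0 : z ≠ 0 := by
          rintro rfl
          exact hzi (zero_mem _)
        have hvz_i0 : (0 : _) < (O i).valuation z := zero_lt_one.trans hvz_i
        have hvz_j0 : (0 : _) < (O j).valuation z :=
          zero_lt_iff.mpr (((O j).valuation.ne_zero_iff).mpr hz0)
        refine ⟨x / z, fun _ => ⟨?_, ?_⟩⟩
        · rw [map_div₀, div_lt_iff₀ hvz_i0, one_mul]
          exact lt_of_le_of_lt hvx_i hvz_i
        · rw [map_div₀, lt_div_iff₀ hvz_j0, one_mul]
          exact lt_of_le_of_lt hvz_j hvx_j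
      · exact ⟨0, fun h => absurd h hj⟩
    choose c hcspec using hc
    set t : Fin n → K := fun j => if (O j).valuation a ≤ 1 then c j else c j * a with htdef
    set T : Finset (Fin n) := Finset.univ.erase i with hTdef
    have hmemT : ∀ j, j ∈ T ↔ j ≠ i := by
      intro j; simp [hTdef]
    have ht1 : ∀ j ∈ T, (O i).valuation (t j) < 1 := by
      intro j hj
      have hcj := hcspec j ((hmemT j).mp hj)
      rw [htdef]
      dsimp only
      split_ifs with h
      · exact hcj.1
      · rw [map_mul]
        calc (O i).valuation (c j) * (O i).valuation a
            ≤ (O i).valuation (c j) * 1 := mul_le_mul_right ha _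
          _ = (O i).valuation (c j) := mul_one _
          _ < 1 := hcj.1
    have htj : ∀ j ∈ T, 1 < (O j).valuation (t j) := by
      intro j hj
      have hcj := hcspec j ((hmemT j).mp hj)
      rw [htdef]
      dsimp only
      split_ifs with h
      · exact hcj.2
      · rw [map_mul]
        calc (1 : _) < (O j).valuation a := not_le.mp h
          _ = 1 * (O j).valuation a := (one_mul _).symm
          _ ≤ (O j).valuation (c j) * (O j).valuation a := mul_le_mul_left hcj.2.le _
    have htja : ∀ j ∈ T, (O j).valuation a ≤ (O j).valuation (t j) := by
      intro j hj
      have hcj := hcspec j ((hmemT j).mp hj)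
      rw [htdef]
      dsimp only
      split_ifs with h
      · exact h.trans hcj.2.le
      · rw [map_mul]
        calc (O j).valuation a = 1 * (O j).valuation a := (one_mul _).symm
          _ ≤ (O j).valuation (c j) * (O j).valuation a := mul_le_mul_left hcj.2.le _
    obtain ⟨s, hsi, hsT⟩ := exists_valuation_combination O i t T ht1 htj
    -- now build r = a / (1 + s)
    have hvi1s : (O i).valuation (1 + s) = 1 := by
      rw [Valuation.map_add_of_distinct_val _ (by rw [map_one]; exact (ne_of_gt hsi).symm ∘ Eq.symm ∘ id)]
      · rw [map_one]
        exact max_eq_left hsi.le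
    have h1s0 : (1 + s) ≠ 0 := by
      intro h
      rw [h, map_zero] at hvi1s
      exact zero_ne_one hvi1s
    have hvj1s : ∀ j ∈ T, (O j).valuation (1 + s) = (O j).valuation s := by
      intro j hj
      have h1 : (O j).valuation (1 : K) ≠ (O j).valuation s := by
        rw [map_one]; exact ne_of_lt (hsT j hj).1
      rw [Valuation.map_add_of_distinct_val _ h1, map_one]
      exact max_eq_right (hsT j hj).1.le
    set r : K := a / (1 + s) with hrdef
    have hrO : ∀ j : Fin n, r ∈ (O j).toSubring := by
      intro j
      by_cases hj : j = i
      · subst hj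
        apply (O j).mem_of_valuation_le_one
        rw [hrdef, map_div₀, hvi1s, div_one]
        exact ha
      · have hjT : j ∈ T := (hmemT j).mpr hj
        apply (O j).mem_of_valuation_le_one
        rw [hrdef, map_div₀, hvj1s j hjT]
        rw [div_le_one₀ (zero_lt_one.trans (hsT j hjT).1)]
        exact (htja j hjT).trans (hsT j hjT).2
    have hrR : r ∈ R := by
      rw [hR, Subring.mem_iInf]
      exact hrO
    refine ⟨⟨r, hrR⟩, ?_⟩
    have hsub : (O i).valuation (r - a) < 1 := by
      have heq : r - a = -(a * s) / (1 + s) := by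
        rw [hrdef]
        field_simp
        ring
      rw [heq, map_div₀, Valuation.map_neg, map_mul, hvi1s, div_one]
      calc (O i).valuation a * (O i).valuation s
          ≤ 1 * (O i).valuation s := mul_le_mul_left ha _
        _ = (O i).valuation s := one_mul _
        _ < 1 := hsi
    show IsLocalRing.residue ↥(O i) (Subring.inclusion (hle i) ⟨r, hrR⟩)
        = IsLocalRing.residue ↥(O i) a'
    unfold IsLocalRing.residue
    refine (Ideal.Quotient.mk_eq_mk_iff_sub_mem _ _).mpr ?_
    rw [ValuationSubring.valuation_lt_one_iff]
    exact hsub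
  refine ⟨hsurj, ?_⟩
  have hker : Ideal.comap (Subring.inclusion (hle i))
      (IsLocalRing.maximalIdeal ↥(O i)) = RingHom.ker f := by
    rw [hfdef, ← RingHom.comap_ker, IsLocalRing.ker_residue]
  refine ⟨(Ideal.quotEquivOfEq hker).trans (RingHom.quotientKerEquivOfSurjective hsurj), ?_⟩
  intro x
  rw [RingEquiv.trans_apply, Ideal.quotEquivOfEq_mk]
  show RingHom.quotientKerEquivOfSurjective hsurj (Ideal.Quotient.mk (RingHom.ker f) x)
      = f x
  rw [RingHom.quotientKerEquivOfSurjective, RingHom.quotientKerEquivOfRightInverse.apply,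
    RingHom.kerLift_mk]
end

section
/- Let O_1, …, O_n be pairwise incomparable valuation subrings of a field K, with m_i the maximal ideal of O_i, let R = O_1 ∩ ⋯ ∩ O_n and M_i = R ∩ m_i. Then the localization of R at the maximal ideal M_i, viewed inside K, equals O_i: an element x ∈ K lies in O_i if and only if there exist a ∈ R and s ∈ R with s ∉ M_i such that x·s = a. -/
namespace MultiValAux

variable {K : Type*} [Field K]

open ValuationSubring

lemma pow_lt_one_aux {Γ : Type*} [LinearOrderedCommGroupWithZero Γ] {c : Γ}
    (hc : c < 1) {m : ℕ} (hm : m ≠ 0) : c ^ m < 1 := by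
  obtain ⟨t, rfl⟩ := Nat.exists_eq_succ_of_ne_zero hm
  calc c ^ (t + 1) = c ^ t * c := pow_succ c t
    _ ≤ 1 * c := mul_le_mul_left (pow_le_one' hc.le t) c
    _ = c := one_mul c
    _ < 1 := hc

lemma pow_eq_one_aux {Γ : Type*} [LinearOrderedCommGroupWithZero Γ] {c : Γ} {t : ℕ}
    (ht : t ≠ 0) (h : c ^ t = 1) : c = 1 := by
  rcases lt_trichotomy c 1 with hc | hc | hc
  · exact absurd h (pow_lt_one_aux hc ht).ne
  · exact hc
  · exact absurd h (one_lt_pow' hc ht).ne'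

lemma eq_one_of_pow_eq_pow {Γ : Type*} [LinearOrderedCommGroupWithZero Γ] {c : Γ}
    (hc : c ≠ 0) {m m' : ℕ} (hne : m ≠ m') (h : c ^ m = c ^ m') : c = 1 := by
  wlog hlt : m < m' generalizing m m'
  · exact this hne.symm h.symm (by omega)
  have h2 : c ^ m * c ^ (m' - m) = c ^ m * 1 := by
    rw [mul_one, ← pow_add]
    rw [show m + (m' - m) = m' by omega, h]
  have h3 := mul_left_cancel₀ (pow_ne_zero m hc) h2
  exact pow_eq_one_aux (by omega) h3

lemma harmonic_le {Γ : Type*} [LinearOrderedCommGroupWithZero Γ]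
    (v : Valuation K Γ) {u e : K} (hd : u + e ≠ 0) :
    min (v u) (v e) ≤ v (u * e / (u + e)) := by
  rw [map_div₀, map_mul, le_div_iff₀ (zero_lt_iff.2 ((Valuation.ne_zero_iff v).2 hd))]
  rcases le_total (v u) (v e) with h | h
  · rw [min_eq_left h]
    calc v u * v (u + e) ≤ v u * max (v u) (v e) := mul_le_mul_right (v.map_add u e) _
      _ = v u * v e := by rw [max_eq_right h]
  · rw [min_eq_right h]
    calc v e * v (u + e) ≤ v e * max (v u) (v e) := mul_le_mul_right (v.map_add u e) _
      _ = v e * v u := by rw [max_eq_left h]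
      _ = v u * v e := mul_comm _ _

lemma harmonic_eq {Γ : Type*} [LinearOrderedCommGroupWithZero Γ]
    (v : Valuation K Γ) {u e : K} (hu : u ≠ 0) (he : e ≠ 0)
    (hne : v u ≠ v e) : v (u * e / (u + e)) = min (v u) (v e) := by
  rw [map_div₀, map_mul, v.map_add_of_distinct_val hne]
  rcases hne.lt_or_gt with h | h
  · rw [max_eq_right h.le, min_eq_left h.le, mul_div_assoc,
      div_self ((Valuation.ne_zero_iff v).2 he), mul_one]
  · rw [max_eq_left h.le, min_eq_right h.le, mul_comm, mul_div_assoc,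
      div_self ((Valuation.ne_zero_iff v).2 hu), mul_one]

/-- From incomparability, an element small at `B` and big at `A`. -/
lemma exists_val_lt_one_gt_one (A B : ValuationSubring K)
    (hAB : ¬ A ≤ B) (hBA : ¬ B ≤ A) :
    ∃ e : K, B.valuation e < 1 ∧ 1 < A.valuation e := by
  obtain ⟨b, hbA, hbB⟩ := SetLike.not_le_iff_exists.1 hAB
  obtain ⟨c, hcB, hcA⟩ := SetLike.not_le_iff_exists.1 hBA
  have hbB1 : 1 < B.valuation b := lt_of_not_ge fun h => hbB ((B.valuation_le_one_iff b).1 h)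
  have hcA1 : 1 < A.valuation c := lt_of_not_ge fun h => hcA ((A.valuation_le_one_iff c).1 h)
  have hbA1 : A.valuation b ≤ 1 := (A.valuation_le_one_iff b).2 hbA
  have hcB1 : B.valuation c ≤ 1 := (B.valuation_le_one_iff c).2 hcB
  have hb0 : A.valuation b ≠ 0 := by
    intro h
    rw [Valuation.zero_iff] at h
    rw [h, map_zero] at hbB1
    exact absurd hbB1 (by simp)
  refine ⟨b⁻¹ * c, ?_, ?_⟩
  · rw [map_mul, map_inv₀]
    calc (B.valuation b)⁻¹ * B.valuation c ≤ (B.valuation b)⁻¹ * 1 := mul_le_mul_right hcB1 _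
      _ = (B.valuation b)⁻¹ := mul_one _
      _ < 1 := inv_lt_one_of_one_lt₀ hbB1
  · have h1 : 1 ≤ (A.valuation b)⁻¹ := (one_le_inv₀ (zero_lt_iff.2 hb0)).2 hbA1
    rw [map_mul, map_inv₀]
    calc 1 < A.valuation c := hcA1
      _ = 1 * A.valuation c := (one_mul _).symm
      _ ≤ (A.valuation b)⁻¹ * A.valuation c := mul_le_mul_left h1 _

/-- key step: element big at `j`, small at every index of `S`. -/
lemma exists_good_u {n : ℕ} (O : Fin n → ValuationSubring K)
    (hincomp : ∀ i j, i ≠ j → ¬ O i ≤ O j) (j : Fin n) {x0 : K}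
    (hx0 : 1 < (O j).valuation x0) (S : Finset (Fin n)) :
    j ∉ S → ∃ u : K, u ≠ 0 ∧ 1 < (O j).valuation u ∧ ∀ k ∈ S, (O k).valuation u < 1 := by
  classical
  induction S using Finset.induction_on with
  | empty =>
    intro _
    refine ⟨x0, ?_, hx0, by simp⟩
    intro h
    rw [h, map_zero] at hx0
    exact absurd hx0 (by simp)
  | @insert a S' haS' ih =>
    intro hjS
    have hja : a ≠ j := by rintro rfl; exact hjS (Finset.mem_insert_self _ _)
    obtain ⟨u, hu0, huj, huS⟩ := ih fun h => hjS (Finset.mem_insert_of_mem h)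
    obtain ⟨e, heA, heJ⟩ := exists_val_lt_one_gt_one (O j) (O a)
      (hincomp j a (Ne.symm hja)) (hincomp a j hja)
    have he0 : e ≠ 0 := by
      intro h
      rw [h, map_zero] at heJ
      exact absurd heJ (by simp)
    -- choose a good exponent m by pigeonhole
    have hm : ∃ m ∈ Finset.Icc 1 ((insert a S').card + 1),
        ∀ k ∈ insert a S', (O k).valuation (e ^ m) ≠ (O k).valuation u := by
      by_contra hcon
      push_neg at hcon
      have hcon' : ∀ m : ℕ, ∃ k, m ∈ Finset.Icc 1 ((insert a S').card + 1) →
          k ∈ insert a S' ∧ (O k).valuation (e ^ m) = (O k).valuation u := by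
        intro m
        by_cases hmem : m ∈ Finset.Icc 1 ((insert a S').card + 1)
        · obtain ⟨k, hk1, hk2⟩ := hcon m hmem
          exact ⟨k, fun _ => ⟨hk1, hk2⟩⟩
        · exact ⟨a, fun h => absurd h hmem⟩
      choose g hg using hcon'
      have hcard : (insert a S').card < (Finset.Icc 1 ((insert a S').card + 1)).card := by
        rw [Nat.card_Icc]; omega
      obtain ⟨m1, hm1, m2, hm2, hnem, heqg⟩ :=
        Finset.exists_ne_map_eq_of_card_lt_of_maps_to hcard fun m hmm => (hg m hmm).1
      set k := g m1 with hk
      have h1 := hg m1 hm1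
      have h2 := hg m2 hm2
      rw [← heqg] at h2
      have hpow : ((O k).valuation e) ^ m1 = ((O k).valuation e) ^ m2 := by
        rw [← map_pow, ← map_pow, h1.2, h2.2]
      have hke0 : (O k).valuation e ≠ 0 := (Valuation.ne_zero_iff _).2 he0
      have hke1 : (O k).valuation e = 1 := eq_one_of_pow_eq_pow hke0 hnem hpow
      have hku1 : (O k).valuation u = 1 := by
        rw [← h1.2, map_pow, hke1, one_pow]
      rcases Finset.mem_insert.1 h2.1 with hkk | hkk
      · rw [hkk] at hke1; exact absurd hke1 heA.ne
      · exact absurd hku1 (huS k hkk).ne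
    obtain ⟨m, hmIcc, hmgood⟩ := hm
    have hm0 : m ≠ 0 := by
      have := (Finset.mem_Icc.1 hmIcc).1; omega
    have hE0 : e ^ m ≠ 0 := pow_ne_zero _ he0
    have hd : u + e ^ m ≠ 0 := by
      intro h
      have hu' : u = -(e ^ m) := eq_neg_of_add_eq_zero_left h
      exact hmgood a (Finset.mem_insert_self _ _)
        (by rw [hu', Valuation.map_neg])
    refine ⟨u * e ^ m / (u + e ^ m), div_ne_zero (mul_ne_zero hu0 hE0) hd, ?_, ?_⟩
    · have h1 : 1 < (O j).valuation (e ^ m) := by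
        rw [map_pow]; exact one_lt_pow' heJ hm0
      calc 1 < min ((O j).valuation u) ((O j).valuation (e ^ m)) := lt_min huj h1
        _ ≤ _ := harmonic_le _ hd
    · intro k hk
      rw [harmonic_eq ((O k).valuation) hu0 hE0 (Ne.symm (hmgood k hk))]
      rcases Finset.mem_insert.1 hk with rfl | hk'
      · calc min ((O k).valuation u) ((O k).valuation (e ^ m))
            ≤ (O k).valuation (e ^ m) := min_le_right _ _
          _ < 1 := by rw [map_pow]; exact pow_lt_one_aux heA hm0
      · exact lt_of_le_of_lt (min_le_left _ _) (huS k hk')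

/-- The iteration `w ↦ w (1 + w)`. -/
def iter (w0 : K) : ℕ → K
  | 0 => w0
  | m + 1 => iter w0 m * (1 + iter w0 m)

lemma iter_lt_one {Γ : Type*} [LinearOrderedCommGroupWithZero Γ]
    (v : Valuation K Γ) (w0 : K) {m : ℕ} (h : v (iter w0 m) < 1) :
    ∀ m', m ≤ m' → v (iter w0 m') < 1 := by
  intro m' hm'
  induction m', hm' using Nat.le_induction with
  | base => exact h
  | succ m' hmm ih =>
    have hlt : v (iter w0 m') < v (1 : K) := by rwa [v.map_one]
    have h1 : v (1 + iter w0 m') = 1 := by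
      rw [v.map_add_eq_of_lt_left hlt, v.map_one]
    show v (iter w0 m' * (1 + iter w0 m')) < 1
    rw [map_mul, h1, mul_one]
    exact ih

lemma iter_gt_one {Γ : Type*} [LinearOrderedCommGroupWithZero Γ]
    (v : Valuation K Γ) (w0 : K) (h : 1 < v w0) :
    ∀ m, v w0 ≤ v (iter w0 m) ∧ 1 < v (iter w0 m)
  | 0 => ⟨le_rfl, h⟩
  | m + 1 => by
    obtain ⟨h1, h2⟩ := iter_gt_one v w0 h m
    have hlt : v (1 : K) < v (iter w0 m) := by rwa [v.map_one]
    have hadd : v (1 + iter w0 m) = v (iter w0 m) := v.map_add_eq_of_lt_right hlt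
    have hsq : v (iter w0 m) ≤ v (iter w0 m) * v (iter w0 m) := by
      calc v (iter w0 m) = v (iter w0 m) * 1 := (mul_one _).symm
        _ ≤ v (iter w0 m) * v (iter w0 m) := mul_le_mul_right h2.le _
    constructor
    · show v w0 ≤ v (iter w0 m * (1 + iter w0 m))
      rw [map_mul, hadd]
      exact le_trans (h1.trans hsq) le_rfl
    · show 1 < v (iter w0 m * (1 + iter w0 m))
      rw [map_mul, hadd]
      exact lt_of_lt_of_le h2 hsq

/-- Main denominator construction: for `x ∈ O i` and `j` with `v_j x > 1`, produce `s`
integral everywhere, a unit at `i`, with `s * x ∈ O j`. -/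
lemma exists_denom {n : ℕ} (O : Fin n → ValuationSubring K)
    (hincomp : ∀ i j, i ≠ j → ¬ O i ≤ O j) (i j : Fin n) {x : K}
    (hxi : (O i).valuation x ≤ 1) (hxj : 1 < (O j).valuation x) :
    ∃ s : K, (∀ k, (O k).valuation s ≤ 1) ∧ (O i).valuation s = 1 ∧
      (O j).valuation (s * x) ≤ 1 := by
  classical
  have hij : i ≠ j := by rintro rfl; exact absurd hxi (not_le.2 hxj)
  obtain ⟨u, hu0, huj, huS⟩ := exists_good_u O hincomp j hxj (Finset.univ.erase j)
    (by simp)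
  have huk : ∀ k, k ≠ j → (O k).valuation u < 1 := fun k hk =>
    huS k (Finset.mem_erase.2 ⟨hk, Finset.mem_univ k⟩)
  set w0 : K := u * x with hw0
  have hw0j : (O j).valuation x ≤ (O j).valuation w0 ∧ 1 < (O j).valuation w0 := by
    constructor
    · rw [hw0, map_mul]
      calc (O j).valuation x = 1 * (O j).valuation x := (one_mul _).symm
        _ ≤ (O j).valuation u * (O j).valuation x := mul_le_mul_left huj.le _
    · exact lt_of_lt_of_le hxj (by
        rw [hw0, map_mul]
        calc (O j).valuation x = 1 * (O j).valuation x := (one_mul _).symm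
          _ ≤ (O j).valuation u * (O j).valuation x := mul_le_mul_left huj.le _)
  have hw0i : (O i).valuation w0 < 1 := by
    rw [hw0, map_mul]
    calc (O i).valuation u * (O i).valuation x ≤ (O i).valuation u * 1 :=
        mul_le_mul_right hxi _
      _ = (O i).valuation u := mul_one _
      _ < 1 := huk i hij
  -- find a "good" stage of the iteration by pigeonhole
  have key : ∃ m : ℕ, ∀ k, ¬ ((O k).valuation (iter w0 m) = 1 ∧
      (O k).valuation (1 + iter w0 m) < 1) := by
    by_contra hcon
    push_neg at hcon
    choose g hg1 hg2 using hcon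
    have hcard : (Finset.univ : Finset (Fin n)).card < (Finset.range (n + 1)).card := by
      simp
    obtain ⟨m1, _, m2, _, hnem, heqg⟩ :=
      Finset.exists_ne_map_eq_of_card_lt_of_maps_to hcard
        (fun m _ => Finset.mem_univ (g m))
    have main : ∀ m1 m2 : ℕ, m1 < m2 → g m1 = g m2 → False := by
      intro a b hab heq
      have hbad : (O (g a)).valuation (iter w0 (a + 1)) < 1 := by
        show (O (g a)).valuation (iter w0 a * (1 + iter w0 a)) < 1
        rw [map_mul, hg1 a, one_mul]
        exact hg2 a
      have := iter_lt_one ((O (g a)).valuation) w0 hbad b (by omega)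
      rw [heq] at this
      exact absurd (hg1 b) this.ne
    rcases hnem.lt_or_gt with h12 | h12
    · exact main m1 m2 h12 heqg
    · exact main m2 m1 h12 heqg.symm
  obtain ⟨m, hm⟩ := key
  set w : K := iter w0 m with hw
  have hwj : (O j).valuation x ≤ (O j).valuation w ∧ 1 < (O j).valuation w := by
    obtain ⟨h1, h2⟩ := iter_gt_one ((O j).valuation) w0 hw0j.2 m
    exact ⟨le_trans hw0j.1 h1, h2⟩
  have hwi : (O i).valuation w < 1 :=
    iter_lt_one ((O i).valuation) w0 (m := 0) hw0i m (Nat.zero_le m)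
  have hd : (1 : K) + w ≠ 0 := by
    intro h
    have hwe : w = -1 := by linear_combination h
    rw [hwe, Valuation.map_neg, Valuation.map_one] at hwj
    exact absurd hwj.2 (lt_irrefl 1)
  have hd0 : (O j).valuation w ≠ 0 := by
    intro h
    rw [Valuation.zero_iff] at h
    rw [h, map_zero] at hwj
    exact absurd hwj.2 (by simp)
  refine ⟨(1 + w)⁻¹, ?_, ?_, ?_⟩
  · intro k
    have h1le : 1 ≤ (O k).valuation (1 + w) := by
      rcases lt_trichotomy ((O k).valuation w) 1 with hlt | heq1 | hgt
      · have h2 : (O k).valuation w < (O k).valuation (1 : K) := by rwa [Valuation.map_one]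
        rw [(O k).valuation.map_add_eq_of_lt_left h2, Valuation.map_one]
      · exact not_lt.1 fun hh => hm k ⟨heq1, hh⟩
      · have h2 : (O k).valuation (1 : K) < (O k).valuation w := by rwa [Valuation.map_one]
        rw [(O k).valuation.map_add_eq_of_lt_right h2]
        exact hgt.le
    rw [map_inv₀]
    exact inv_le_one_of_one_le₀ h1le
  · have : (O i).valuation w < (O i).valuation (1 : K) := by rwa [Valuation.map_one]
    rw [map_inv₀, (O i).valuation.map_add_eq_of_lt_left this, Valuation.map_one, inv_one]
  · have h1 : (O j).valuation (1 : K) < (O j).valuation w := by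
      rw [Valuation.map_one]; exact hwj.2
    rw [map_mul, map_inv₀, (O j).valuation.map_add_eq_of_lt_right h1]
    calc ((O j).valuation w)⁻¹ * (O j).valuation x
        ≤ ((O j).valuation w)⁻¹ * (O j).valuation w := mul_le_mul_right hwj.1 _
      _ = 1 := inv_mul_cancel₀ hd0

end MultiValAux

open MultiValAux in
/-- Let `O_1, …, O_n` be pairwise incomparable valuation subrings of a field `K`, with
`m_i` the maximal ideal of `O_i`, and let `R = O_1 ∩ ⋯ ∩ O_n` and `M_i = R ∩ m_i`.
Then the localization of `R` at `M_i`, viewed inside `K`, equals `O_i`: an element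
`x ∈ K` lies in `O_i` iff there are `a ∈ R` and `s ∈ R` with `s ∉ m_i` (membership in
`m_i` being expressed via `(O i).nonunits`) such that `x * s = a`. -/
theorem localization_of_multiValuationRing_at_maximal_ideal
    {K : Type*} [Field K] (n : ℕ) (hn : 0 < n)
    (O : Fin n → ValuationSubring K)
    (hincomp : ∀ i j, i ≠ j → ¬ O i ≤ O j)
    (R : Subring K) (hR : R = ⨅ i, (O i).toSubring)
    (i : Fin n) (x : K) :
    x ∈ O i ↔ ∃ a s : K, a ∈ R ∧ s ∈ R ∧ s ∉ (O i).nonunits ∧ x * s = a := by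
  classical
  have hmemR : ∀ y : K, y ∈ R ↔ ∀ k, (O k).valuation y ≤ 1 := by
    intro y
    rw [hR, Subring.mem_iInf]
    exact forall_congr' fun k => ((O k).valuation_le_one_iff y).symm
  constructor
  · intro hx
    have hxi : (O i).valuation x ≤ 1 := ((O i).valuation_le_one_iff x).2 hx
    have hsj : ∀ j : Fin n, 1 < (O j).valuation x →
        ∃ s : K, (∀ k, (O k).valuation s ≤ 1) ∧ (O i).valuation s = 1 ∧
          (O j).valuation (s * x) ≤ 1 := fun j hj =>
      exists_denom O hincomp i j hxi hj
    choose s hs1 hs2 hs3 using hsj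
    set F : Fin n → K := fun j => if h : 1 < (O j).valuation x then s j h else 1 with hF
    set t : K := ∏ j, F j with ht
    have hFle : ∀ k j, (O k).valuation (F j) ≤ 1 := by
      intro k j
      rw [hF]
      dsimp only
      split
      · next h => exact hs1 j h k
      · simp
    have hFi : ∀ j, (O i).valuation (F j) = 1 := by
      intro j
      rw [hF]
      dsimp only
      split
      · next h => exact hs2 j h
      · simp
    have htle : ∀ k, (O k).valuation t ≤ 1 := by
      intro k
      rw [ht, map_prod]
      exact Finset.prod_le_one' (fun j _ => hFle k j)
    have hti : (O i).valuation t = 1 := by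
      rw [ht, map_prod]
      exact Finset.prod_eq_one fun j _ => hFi j
    refine ⟨x * t, t, ?_, (hmemR t).2 htle, ?_, rfl⟩
    · rw [hmemR]
      intro k
      by_cases hk : 1 < (O k).valuation x
      · have hsplit : x * t = (s k hk * x) * ∏ j ∈ Finset.univ.erase k, F j := by
          rw [ht, ← Finset.mul_prod_erase _ _ (Finset.mem_univ k)]
          have hFk : F k = s k hk := dif_pos hk
          rw [hFk]; ring
        rw [hsplit, map_mul]
        calc (O k).valuation (s k hk * x) *
              (O k).valuation (∏ j ∈ Finset.univ.erase k, F j)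
            ≤ 1 * 1 := mul_le_mul' (hs3 k hk)
              (by rw [map_prod]; exact Finset.prod_le_one' fun j _ => hFle k j)
          _ = 1 := mul_one 1
      · push_neg at hk
        rw [map_mul]
        exact mul_le_one' hk (htle k)
    · intro hcon
      rw [ValuationSubring.mem_nonunits_iff] at hcon
      exact hcon.ne hti
  · rintro ⟨a, s, ha, hs, hsu, hxs⟩
    rw [hmemR] at ha hs
    have hsi1 : (O i).valuation s = 1 :=
      le_antisymm (hs i) (not_lt.1 fun h => hsu ((O i).mem_nonunits_iff.2 h))
    have hval : (O i).valuation x = (O i).valuation a := by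
      rw [← hxs, map_mul, hsi1, mul_one]
    exact ((O i).valuation_le_one_iff x).1 (hval ▸ ha i)
end

section
/- Let O_1, …, O_n be pairwise incomparable valuation subrings of a field K and let O be any valuation subring of K. Then O ⊇ O_1 ∩ ⋯ ∩ O_n if and only if O ⊇ O_i for some i ∈ {1,…,n}. -/
open ValuationSubring

section Aux

variable {K : Type*} [Field K] {n : ℕ} {O : Fin n → ValuationSubring K}

private lemma one_lt_val_of_notMem {V : ValuationSubring K} {x : K} (h : x ∉ V) :
    1 < V.valuation x :=
  not_le.mp fun c => h ((V.valuation_le_one_iff x).mp c)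

private lemma val_le_one_of_mem {V : ValuationSubring K} {x : K} (h : x ∈ V) :
    V.valuation x ≤ 1 := (V.valuation_le_one_iff x).mpr h

private lemma mem_of_val_le_one {V : ValuationSubring K} {x : K} (h : V.valuation x ≤ 1) :
    x ∈ V := (V.valuation_le_one_iff x).mp h

/-- From incomparability, get an element small at `i` and big at `j`. -/
private lemma pair_elt (hincomp : ∀ i j, i ≠ j → ¬ O i ≤ O j) {i j : Fin n} (hij : i ≠ j) :
    ∃ t : K, (O i).valuation t < 1 ∧ 1 < (O j).valuation t := by
  obtain ⟨a, hai, haj⟩ := SetLike.not_le_iff_exists.mp (hincomp i j hij)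
  obtain ⟨b, hbj, hbi⟩ := SetLike.not_le_iff_exists.mp (hincomp j i hij.symm)
  have hb0 : b ≠ 0 := fun hb => hbi (hb ▸ (O i).zero_mem)
  have hvib : 1 < (O i).valuation b := one_lt_val_of_notMem hbi
  have hvjb : (O j).valuation b ≤ 1 := val_le_one_of_mem hbj
  have hvia : (O i).valuation a ≤ 1 := val_le_one_of_mem hai
  have hvja : 1 < (O j).valuation a := one_lt_val_of_notMem haj
  have hvib0 : (0 : (O i).ValueGroup) < (O i).valuation b :=
    zero_lt_iff.mpr (((O i).valuation.ne_zero_iff).mpr hb0)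
  have hvjb0 : (0 : (O j).ValueGroup) < (O j).valuation b :=
    zero_lt_iff.mpr (((O j).valuation.ne_zero_iff).mpr hb0)
  refine ⟨a / b, ?_, ?_⟩
  · rw [map_div₀, div_eq_mul_inv]
    have h1 : ((O i).valuation b)⁻¹ < 1 := (inv_lt_one₀ hvib0).mpr hvib
    calc (O i).valuation a * ((O i).valuation b)⁻¹
        ≤ 1 * ((O i).valuation b)⁻¹ := mul_le_mul_left hvia _
      _ = ((O i).valuation b)⁻¹ := one_mul _
      _ < 1 := h1
  · rw [map_div₀, div_eq_mul_inv]
    have h1 : (1 : (O j).ValueGroup) ≤ ((O j).valuation b)⁻¹ := (one_le_inv₀ hvjb0).mpr hvjb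
    calc (1 : (O j).ValueGroup) < (O j).valuation a := hvja
      _ ≤ (O j).valuation a * ((O j).valuation b)⁻¹ := le_mul_of_one_le_right' h1

/-- Choose an exponent avoiding finitely many value coincidences. -/
private lemma exists_exponent (T : Finset (Fin n))
    (a b : ∀ l : Fin n, (O l).ValueGroup)
    (h0 : ∀ l ∈ T, a l ≠ 0)
    (h1 : ∀ l ∈ T, a l = 1 → b l ≠ 1) :
    ∃ m : ℕ, m ≠ 0 ∧ ∀ l ∈ T, (a l) ^ m ≠ b l := by
  classical
  have hfex : ∀ l, ∃ mf : ℕ,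
      ((a l) ^ mf = b l ∨ ∀ m' : ℕ, (a l) ^ m' ≠ b l) := by
    intro l
    by_cases h : ∃ m' : ℕ, (a l) ^ m' = b l
    · exact ⟨h.choose, Or.inl h.choose_spec⟩
    · push_neg at h
      exact ⟨0, Or.inr h⟩
  choose f hfspec using hfex
  obtain ⟨m, hm1, hmT⟩ : ∃ m, 1 ≤ m ∧ m ∉ T.image f := by
    by_contra hc
    push_neg at hc
    have hsub : Finset.Icc 1 (T.card + 1) ⊆ T.image f := fun m hm =>
      hc m (Finset.mem_Icc.mp hm).1
    have hcard := Finset.card_le_card hsub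
    rw [Nat.card_Icc] at hcard
    have hle := Finset.card_image_le (s := T) (f := f)
    omega
  refine ⟨m, by omega, ?_⟩
  intro l hl heq
  rcases hfspec l with hs | hs
  · -- a l ^ f l = b l
    have hane : a l ≠ 1 := by
      intro ha1
      exact h1 l hl ha1 (by rw [← heq, ha1, one_pow])
    have hapos : (0 : (O l).ValueGroup) < a l := zero_lt_iff.mpr (h0 l hl)
    have : m = f l := pow_right_injective₀ hapos hane (heq.trans hs.symm)
    exact hmT (Finset.mem_image.mpr ⟨l, hl, this.symm⟩)
  · exact hs m heq

/-- Elements small on a finite set and big at one extra index. -/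
private lemma aux_G (hincomp : ∀ i j, i ≠ j → ¬ O i ≤ O j)
    (hex : ∀ k : Fin n, ∃ y : K, y ∉ O k) (J : Finset (Fin n)) :
    ∀ k : Fin n, k ∉ J →
      ∃ w : K, (∀ j ∈ J, (O j).valuation w < 1) ∧ 1 < (O k).valuation w := by
  classical
  induction J using Finset.induction_on with
  | empty =>
    intro k _
    obtain ⟨y, hy⟩ := hex k
    exact ⟨y, by simp, one_lt_val_of_notMem hy⟩
  | @insert j J' hjJ' IH =>
    intro k hk
    rw [Finset.mem_insert, not_or] at hk
    obtain ⟨hkj, hkJ'⟩ := hk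
    obtain ⟨w', hw'J, hw'k⟩ := IH k hkJ'
    obtain ⟨u, huj, huk⟩ := pair_elt hincomp (Ne.symm hkj)
    have hw'0 : w' ≠ 0 :=
      ((O k).valuation.ne_zero_iff).mp (ne_of_gt (lt_trans zero_lt_one hw'k))
    have hu0 : u ≠ 0 :=
      ((O k).valuation.ne_zero_iff).mp (ne_of_gt (lt_trans zero_lt_one huk))
    obtain ⟨m, hm0, hkey⟩ := exists_exponent (insert j J')
      (fun l => (O l).valuation u) (fun l => (O l).valuation w')
      (fun l _ => ((O l).valuation.ne_zero_iff).mpr hu0)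
      (by
        intro l hl ha1
        rcases Finset.mem_insert.mp hl with rfl | hl'
        · exact absurd ha1 (ne_of_lt huj)
        · exact ne_of_lt (hw'J l hl'))
    have hdist : ∀ l ∈ insert j J',
        (O l).valuation w' ≠ (O l).valuation (u ^ m) := by
      intro l hl h
      rw [map_pow] at h
      exact hkey l hl h.symm
    have hq0 : w' + u ^ m ≠ 0 := by
      intro h0
      have hw'e : w' = -(u ^ m) := eq_neg_of_add_eq_zero_left h0
      exact hdist j (Finset.mem_insert_self j J')
        (by rw [hw'e, Valuation.map_neg])
    refine ⟨w' * u ^ m / (w' + u ^ m), ?_, ?_⟩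
    · intro l hl
      have hql : (O l).valuation (w' + u ^ m)
          = max ((O l).valuation w') ((O l).valuation (u ^ m)) :=
        ((O l).valuation).map_add_of_distinct_val (hdist l hl)
      have hvw'0 : (O l).valuation w' ≠ 0 := ((O l).valuation.ne_zero_iff).mpr hw'0
      have hvum0 : (O l).valuation (u ^ m) ≠ 0 :=
        ((O l).valuation.ne_zero_iff).mpr (pow_ne_zero m hu0)
      rw [map_div₀, map_mul, hql]
      rcases le_total ((O l).valuation w') ((O l).valuation (u ^ m)) with hle | hle
      · rw [max_eq_right hle, mul_div_assoc, div_self hvum0, mul_one]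
        rcases Finset.mem_insert.mp hl with rfl | hl'
        · exact lt_of_le_of_lt hle (by rw [map_pow]; exact pow_lt_one₀ zero_le' huj hm0)
        · exact hw'J l hl'
      · rw [max_eq_left hle, mul_comm, mul_div_assoc, div_self hvw'0, mul_one]
        rcases Finset.mem_insert.mp hl with rfl | hl'
        · rw [map_pow]; exact pow_lt_one₀ zero_le' huj hm0
        · exact lt_of_le_of_lt hle (hw'J l hl')
    · have hqle : (O k).valuation (w' + u ^ m)
          ≤ max ((O k).valuation w') ((O k).valuation (u ^ m)) :=
        ((O k).valuation).map_add _ _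
      have hqpos : (0 : (O k).ValueGroup) < (O k).valuation (w' + u ^ m) :=
        zero_lt_iff.mpr (((O k).valuation.ne_zero_iff).mpr hq0)
      have h2 : 1 < (O k).valuation (u ^ m) := by
        rw [map_pow]; exact one_lt_pow₀ huk hm0
      rw [map_div₀, map_mul]
      rcases le_total ((O k).valuation w') ((O k).valuation (u ^ m)) with hle | hle
      · -- max = u^m side; a*b/c ≥ a*(b/b) = a > 1
        have hcb : (O k).valuation (w' + u ^ m) ≤ (O k).valuation (u ^ m) :=
          hqle.trans_eq (max_eq_right hle)
        have hdiv : (1 : (O k).ValueGroup)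
            ≤ (O k).valuation (u ^ m) / (O k).valuation (w' + u ^ m) :=
          (one_le_div₀ hqpos).mpr hcb
        calc (1 : (O k).ValueGroup) < (O k).valuation w' := hw'k
          _ ≤ (O k).valuation w' * ((O k).valuation (u ^ m)
                / (O k).valuation (w' + u ^ m)) := le_mul_of_one_le_right' hdiv
          _ = (O k).valuation w' * (O k).valuation (u ^ m)
                / (O k).valuation (w' + u ^ m) := (mul_div_assoc _ _ _).symm
      · have hcb : (O k).valuation (w' + u ^ m) ≤ (O k).valuation w' :=
          hqle.trans_eq (max_eq_left hle)
        have hdiv : (1 : (O k).ValueGroup)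
            ≤ (O k).valuation w' / (O k).valuation (w' + u ^ m) :=
          (one_le_div₀ hqpos).mpr hcb
        calc (1 : (O k).ValueGroup) < (O k).valuation (u ^ m) := h2
          _ ≤ (O k).valuation (u ^ m) * ((O k).valuation w'
                / (O k).valuation (w' + u ^ m)) := le_mul_of_one_le_right' hdiv
          _ = (O k).valuation w' * (O k).valuation (u ^ m)
                / (O k).valuation (w' + u ^ m) := by rw [mul_comm ((O k).valuation w') _, mul_div_assoc]

/-- Elements with a prescribed "sign pattern". -/
private lemma aux_F (hincomp : ∀ i j, i ≠ j → ¬ O i ≤ O j)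
    (hex : ∀ k : Fin n, ∃ y : K, y ∉ O k) (S : Finset (Fin n)) :
    ∀ J : Finset (Fin n), Disjoint J S → S.Nonempty →
      ∃ z : K, (∀ j ∈ J, (O j).valuation z < 1) ∧ ∀ k ∈ S, 1 < (O k).valuation z := by
  classical
  induction S using Finset.induction_on with
  | empty =>
    intro J _ h
    exact absurd h (by simp)
  | @insert k S' hkS' IH =>
    intro J hdisj _
    have hkJ : k ∉ J := fun hkJ =>
      (Finset.disjoint_left.mp hdisj hkJ) (Finset.mem_insert_self k S')
    have hdisj' : Disjoint J S' := hdisj.mono_right (Finset.subset_insert k S')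
    obtain ⟨w, hwJ, hwk⟩ := aux_G hincomp hex J k hkJ
    have hw0 : w ≠ 0 :=
      ((O k).valuation.ne_zero_iff).mp (ne_of_gt (lt_trans zero_lt_one hwk))
    by_cases hS' : S'.Nonempty
    · obtain ⟨z', hz'J, hz'S⟩ := IH J hdisj' hS'
      obtain ⟨l0, hl0⟩ := hS'
      have hz'0 : z' ≠ 0 :=
        ((O l0).valuation.ne_zero_iff).mp (ne_of_gt (lt_trans zero_lt_one (hz'S l0 hl0)))
      obtain ⟨m, hm0, hkey⟩ := exists_exponent (insert k S')
        (fun l => (O l).valuation w) (fun l => (O l).valuation z')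
        (fun l _ => ((O l).valuation.ne_zero_iff).mpr hw0)
        (by
          intro l hl ha1
          rcases Finset.mem_insert.mp hl with rfl | hl'
          · exact absurd ha1 (ne_of_gt hwk)
          · exact ne_of_gt (hz'S l hl'))
      have hdist : ∀ l ∈ insert k S',
          (O l).valuation z' ≠ (O l).valuation (w ^ m) := by
        intro l hl h
        rw [map_pow] at h
        exact hkey l hl h.symm
      refine ⟨z' + w ^ m, ?_, ?_⟩
      · intro l' hl'
        have h1 : (O l').valuation z' < 1 := hz'J l' hl'
        have h2 : (O l').valuation (w ^ m) < 1 := by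
          rw [map_pow]; exact pow_lt_one₀ zero_le' (hwJ l' hl') hm0
        exact lt_of_le_of_lt (((O l').valuation).map_add _ _) (max_lt h1 h2)
      · intro l hl
        rw [((O l).valuation).map_add_of_distinct_val (hdist l hl)]
        rcases Finset.mem_insert.mp hl with rfl | hl'
        · exact lt_of_lt_of_le (by rw [map_pow]; exact one_lt_pow₀ hwk hm0) (le_max_right _ _)
        · exact lt_of_lt_of_le (hz'S l hl') (le_max_left _ _)
    · refine ⟨w, hwJ, ?_⟩
      intro l hl
      rcases Finset.mem_insert.mp hl with rfl | hl'
      · exact hwk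
      · exact absurd hl' (by simp [Finset.not_nonempty_iff_eq_empty.mp hS'])

/-- Key lemma: every `x ∈ O i` can be divided by a unit `s` of `O i` lying in all the
`O j`, so that `s * x` also lies in all the `O j`. -/
private lemma aux_key (hincomp : ∀ i j, i ≠ j → ¬ O i ≤ O j) (i : Fin n) (x : K)
    (hx : x ∈ O i) :
    ∃ s : K, s ≠ 0 ∧ (∀ j, s ∈ O j) ∧ (∀ j, s * x ∈ O j) ∧ s⁻¹ ∈ O i := by
  classical
  set J : Finset (Fin n) := Finset.univ.filter (fun j => x ∉ O j) with hJdef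
  have hmemJ : ∀ j, j ∈ J ↔ x ∉ O j := by
    intro j; simp [hJdef]
  have hiJ : i ∉ J := fun hc => (hmemJ i).mp hc hx
  by_cases hJ : J = ∅
  · refine ⟨1, one_ne_zero, fun j => (O j).one_mem, fun j => ?_, by
      rw [inv_one]; exact (O i).one_mem⟩
    have hxj : x ∈ O j := by
      by_contra hc
      have hjJ : j ∈ J := (hmemJ j).mpr hc
      rw [hJ] at hjJ
      exact absurd hjJ (Finset.notMem_empty j)
    rw [one_mul]; exact hxj
  · obtain ⟨j0, hj0⟩ := Finset.nonempty_iff_ne_empty.mpr hJ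
    have hj0x : x ∉ O j0 := (hmemJ j0).mp hj0
    have hij0 : i ≠ j0 := fun h => hj0x (h ▸ hx)
    have hex : ∀ k : Fin n, ∃ y : K, y ∉ O k := by
      intro k
      by_cases hk : k = j0
      · obtain ⟨a, _, hb⟩ := SetLike.not_le_iff_exists.mp (hincomp i k (hk ▸ hij0))
        exact ⟨a, hb⟩
      · obtain ⟨a, _, hb⟩ :=
          SetLike.not_le_iff_exists.mp (hincomp j0 k (fun h => hk h.symm))
        exact ⟨a, hb⟩
    obtain ⟨z, hzJ, hzC⟩ := aux_F hincomp hex Jᶜ J disjoint_compl_right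
      ⟨i, Finset.mem_compl.mpr hiJ⟩
    -- here hzJ : ∀ j ∈ J, v j z < 1 ; hzC : ∀ k ∈ Jᶜ, 1 < v k z
    have hz0 : z ≠ 0 :=
      ((O i).valuation.ne_zero_iff).mp
        (ne_of_gt (lt_trans zero_lt_one (hzC i (Finset.mem_compl.mpr hiJ))))
    -- the element 1 + x * z⁻¹
    have hvadd : ∀ j, (j ∉ J → (O j).valuation (1 + x * z⁻¹) = 1) ∧
        (j ∈ J → (O j).valuation (1 + x * z⁻¹) = (O j).valuation (x * z⁻¹) ∧
          1 < (O j).valuation (x * z⁻¹)) := by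
      intro j
      constructor
      · intro hj
        have hxj : x ∈ O j := by
          by_contra hc; exact hj ((hmemJ j).mpr hc)
        have hvz : 1 < (O j).valuation z := hzC j (Finset.mem_compl.mpr hj)
        have hvzpos : (0 : (O j).ValueGroup) < (O j).valuation z :=
          lt_trans zero_lt_one hvz
        have hvxt : (O j).valuation (x * z⁻¹) < 1 := by
          rw [map_mul, map_inv₀]
          calc (O j).valuation x * ((O j).valuation z)⁻¹
              ≤ 1 * ((O j).valuation z)⁻¹ := mul_le_mul_left (val_le_one_of_mem hxj) _
            _ = ((O j).valuation z)⁻¹ := one_mul _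
            _ < 1 := (inv_lt_one₀ hvzpos).mpr hvz
        have := ((O j).valuation).map_add_of_distinct_val
          (x := 1) (y := x * z⁻¹) (by rw [map_one]; exact (ne_of_lt hvxt).symm)
        rw [map_one, max_eq_left hvxt.le] at this
        exact this
      · intro hj
        have hvx : 1 < (O j).valuation x := one_lt_val_of_notMem ((hmemJ j).mp hj)
        have hvzlt : (O j).valuation z < 1 := hzJ j hj
        have hvzpos : (0 : (O j).ValueGroup) < (O j).valuation z :=
          zero_lt_iff.mpr (((O j).valuation.ne_zero_iff).mpr hz0)
        have hvxt : 1 < (O j).valuation (x * z⁻¹) := by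
          rw [map_mul, map_inv₀]
          exact one_lt_mul_of_lt_of_le hvx ((one_lt_inv₀ hvzpos).mpr hvzlt).le
        have := ((O j).valuation).map_add_of_distinct_val
          (x := 1) (y := x * z⁻¹) (by rw [map_one]; exact (ne_of_lt hvxt))
        rw [map_one, max_eq_right hvxt.le] at this
        exact ⟨this, hvxt⟩
    have hden0 : (1 : K) + x * z⁻¹ ≠ 0 := by
      have h1 : (O i).valuation (1 + x * z⁻¹) = 1 := (hvadd i).1 hiJ
      intro hc
      rw [hc, map_zero] at h1
      exact zero_ne_one h1
    refine ⟨(1 + x * z⁻¹)⁻¹, inv_ne_zero hden0, ?_, ?_, ?_⟩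
    · intro j
      apply mem_of_val_le_one
      rw [map_inv₀]
      by_cases hj : j ∈ J
      · obtain ⟨he, hgt⟩ := (hvadd j).2 hj
        rw [he]
        exact ((inv_le_one₀ (lt_trans zero_lt_one hgt)).mpr hgt.le)
      · rw [(hvadd j).1 hj, inv_one]
    · intro j
      apply mem_of_val_le_one
      rw [map_mul, map_inv₀]
      by_cases hj : j ∈ J
      · obtain ⟨he, hgt⟩ := (hvadd j).2 hj
        rw [he, map_mul, map_inv₀]
        have hvx0 : (O j).valuation x ≠ 0 :=
          ne_of_gt (lt_trans zero_lt_one (one_lt_val_of_notMem ((hmemJ j).mp hj)))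
        have hvz0 : (O j).valuation z ≠ 0 := ((O j).valuation.ne_zero_iff).mpr hz0
        have : ((O j).valuation x * ((O j).valuation z)⁻¹)⁻¹ * (O j).valuation x
            = (O j).valuation z := by
          rw [mul_inv_rev, inv_inv, mul_assoc, inv_mul_cancel₀ hvx0, mul_one]
        rw [this]
        exact (hzJ j hj).le
      · rw [(hvadd j).1 hj, inv_one, one_mul]
        have hxj : x ∈ O j := by
          by_contra hc; exact hj ((hmemJ j).mpr hc)
        exact val_le_one_of_mem hxj
    · rw [inv_inv]
      apply mem_of_val_le_one
      rw [(hvadd i).1 hiJ]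

/-- The inclusion of the intersection into one of the valuation subrings. -/
private def inclHom (O : Fin n → ValuationSubring K) (V : ValuationSubring K)
    (h : (⨅ i, (O i).toSubring) ≤ V.toSubring) :
    ↥(⨅ i, (O i).toSubring) →+* ↥V where
  toFun a := ⟨(a : K), (V.mem_toSubring _).mp (h a.2)⟩
  map_one' := rfl
  map_mul' _ _ := rfl
  map_zero' := rfl
  map_add' _ _ := rfl

end Aux

/-- Let `O_1, …, O_n` be pairwise incomparable valuation subrings of a field `K`, and let
`O` be any valuation subring of `K`.  Then `O ⊇ O_1 ∩ ⋯ ∩ O_n` if and only if `O ⊇ O_i`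
for some `i`. -/
theorem valuationSubring_superset_of_multiValuationRing_iff
    {K : Type*} [Field K] (n : ℕ) (hn : 0 < n)
    (O : Fin n → ValuationSubring K)
    (hincomp : ∀ i j, i ≠ j → ¬ O i ≤ O j)
    (O' : ValuationSubring K) :
    (⨅ i, (O i).toSubring) ≤ O'.toSubring ↔ ∃ i, O i ≤ O' := by
  classical
  constructor
  · intro h
    set g' := inclHom O O' h with hg'
    have hgi : ∀ i, (⨅ i, (O i).toSubring) ≤ (O i).toSubring := fun i => iInf_le _ i
    set g : ∀ i, ↥(⨅ i, (O i).toSubring) →+* ↥(O i) :=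
      fun i => inclHom O (O i) (hgi i) with hg
    have hprime : ∀ i : Fin n,
        (Ideal.comap (g i) (IsLocalRing.maximalIdeal ↥(O i))).IsPrime := by
      intro i
      haveI : (IsLocalRing.maximalIdeal ↥(O i)).IsPrime :=
        (IsLocalRing.maximalIdeal.isMaximal _).isPrime
      exact Ideal.comap_isPrime _ _
    have hsubset : ((Ideal.comap g' (IsLocalRing.maximalIdeal ↥O') : Ideal _) : Set _)
        ⊆ ⋃ i ∈ ((Finset.univ : Finset (Fin n)) : Set (Fin n)),
            ((Ideal.comap (g i) (IsLocalRing.maximalIdeal ↥(O i)) : Ideal ↥(⨅ i, (O i).toSubring)) :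
              Set ↥(⨅ i, (O i).toSubring)) := by
      intro a ha
      rw [SetLike.mem_coe, Ideal.mem_comap, IsLocalRing.mem_maximalIdeal,
        _root_.mem_nonunits_iff] at ha
      simp only [Finset.coe_univ, Set.mem_univ, Set.iUnion_true, Set.mem_iUnion,
        SetLike.mem_coe]
      by_contra hc
      push_neg at hc
      have hunit : ∀ i, IsUnit (g i a) := by
        intro i
        have := hc i
        rw [Ideal.mem_comap, IsLocalRing.mem_maximalIdeal, _root_.mem_nonunits_iff, not_not] at this
        exact this
      have hval : ∀ i, (O i).valuation (a : K) = 1 := fun i =>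
        ((O i).valuation_eq_one_iff (g i a)).mp (hunit i)
      have ha0 : (a : K) ≠ 0 := by
        intro h0
        have h1 := hval ⟨0, hn⟩
        rw [h0, map_zero] at h1
        exact zero_ne_one h1
      have hinv : (a : K)⁻¹ ∈ (⨅ i, (O i).toSubring : Subring K) := by
        rw [Subring.mem_iInf]
        intro i
        exact mem_of_val_le_one (by rw [map_inv₀, hval i, inv_one])
      have haO' : (a : K) ∈ O' := h a.2
      have hainvO' : (a : K)⁻¹ ∈ O' := h hinv
      have hv1 : O'.valuation (a : K) = 1 := by
        apply le_antisymm (val_le_one_of_mem haO')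
        have h2 : (O'.valuation (a : K))⁻¹ ≤ 1 := by
          rw [← map_inv₀]; exact val_le_one_of_mem hainvO'
        have hpos : (0 : O'.ValueGroup) < O'.valuation (a : K) :=
          zero_lt_iff.mpr ((O'.valuation.ne_zero_iff).mpr ha0)
        exact (inv_le_one₀ hpos).mp h2
      exact ha ((O'.valuation_eq_one_iff (g' a)).mpr hv1)
    obtain ⟨i, -, hPle⟩ :=
      (Ideal.subset_union_prime (⟨0, hn⟩ : Fin n) (⟨0, hn⟩ : Fin n)
        (fun i _ _ _ => hprime i)).mp hsubset
    refine ⟨i, ?_⟩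
    intro x hx
    obtain ⟨s, hs0, hsmem, hsx, hsinv⟩ := aux_key hincomp i x hx
    have hsA : s ∈ (⨅ i, (O i).toSubring : Subring K) :=
      Subring.mem_iInf.mpr (fun j => hsmem j)
    have hsxA : s * x ∈ (⨅ i, (O i).toSubring : Subring K) :=
      Subring.mem_iInf.mpr (fun j => hsx j)
    have hui : IsUnit (g i (⟨s, hsA⟩ : ↥(⨅ i, (O i).toSubring))) := by
      apply ((O i).valuation_eq_one_iff _).mpr
      apply le_antisymm (val_le_one_of_mem (hsmem i))
      have h2 : ((O i).valuation s)⁻¹ ≤ 1 := by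
        rw [← map_inv₀]; exact val_le_one_of_mem hsinv
      have hpos : (0 : (O i).ValueGroup) < (O i).valuation s :=
        zero_lt_iff.mpr (((O i).valuation.ne_zero_iff).mpr hs0)
      exact (inv_le_one₀ hpos).mp h2
    have hnotP : (⟨s, hsA⟩ : ↥(⨅ i, (O i).toSubring))
        ∉ Ideal.comap g' (IsLocalRing.maximalIdeal ↥O') := by
      intro hP
      have h1 := hPle hP
      rw [Ideal.mem_comap, IsLocalRing.mem_maximalIdeal, _root_.mem_nonunits_iff] at h1
      exact h1 hui
    have hunit' : IsUnit (g' (⟨s, hsA⟩ : ↥(⨅ i, (O i).toSubring))) := by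
      by_contra hcu
      exact hnotP (by rw [Ideal.mem_comap, IsLocalRing.mem_maximalIdeal,
        _root_.mem_nonunits_iff]; exact hcu)
    have hvs : O'.valuation s = 1 := (O'.valuation_eq_one_iff _).mp hunit'
    have hsinvO' : s⁻¹ ∈ O' :=
      mem_of_val_le_one (by rw [map_inv₀, hvs, inv_one])
    have hsxO' : s * x ∈ O' := h hsxA
    have hxeq : x = s⁻¹ * (s * x) := (inv_mul_cancel_left₀ hs0 x).symm
    rw [hxeq]
    exact O'.mul_mem _ _ hsinvO' hsxO'
  · rintro ⟨i, hi⟩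
    refine le_trans (iInf_le _ i) ?_
    intro x hx
    exact hi hx
end

section
/- Let K be a field and R a subring of K. Then R is a multi-valuation ring on K (i.e., R equals an intersection of finitely many, at least one, valuation subrings of K) if and only if the following three conditions hold: (i) every element of K can be written as a/s with a ∈ R and s a nonzero element of R (the fraction field of R is K); (ii) R is a Bezout domain (every finitely generated ideal of R is principal); and (iii) R has only finitely many maximal ideals. -/
/-!
If `R = O₁ ∩ ⋯ ∩ Oₙ`, every `x : K` has a denominator `s = (1 + x + ⋯ + x ^ (N - 1))⁻¹`: `s` and
`s * x` lie in `R`, and `s` is a unit in every `Oᵢ` containing `x`. The geometric sum is a unit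
where `x` is a nonunit and is dominated by `x ^ (N - 1)` where `x ∉ Oᵢ`; where `x` is a unit, the
lengths `N` for which it is not a unit are multiples of some `dᵢ ≥ 2`, so `N = ∏ dᵢ + 1` works.
Hence `K` is the fraction field of `R` and each `Oᵢ` lies in the localization of `R` at its
center. By prime avoidance every maximal ideal is such a center, so `R` is semilocal and, being
the intersection of its localizations at maximal ideals, equals the intersection of the `Oᵢ`
whose centers are maximal. For `x, y ∈ R` the Chinese remainder theorem gives `e ≡ 0` at the
maximal ideals where `v x ≤ v y` and `e ≡ 1` at the others; then `d = e * x + (1 - e) * y` has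
valuation `max (v x) (v y)` at each of them, so `(x, y) = (d)`.

Conversely, in a Bézout domain every fraction is `a / b` with `a, b` coprime, so one of `a, b`
avoids any given prime and the localization at that prime is a valuation ring; and a domain is
the intersection of its localizations at its maximal ideals.
-/

open Finset

namespace Valuation

variable {A Γ₀ : Type*} [CommRing A] [LinearOrderedCommGroupWithZero Γ₀]
  (v : Valuation A Γ₀) {x : A}

theorem map_geom_sum_of_lt_one (hx : v x < 1) {n : ℕ} (hn : n ≠ 0) :
    v (∑ i ∈ range n, x ^ i) = 1 := by
  induction n with
  | zero => exact absurd rfl hn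
  | succ n ih =>
    rcases eq_or_ne n 0 with rfl | hn
    · simp
    have hlt : v (x ^ n) < v (∑ i ∈ range n, x ^ i) := by
      rw [ih hn, map_pow]
      exact pow_lt_one₀ zero_le hx hn
    rw [sum_range_succ, map_add_eq_of_lt_left _ hlt, ih hn]

theorem map_geom_sum_of_one_lt (hx : 1 < v x) {n : ℕ} (hn : n ≠ 0) :
    v (∑ i ∈ range n, x ^ i) = v x ^ (n - 1) := by
  induction n with
  | zero => exact absurd rfl hn
  | succ n ih =>
    rcases eq_or_ne n 0 with rfl | hn
    · simp
    have hlt : v (∑ i ∈ range n, x ^ i) < v (x ^ n) := by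
      rw [ih hn, map_pow]
      exact pow_lt_pow_right₀ hx (by omega)
    rw [sum_range_succ, map_add_eq_of_lt_right _ hlt, map_pow, Nat.add_sub_cancel]

theorem map_geom_sum_lt_one_of_add (hx : v x = 1) {a c : ℕ}
    (ha : v (∑ i ∈ range a, x ^ i) < 1) (hac : v (∑ i ∈ range (a + c), x ^ i) < 1) :
    v (∑ i ∈ range c, x ^ i) < 1 := by
  have hsplit : ∑ i ∈ range (a + c), x ^ i - ∑ i ∈ range a, x ^ i =
      x ^ a * ∑ i ∈ range c, x ^ i := by
    simp only [sum_range_add, pow_add, mul_sum, add_sub_cancel_left]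
  have := (v.map_sub _ _).trans_lt (max_lt hac ha)
  rwa [hsplit, map_mul, map_pow, hx, one_pow, one_mul] at this

theorem map_mul_add_one_sub_mul {e y : A} (he : v e < 1) (hxy : v x ≤ v y) :
    v (e * x + (1 - e) * y) = v y := by
  have hey : v ((1 - e) * y) = v y := by rw [map_mul, v.map_one_sub_of_lt he, one_mul]
  rcases eq_or_ne (v y) 0 with hy | hy
  · refine le_antisymm ((v.map_add _ _).trans (max_le ?_ hey.le)) (hy ▸ zero_le)
    rw [map_mul]
    exact (mul_le_of_le_one_left zero_le he.le).trans hxy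
  · refine hey ▸ v.map_add_eq_of_lt_right ?_
    rw [hey, map_mul]
    exact (mul_le_mul_right hxy _).trans_lt (mul_lt_of_lt_one_left (zero_lt_iff.mpr hy) he)

end Valuation

theorem Nat.exists_two_le_forall_dvd_of_add_mem {B : Set ℕ} (h1 : 1 ∉ B)
    (hadd : ∀ a c, a ∈ B → a + c ∈ B → c ∈ B) : ∃ d, 2 ≤ d ∧ ∀ b ∈ B, d ∣ b := by
  classical
  by_cases hpos : ∃ b ∈ B, 0 < b
  · obtain ⟨hd, hd0⟩ := Nat.find_spec hpos
    refine ⟨Nat.find hpos, ?_, fun b hb => ?_⟩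
    · by_contra! h
      exact h1 (by rwa [show Nat.find hpos = 1 by omega] at hd)
    induction b using Nat.strong_induction_on with
    | _ b ih =>
      rcases Nat.eq_zero_or_pos b with rfl | hb0
      · exact dvd_zero _
      obtain ⟨c, rfl⟩ := Nat.exists_eq_add_of_le (Nat.find_min' hpos ⟨hb, hb0⟩)
      exact (Nat.dvd_add_right dvd_rfl).mpr (ih c (by omega) (hadd _ _ hd hb))
  · push Not at hpos
    exact ⟨2, le_rfl, fun b hb => by rw [Nat.le_zero.mp (hpos b hb)]; exact dvd_zero _⟩

theorem Nat.exists_forall_notMem_of_add_mem {ι : Type*} [Finite ι] {B : ι → Set ℕ}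
    (h1 : ∀ i, 1 ∉ B i) (hadd : ∀ i a c, a ∈ B i → a + c ∈ B i → c ∈ B i) :
    ∃ n, 2 ≤ n ∧ ∀ i, n ∉ B i := by
  have := Fintype.ofFinite ι
  choose d hd2 hd using fun i => exists_two_le_forall_dvd_of_add_mem (h1 i) (hadd i)
  refine ⟨∏ i, d i + 1, ?_, fun i hi => ?_⟩
  · have : 0 < ∏ i, d i := prod_pos fun i _ => by have := hd2 i; omega
    omega
  · have h := (Nat.dvd_add_right (dvd_prod_of_mem d (mem_univ i))).mp (hd i _ hi)
    have := hd2 i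
    have := Nat.le_of_dvd one_pos h
    omega

theorem finite_maximalSpectrum_iff (A : Type*) [CommSemiring A] :
    Finite (MaximalSpectrum A) ↔ {I : Ideal A | I.IsMaximal}.Finite :=
  (MaximalSpectrum.equivSubtype A).finite_iff.trans Set.finite_coe_iff

namespace Subring

variable {K : Type*} [Field K] (R : Subring K)

theorem isFractionRing_iff :
    IsFractionRing R K ↔ ∀ x : K, ∃ a s : K, a ∈ R ∧ s ∈ R ∧ s ≠ 0 ∧ x = a / s := by
  refine ⟨fun _ x => ?_, fun h => IsFractionRing.of_field R K fun x => ?_⟩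
  · obtain ⟨a, s, hs, rfl⟩ := IsFractionRing.div_surjective R x
    exact ⟨a, s, a.2, s.2, fun h0 => nonZeroDivisors.coe_ne_zero ⟨s, hs⟩ (Subtype.ext h0), rfl⟩
  · obtain ⟨a, s, ha, hs, -, rfl⟩ := h x
    exact ⟨⟨a, ha⟩, ⟨s, hs⟩, rfl⟩

theorem mem_iff_forall_mem_localization [IsFractionRing R K] {x : K} :
    x ∈ R ↔ ∀ m : MaximalSpectrum R,
      x ∈ Localization.subalgebra.ofField K _ m.asIdeal.primeCompl_le_nonZeroDivisors := by
  rw [← Algebra.mem_iInf, MaximalSpectrum.iInf_localization_eq_bot, Algebra.mem_bot]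
  exact ⟨fun h => ⟨⟨x, h⟩, rfl⟩, by rintro ⟨y, rfl⟩; exact y.2⟩

theorem isBezout_of_iInf_valuationSubring_le [Finite (MaximalSpectrum R)]
    (W : MaximalSpectrum R → ValuationSubring K)
    (hW : ∀ m : MaximalSpectrum R, ∀ r ∈ m.asIdeal, (W m).valuation r < 1)
    (hR : ∀ x : K, (∀ m, x ∈ W m) → x ∈ R) : IsBezout R := by
  classical
  refine IsBezout.iff_span_pair_isPrincipal.mpr fun x y => ?_
  let v m := (W m).valuation
  obtain ⟨e, he⟩ := Ideal.exists_forall_sub_mem_ideal (I := MaximalSpectrum.asIdeal)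
    (fun _ _ => MaximalSpectrum.isCoprime_of_ne) (fun m => if v m x ≤ v m y then 0 else 1)
  set d : R := e * x + (1 - e) * y
  have hd : ∀ m, v m d = max (v m x) (v m y) := by
    intro m
    have hem := hW m _ (he m)
    split_ifs at hem with hxy
    · rw [sub_zero] at hem
      push_cast [d]
      rw [max_eq_right hxy]
      exact (v m).map_mul_add_one_sub_mul hem hxy
    · have hd' : (d : K) = (1 - e) * y + (1 - (1 - e)) * x := by push_cast [d]; ring
      push_cast at hem
      rw [← Valuation.map_neg, neg_sub] at hem
      rw [hd', max_eq_left (not_le.mp hxy).le]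
      exact (v m).map_mul_add_one_sub_mul hem (not_le.mp hxy).le
  have hdvd : ∀ z : R, (∀ m, v m z ≤ v m d) → z ∈ Ideal.span {d} := by
    intro z hz
    have hzd : (z : K) / d ∈ R := hR _ fun m => by
      rw [← ValuationSubring.valuation_le_one_iff, map_div₀]
      exact div_le_one_of_le₀ (hz m) zero_le
    refine Ideal.mem_span_singleton'.mpr
      ⟨⟨_, hzd⟩, Subtype.ext (div_mul_cancel_of_imp fun h0 => ?_)⟩
    obtain ⟨m⟩ : Nonempty (MaximalSpectrum R) := inferInstance
    simpa [h0] using hz m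
  refine ⟨d, le_antisymm (Ideal.span_le.mpr ?_)
    (Ideal.span_singleton_le_iff_mem _ |>.mpr (Ideal.mem_span_pair.mpr ⟨e, 1 - e, rfl⟩))⟩
  rintro _ (rfl | rfl)
  · exact hdvd _ fun m => (hd m).symm ▸ le_max_left _ _
  · exact hdvd _ fun m => (hd m).symm ▸ le_max_right _ _

end Subring

namespace ValuationSubring

variable {K ι : Type*} [Field K] (O : ι → ValuationSubring K)

def holomorphyRing : Subring K := ⨅ i, (O i).toSubring

variable {O}

theorem mem_holomorphyRing {x : K} : x ∈ holomorphyRing O ↔ ∀ i, x ∈ O i :=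
  Subring.mem_iInf

theorem holomorphyRing_le (i : ι) : holomorphyRing O ≤ (O i).toSubring :=
  iInf_le _ i

variable (O)

theorem exists_valuation_geom_sum_eq [Finite ι] (x : K) :
    ∃ n, 2 ≤ n ∧ ∀ i, (O i).valuation (∑ j ∈ range n, x ^ j) =
      max 1 ((O i).valuation x) ^ (n - 1) := by
  obtain ⟨n, hn, hbad⟩ := Nat.exists_forall_notMem_of_add_mem
    (B := fun i => {n | (O i).valuation x = 1 ∧ (O i).valuation (∑ j ∈ range n, x ^ j) < 1})
    (fun i h => by simp at h)
    (fun i a c ha hac => ⟨ha.1, (O i).valuation.map_geom_sum_lt_one_of_add ha.1 ha.2 hac.2⟩)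
  refine ⟨n, hn, fun i => ?_⟩
  rcases lt_trichotomy ((O i).valuation x) 1 with hx | hx | hx
  · rw [max_eq_left hx.le, one_pow]
    exact (O i).valuation.map_geom_sum_of_lt_one hx (by omega)
  · rw [hx, max_self, one_pow]
    have hmem : ∑ j ∈ range n, x ^ j ∈ O i :=
      Subring.sum_mem _ fun j _ => Subring.pow_mem _ (((O i).valuation_le_one_iff x).mp hx.le) j
    exact le_antisymm (((O i).valuation_le_one_iff _).mpr hmem)
      (not_lt.mp fun h => hbad i ⟨hx, h⟩)
  · rw [max_eq_right hx.le]
    exact (O i).valuation.map_geom_sum_of_one_lt hx (by omega)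

theorem exists_denominator [Finite ι] [Nonempty ι] (x : K) :
    ∃ s ≠ 0, s ∈ holomorphyRing O ∧ s * x ∈ holomorphyRing O ∧
      ∀ i, x ∈ O i → (O i).valuation s = 1 := by
  obtain ⟨n, hn, hG⟩ := exists_valuation_geom_sum_eq O x
  set G := ∑ j ∈ range n, x ^ j
  have hM : ∀ i, 1 ≤ max 1 ((O i).valuation x) ^ (n - 1) := fun i =>
    one_le_pow₀ (le_max_left _ _)
  have hs : ∀ i, (O i).valuation G⁻¹ = (max 1 ((O i).valuation x) ^ (n - 1))⁻¹ := fun i => by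
    rw [map_inv₀, hG]
  refine ⟨G⁻¹, inv_ne_zero fun h0 => ?_, mem_holomorphyRing.mpr fun i => ?_,
    mem_holomorphyRing.mpr fun i => ?_, fun i hx => ?_⟩
  · obtain ⟨i⟩ := ‹Nonempty ι›
    have := hG i
    rw [h0, map_zero] at this
    exact (zero_lt_one.trans_le (hM i)).ne this
  · rw [← valuation_le_one_iff, hs]
    exact inv_le_one_of_one_le₀ (hM i)
  · rw [← valuation_le_one_iff, map_mul, hs, inv_mul_le_one₀ (zero_lt_one.trans_le (hM i))]
    exact (le_max_right _ _).trans (le_self_pow₀ (le_max_left _ _) (by omega))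
  · rw [hs, max_eq_left (((O i).valuation_le_one_iff x).mpr hx), one_pow, inv_one]

instance [Finite ι] [Nonempty ι] : IsFractionRing (holomorphyRing O) K :=
  (Subring.isFractionRing_iff _).mpr fun x =>
    let ⟨s, hs0, hs, hsx, _⟩ := exists_denominator O x
    ⟨s * x, s, hsx, hs, hs0, by field_simp⟩

def center (i : ι) : Ideal (holomorphyRing O) :=
  (IsLocalRing.maximalIdeal (O i)).comap (Subring.inclusion (holomorphyRing_le i))

instance (i : ι) : (center O i).IsPrime := Ideal.comap_isPrime _ _

variable {O}

theorem mem_center {i : ι} {r : holomorphyRing O} :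
    r ∈ center O i ↔ (O i).valuation r < 1 :=
  (O i).valuation_lt_one_iff _

theorem exists_center_eq [Finite ι] [Nonempty ι] (m : Ideal (holomorphyRing O))
    [m.IsMaximal] : ∃ i, center O i = m := by
  have := Fintype.ofFinite ι
  obtain ⟨i₀⟩ := ‹Nonempty ι›
  have hcover : (m : Set (holomorphyRing O)) ⊆ ⋃ i ∈ (univ : Finset ι), (center O i : Set _) := by
    intro r hr
    by_contra hnot
    simp only [Set.mem_iUnion, SetLike.mem_coe, mem_center, mem_univ, exists_const, not_exists,
      not_lt] at hnot
    have hr1 : ∀ i, (O i).valuation r = 1 := fun i =>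
      le_antisymm (((O i).valuation_le_one_iff _).mpr (mem_holomorphyRing.mp r.2 i)) (hnot i)
    have hr0 : (r : K) ≠ 0 := fun h => by simpa [h] using hr1 i₀
    have hrinv : (r : K)⁻¹ ∈ holomorphyRing O := mem_holomorphyRing.mpr fun i => by
      rw [← valuation_le_one_iff, map_inv₀, hr1, inv_one]
    have hunit : IsUnit r :=
      IsUnit.of_mul_eq_one (a := r) ⟨_, hrinv⟩ (Subtype.ext (mul_inv_cancel₀ hr0))
    exact Ideal.IsMaximal.ne_top ‹_› (m.eq_top_of_isUnit_mem hr hunit)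
  obtain ⟨i, -, hle⟩ := (Ideal.subset_union_prime i₀ i₀ fun i _ _ _ => inferInstance).mp hcover
  exact ⟨i, (Ideal.IsMaximal.eq_of_le ‹_› Ideal.IsPrime.ne_top' hle).symm⟩

theorem mem_localization_of_le_center [Finite ι] [Nonempty ι] {i : ι}
    {p : Ideal (holomorphyRing O)} [p.IsPrime] (hp : p ≤ center O i) {x : K} (hx : x ∈ O i) :
    x ∈ Localization.subalgebra.ofField K p.primeCompl p.primeCompl_le_nonZeroDivisors := by
  obtain ⟨s, hs0, hs, hsx, hunit⟩ := exists_denominator O x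
  refine ⟨⟨s * x, hsx⟩, ⟨s, hs⟩, fun h => (mem_center.mp (hp h)).ne (hunit i hx), ?_⟩
  change x = s * x * s⁻¹
  field_simp

variable (O)

theorem finite_setOf_isMaximal_holomorphyRing [Finite ι] [Nonempty ι] :
    {m : Ideal (holomorphyRing O) | m.IsMaximal}.Finite :=
  (Set.finite_range (center O)).subset fun m hm => by
    have : m.IsMaximal := hm
    exact exists_center_eq m

theorem isBezout_holomorphyRing [Finite ι] [Nonempty ι] : IsBezout (holomorphyRing O) := by
  have := (finite_maximalSpectrum_iff _).mpr (finite_setOf_isMaximal_holomorphyRing O)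
  choose i hi using fun m : MaximalSpectrum (holomorphyRing O) => exists_center_eq m.asIdeal
  refine (holomorphyRing O).isBezout_of_iInf_valuationSubring_le (fun m => O (i m))
    (fun m r hr => mem_center.mp ((hi m).symm ▸ hr)) fun x hx => ?_
  exact (Subring.mem_iff_forall_mem_localization _).mpr fun m =>
    mem_localization_of_le_center (hi m).ge (hx m)

theorem exists_fin_holomorphyRing_eq [Finite ι] [Nonempty ι] :
    ∃ n, 0 < n ∧ ∃ O' : Fin n → ValuationSubring K,
      holomorphyRing O = ⨅ j, (O' j).toSubring := by
  obtain ⟨n, ⟨e⟩⟩ := Finite.exists_equiv_fin ι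
  exact ⟨n, Fin.pos_iff_nonempty.mpr ⟨e (Classical.arbitrary ι)⟩, fun j => O (e.symm j),
    (e.symm.iInf_comp (g := fun i => (O i).toSubring)).symm⟩

end ValuationSubring

namespace IsBezout

variable (A K : Type*) [CommRing A] [IsDomain A] [IsBezout A] [Field K] [Algebra A K]
  [IsFractionRing A K]

theorem exists_isCoprime_div (x : K) :
    ∃ a b : A, IsCoprime a b ∧ x = algebraMap A K a / algebraMap A K b := by
  classical
  let := IsBezout.toGCDDomain A
  obtain ⟨a, b, hb, rfl⟩ := IsFractionRing.div_surjective A x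
  obtain ⟨a', b', ha, hb', hu⟩ := extract_gcd a b
  generalize GCDMonoid.gcd a b = g at ha hb'
  refine ⟨a', b', isRelPrime_iff_isCoprime.mp (gcd_isUnit_iff_isRelPrime.mp hu), ?_⟩
  have hg : algebraMap A K g ≠ 0 := IsFractionRing.to_map_ne_zero_of_mem_nonZeroDivisors <|
    mem_nonZeroDivisors_of_ne_zero fun h => nonZeroDivisors.ne_zero hb (by rw [hb', h, zero_mul])
  rw [ha, hb', map_mul, map_mul, mul_div_mul_left _ _ hg]

variable {A}

theorem mem_or_inv_mem_localization (p : Ideal A) [p.IsPrime] (x : K) :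
    x ∈ Localization.subalgebra.ofField K p.primeCompl p.primeCompl_le_nonZeroDivisors ∨
      x⁻¹ ∈ Localization.subalgebra.ofField K p.primeCompl p.primeCompl_le_nonZeroDivisors := by
  obtain ⟨a, b, hab, rfl⟩ := exists_isCoprime_div A K x
  by_cases hb : b ∈ p
  · exact Or.inr ⟨b, a, Ideal.IsPrime.notMem_of_isCoprime_of_mem hab.symm hb, by
      rw [inv_div, div_eq_mul_inv]⟩
  · exact Or.inl ⟨a, b, hb, div_eq_mul_inv _ _⟩

noncomputable def localizationValuationSubring (p : Ideal A) [p.IsPrime] : ValuationSubring K :=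
  .ofSubring
    (Localization.subalgebra.ofField K p.primeCompl p.primeCompl_le_nonZeroDivisors).toSubring
    (mem_or_inv_mem_localization K p)

end IsBezout

theorem Subring.eq_holomorphyRing_localizationValuationSubring {K : Type*} [Field K]
    (R : Subring K) [IsFractionRing R K] [IsBezout R] :
    R = ValuationSubring.holomorphyRing
      fun m : MaximalSpectrum R => IsBezout.localizationValuationSubring K m.asIdeal := by
  ext x
  rw [ValuationSubring.mem_holomorphyRing]
  exact R.mem_iff_forall_mem_localization (x := x)

/-- Let `K` be a field and `R` a subring of `K`.  Then `R` is a multi-valuation ring on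
`K` (an intersection of finitely many, at least one, valuation subrings of `K`) iff:
(i) every element of `K` is a ratio `a/s` of elements of `R` with `s ≠ 0`;
(ii) `R` is a Bezout domain (every finitely generated ideal is principal); and
(iii) `R` has only finitely many maximal ideals. -/
theorem multiValuationRing_iff_bezout_finite_maximal_ideals
    {K : Type*} [Field K] (R : Subring K) :
    (∃ n : ℕ, 0 < n ∧ ∃ O : Fin n → ValuationSubring K,
        R = ⨅ i, (O i).toSubring) ↔
      ((∀ x : K, ∃ a s : K, a ∈ R ∧ s ∈ R ∧ s ≠ 0 ∧ x = a / s) ∧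
       (∀ I : Ideal ↥R, I.FG → I.IsPrincipal) ∧
       {I : Ideal ↥R | I.IsMaximal}.Finite) := by
  constructor
  · rintro ⟨n, hn, O, hR⟩
    change R = ValuationSubring.holomorphyRing O at hR
    subst hR
    have : Nonempty (Fin n) := ⟨⟨0, hn⟩⟩
    exact ⟨(Subring.isFractionRing_iff _).mp inferInstance,
      (ValuationSubring.isBezout_holomorphyRing O).isPrincipal_of_FG,
      ValuationSubring.finite_setOf_isMaximal_holomorphyRing O⟩
  · rintro ⟨hFrac, hBez, hFin⟩
    have := (Subring.isFractionRing_iff R).mpr hFrac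
    have : IsBezout R := ⟨hBez⟩
    have := (finite_maximalSpectrum_iff R).mpr hFin
    obtain ⟨n, hn, O, hO⟩ := ValuationSubring.exists_fin_holomorphyRing_eq
      fun m : MaximalSpectrum R => IsBezout.localizationValuationSubring K m.asIdeal
    exact ⟨n, hn, O, R.eq_holomorphyRing_localizationValuationSubring.trans hO⟩
end

section
/- Let K be a field, R a multi-valuation ring on K, and R' a subring of K with R ⊆ R' ⊆ K. Then R' is also a multi-valuation ring on K: R' equals an intersection of finitely many valuation subrings of K. -/
open Finset

section Aux

variable {K : Type*} [Field K]

/-- Geometric sum decomposition: `q (M+L) = q M + x^M * q L`. -/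
private lemma geom_split (x : K) (M L : ℕ) :
    (∑ j ∈ range (M + L), x ^ j) =
      (∑ j ∈ range M, x ^ j) + x ^ M * ∑ j ∈ range L, x ^ j := by
  rw [Finset.sum_range_add, Finset.mul_sum]
  congr 1
  refine Finset.sum_congr rfl fun j _ => ?_
  rw [pow_add]

/-- If `v x = 1` and `p` is a prime larger than the least positive `m` with
`v (∑_{j<m} x^j) < 1` (interpreted via `sInf`), then `v (∑_{j<p} x^j) = 1` is not `< 1`. -/
private lemma not_geom_lt_one (A : ValuationSubring K) (x : K)
    (hx : A.valuation x = 1) (p : ℕ) (hp : p.Prime)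
    (hgt : sInf {m : ℕ | 0 < m ∧ A.valuation (∑ j ∈ range m, x ^ j) < 1} < p) :
    ¬ A.valuation (∑ j ∈ range p, x ^ j) < 1 := by
  intro hlt
  set v := A.valuation with hv
  set T : Set ℕ := {m : ℕ | v (∑ j ∈ range m, x ^ j) < 1} with hT
  have hmulpow : ∀ (M : ℕ) (y : K), v (x ^ M * y) = v y := by
    intro M y
    rw [Valuation.map_mul, Valuation.map_pow, hx, one_pow, one_mul]
  -- closure of T under "difference"
  have hsub : ∀ M L, M ≤ L → M ∈ T → L ∈ T → L - M ∈ T := by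
    intro M L hML hM hL
    have hdec : (∑ j ∈ range L, x ^ j) =
        (∑ j ∈ range M, x ^ j) + x ^ M * ∑ j ∈ range (L - M), x ^ j := by
      rw [← geom_split, Nat.add_sub_cancel' hML]
    have : v (x ^ M * ∑ j ∈ range (L - M), x ^ j) < 1 := by
      have : x ^ M * ∑ j ∈ range (L - M), x ^ j =
          (∑ j ∈ range L, x ^ j) - ∑ j ∈ range M, x ^ j := by
        rw [hdec]; ring
      rw [this]
      exact lt_of_le_of_lt (Valuation.map_sub _ _ _) (max_lt hL hM)
    rwa [hmulpow] at this
  have hone : (1 : ℕ) ∉ T := by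
    simp only [hT, Set.mem_setOf_eq, Finset.sum_range_one, pow_zero, Valuation.map_one]
    exact lt_irrefl 1
  set S : Set ℕ := {m : ℕ | 0 < m ∧ v (∑ j ∈ range m, x ^ j) < 1} with hS
  have hpS : p ∈ S := ⟨hp.pos, hlt⟩
  have hSne : S.Nonempty := ⟨p, hpS⟩
  set d := sInf S with hd
  have hdS : d ∈ S := Nat.sInf_mem hSne
  -- every element of T is divisible by d
  have hdvd : ∀ m, m ∈ T → d ∣ m := by
    intro m
    induction m using Nat.strong_induction_on with
    | _ m ih =>
      intro hm
      rcases Nat.eq_zero_or_pos m with rfl | hmpos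
      · exact dvd_zero d
      · have hdm : d ≤ m := Nat.sInf_le ⟨hmpos, hm⟩
        have hsub' : m - d ∈ T := hsub d m hdm hdS.2 hm
        have hlt' : m - d < m := Nat.sub_lt hmpos hdS.1
        have : d ∣ m - d := ih _ hlt' hsub'
        have := Nat.dvd_add this (dvd_refl d)
        rwa [Nat.sub_add_cancel hdm] at this
  have hdp : d ∣ p := hdvd p hlt
  rcases (Nat.Prime.eq_one_or_self_of_dvd hp d hdp) with h1 | hdp'
  · exact hone (h1 ▸ hdS.2)
  · omega

/-- Key per-valuation lemma: for `N ≥ 2`, if the geometric sum `Q = ∑_{j<N} x^j` is not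
in the maximal ideal when `v x = 1`, then `Q ≠ 0`, `Q⁻¹ ∈ A` and `Q⁻¹ * x ∈ A`. -/
private lemma geom_key (A : ValuationSubring K) (x : K) (N : ℕ) (hN : 2 ≤ N)
    (hc : A.valuation x = 1 → ¬ A.valuation (∑ j ∈ range N, x ^ j) < 1) :
    (∑ j ∈ range N, x ^ j) ≠ 0 ∧ (∑ j ∈ range N, x ^ j)⁻¹ ∈ A ∧
      (∑ j ∈ range N, x ^ j)⁻¹ * x ∈ A := by
  set v := A.valuation with hv
  set Q := ∑ j ∈ range N, x ^ j with hQ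
  have main : (v x ≤ 1 ∧ v Q = 1) ∨ (1 < v x ∧ v Q = v x ^ (N - 1)) := by
    rcases lt_trichotomy (v x) 1 with h | h | h
    · -- v x < 1 : Q = 1 + x * (rest), v Q = 1
      left
      refine ⟨h.le, ?_⟩
      have hdec : Q = 1 + x ^ 1 * ∑ j ∈ range (N - 1), x ^ j := by
        rw [hQ, show N = 1 + (N - 1) by omega, geom_split]
        simp
      have hrest : v (x ^ 1 * ∑ j ∈ range (N - 1), x ^ j) < 1 := by
        rw [Valuation.map_mul, pow_one]
        have h1 : v (∑ j ∈ range (N - 1), x ^ j) ≤ 1 := by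
          apply Valuation.map_sum_le
          intro j _
          rw [Valuation.map_pow]
          exact pow_le_one₀ zero_le' h.le
        calc v x * v (∑ j ∈ range (N - 1), x ^ j) ≤ v x * 1 :=
              mul_le_mul_right h1 _
          _ = v x := mul_one _
          _ < 1 := h
      rw [hdec]
      exact v.map_one_add_of_lt hrest
    · -- v x = 1
      left
      refine ⟨h.le, ?_⟩
      have hle : v Q ≤ 1 := by
        apply Valuation.map_sum_le
        intro j _
        rw [Valuation.map_pow, h, one_pow]
      exact le_antisymm hle (not_lt.mp (hc h))
    · -- 1 < v x : top term dominates
      right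
      refine ⟨h, ?_⟩
      have hdec : Q = (∑ j ∈ range (N - 1), x ^ j) + x ^ (N - 1) := by
        rw [hQ, show N = (N - 1) + 1 by omega, geom_split]
        simp
      have hlow : v (∑ j ∈ range (N - 1), x ^ j) < v (x ^ (N - 1)) := by
        rw [Valuation.map_pow]
        have h1 : v (∑ j ∈ range (N - 1), x ^ j) ≤ v x ^ (N - 2) := by
          apply Valuation.map_sum_le
          intro j hj
          rw [Valuation.map_pow]
          exact pow_le_pow_right₀ h.le (by simp at hj; omega)
        exact lt_of_le_of_lt h1 (pow_lt_pow_right₀ h (by omega))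
      rw [hdec, v.map_add_eq_of_lt_right hlow, Valuation.map_pow]
  rcases main with ⟨hx, h1⟩ | ⟨hx, h1⟩
  · have hQ0 : Q ≠ 0 := by
      rw [← Valuation.ne_zero_iff (v := v)]
      rw [h1]; exact one_ne_zero
    refine ⟨hQ0, ?_, ?_⟩
    · apply A.mem_of_valuation_le_one
      rw [map_inv₀, h1, inv_one]
    · apply A.mem_of_valuation_le_one
      rw [Valuation.map_mul, map_inv₀, h1, inv_one, one_mul]
      exact hx
  · -- v Q = v x ^ (N-1), 1 < v x
    have hvx0 : v x ≠ 0 := ne_of_gt (lt_trans zero_lt_one hx)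
    have hQ0 : Q ≠ 0 := by
      rw [← Valuation.ne_zero_iff (v := v), h1]
      exact pow_ne_zero _ hvx0
    have hone_le : (1 : _) ≤ v x ^ (N - 1) := one_le_pow₀ hx.le
    refine ⟨hQ0, ?_, ?_⟩
    · apply A.mem_of_valuation_le_one
      rw [map_inv₀, h1]
      exact inv_le_one_of_one_le₀ hone_le
    · apply A.mem_of_valuation_le_one
      rw [Valuation.map_mul, map_inv₀, h1]
      have hxle : v x ≤ v x ^ (N - 1) := by
        calc v x = v x ^ 1 := (pow_one _).symm
          _ ≤ v x ^ (N - 1) := pow_le_pow_right₀ hx.le (by omega)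
      calc (v x ^ (N - 1))⁻¹ * v x ≤ (v x ^ (N - 1))⁻¹ * v x ^ (N - 1) :=
            mul_le_mul_right hxle _
        _ = 1 := inv_mul_cancel₀ (pow_ne_zero _ hvx0)

/-- Main auxiliary lemma: for any `x` there is a nonzero `Q`, a geometric sum in `x`,
with `Q⁻¹ ∈ O i` and `Q⁻¹ * x ∈ O i` for all `i`. -/
private lemma exists_geom {n : ℕ} (hn : 0 < n) (O : Fin n → ValuationSubring K) (x : K) :
    ∃ Q : K, Q ≠ 0 ∧ (∃ N : ℕ, Q = ∑ j ∈ range N, x ^ j) ∧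
      ∀ i, Q⁻¹ ∈ O i ∧ Q⁻¹ * x ∈ O i := by
  set B := Finset.univ.sup fun i : Fin n =>
    sInf {m : ℕ | 0 < m ∧ (O i).valuation (∑ j ∈ range m, x ^ j) < 1} with hB
  obtain ⟨p, hpB, hp⟩ := Nat.exists_infinite_primes (B + 2)
  have h2 : 2 ≤ p := by omega
  have key : ∀ i, (∑ j ∈ range p, x ^ j) ≠ 0 ∧ (∑ j ∈ range p, x ^ j)⁻¹ ∈ O i ∧
      (∑ j ∈ range p, x ^ j)⁻¹ * x ∈ O i := by
    intro i
    apply geom_key (O i) x p h2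
    intro hx1
    apply not_geom_lt_one (O i) x hx1 p hp
    have hle : sInf {m : ℕ | 0 < m ∧ (O i).valuation (∑ j ∈ range m, x ^ j) < 1} ≤ B :=
      Finset.le_sup (f := fun i : Fin n =>
        sInf {m : ℕ | 0 < m ∧ (O i).valuation (∑ j ∈ range m, x ^ j) < 1})
        (Finset.mem_univ i)
    omega
  exact ⟨∑ j ∈ range p, x ^ j, (key ⟨0, hn⟩).1, ⟨p, rfl⟩, fun i => (key i).2⟩

end Aux

/-- Let `K` be a field, `R` a multi-valuation ring on `K` (an intersection of finitely
many, at least one, valuation subrings of `K`), and `R'` a subring of `K` with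
`R ⊆ R' ⊆ K`.  Then `R'` is also a multi-valuation ring on `K`. -/
theorem superring_of_multiValuationRing_is_multiValuationRing
    {K : Type*} [Field K] (R R' : Subring K)
    (hR : ∃ n : ℕ, 0 < n ∧ ∃ O : Fin n → ValuationSubring K,
        R = ⨅ i, (O i).toSubring)
    (hRR' : R ≤ R') :
    ∃ m : ℕ, 0 < m ∧ ∃ O' : Fin m → ValuationSubring K,
        R' = ⨅ i, (O' i).toSubring := by
  obtain ⟨n, hn, O, hO⟩ := hR
  -- The candidate valuation subrings: `O i ⊔ R'`, overrings of the `O i`.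
  refine ⟨n, hn, fun i =>
    { toSubring := (O i).toSubring ⊔ R'
      mem_or_inv_mem' := fun x => ((O i).mem_or_inv_mem x).imp
        (fun h => (le_sup_left : (O i).toSubring ≤ (O i).toSubring ⊔ R') h)
        (fun h => (le_sup_left : (O i).toSubring ≤ (O i).toSubring ⊔ R') h) }, ?_⟩
  apply le_antisymm
  · exact le_iInf fun i => le_sup_right
  · -- the hard inclusion
    intro y hy
    simp only [Subring.mem_iInf] at hy
    -- For each `i`, `y ∈ O i ⊔ R'` which is contained in the "localization" Loc i.
    have hloc : ∀ i : Fin n, ∃ s : K, s ≠ 0 ∧ s⁻¹ ∈ R' ∧ (∀ j, s ∈ O j) ∧ s * y ∈ O i := by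
      intro i
      -- the localization subring
      let Loc : Subring K :=
        { carrier := {z : K | ∃ s : K, s ≠ 0 ∧ s⁻¹ ∈ R' ∧ (∀ j, s ∈ O j) ∧ s * z ∈ O i}
          one_mem' := ⟨1, one_ne_zero, by simp [R'.one_mem], fun j => one_mem (O j),
            by simpa using one_mem (O i)⟩
          mul_mem' := by
            rintro a b ⟨s, hs0, hsR, hsO, hsa⟩ ⟨t, ht0, htR, htO, htb⟩
            refine ⟨s * t, mul_ne_zero hs0 ht0, ?_, fun j => mul_mem (hsO j) (htO j), ?_⟩
            · rw [mul_inv]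
              exact R'.mul_mem hsR htR
            · have : s * t * (a * b) = (s * a) * (t * b) := by ring
              rw [this]
              exact mul_mem hsa htb
          add_mem' := by
            rintro a b ⟨s, hs0, hsR, hsO, hsa⟩ ⟨t, ht0, htR, htO, htb⟩
            refine ⟨s * t, mul_ne_zero hs0 ht0, ?_, fun j => mul_mem (hsO j) (htO j), ?_⟩
            · rw [mul_inv]
              exact R'.mul_mem hsR htR
            · have : s * t * (a + b) = t * (s * a) + s * (t * b) := by ring
              rw [this]
              exact add_mem (mul_mem (htO i) hsa) (mul_mem (hsO i) htb)
          zero_mem' := ⟨1, one_ne_zero, by simp [R'.one_mem], fun j => one_mem (O j),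
            by simpa using zero_mem (O i)⟩
          neg_mem' := by
            rintro a ⟨s, hs0, hsR, hsO, hsa⟩
            exact ⟨s, hs0, hsR, hsO, by rw [mul_neg]; exact neg_mem hsa⟩ }
      have hOle : (O i).toSubring ≤ Loc := by
        intro z hz
        exact ⟨1, one_ne_zero, by simp [R'.one_mem], fun j => one_mem (O j), by simpa using hz⟩
      have hR'le : R' ≤ Loc := by
        intro z hz
        obtain ⟨Q, hQ0, ⟨N, hQN⟩, hQmem⟩ := exists_geom hn O z
        refine ⟨Q⁻¹, inv_ne_zero hQ0, ?_, fun j => (hQmem j).1, (hQmem i).2⟩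
        rw [inv_inv, hQN]
        exact Subring.sum_mem _ fun j _ => Subring.pow_mem _ hz j
      exact (sup_le hOle hR'le : (O i).toSubring ⊔ R' ≤ Loc) (hy i)
    choose s hs0 hsR hsO hsy using hloc
    -- multiply everything together
    set S : K := ∏ i, s i with hS
    have hS0 : S ≠ 0 := Finset.prod_ne_zero_iff.mpr fun i _ => hs0 i
    have hSinv : S⁻¹ ∈ R' := by
      rw [hS, ← Finset.prod_inv_distrib]
      exact Subring.prod_mem _ fun i _ => hsR i
    have hSy : S * y ∈ R := by
      rw [hO, Subring.mem_iInf]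
      intro i
      have : S * y = (∏ j ∈ Finset.univ.erase i, s j) * (s i * y) := by
        rw [hS, ← mul_assoc, mul_comm (∏ j ∈ Finset.univ.erase i, s j) (s i),
          Finset.mul_prod_erase _ _ (Finset.mem_univ i)]
      rw [this]
      exact mul_mem (Subring.prod_mem (O i).toSubring fun j _ => hsO j i) (hsy i)
    have : y = S⁻¹ * (S * y) := by
      rw [← mul_assoc, inv_mul_cancel₀ hS0, one_mul]
    rw [this]
    exact R'.mul_mem hSinv (hRR' hSy)
end

section
/- Let O_1, …, O_n be pairwise incomparable valuation subrings of a field K. Given nonzero elements a_1, …, a_m of K (m ≥ 1), there exist nonzero b, c ∈ K such that for every i ∈ {1,…,n}: (for b) a_j/b ∈ O_i for all j and b/a_j ∈ O_i for some j (so b realizes, at each O_i, the minimum of the additive values of a_1,…,a_m); and (for c) c/a_j ∈ O_i for all j and a_j/c ∈ O_i for some j (so c realizes, at each O_i, the maximum of the additive values of a_1,…,a_m). -/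
section Aux

variable {K : Type*} [Field K]

private lemma val_ne_zero' (A : ValuationSubring K) {x : K} (hx : x ≠ 0) :
    A.valuation x ≠ 0 :=
  (Valuation.ne_zero_iff _).mpr hx

private lemma val_pos' (A : ValuationSubring K) {x : K} (hx : x ≠ 0) :
    0 < A.valuation x :=
  zero_lt_iff.mpr (val_ne_zero' A hx)

private lemma div_mem_iff' (A : ValuationSubring K) {x y : K} (hy : y ≠ 0) :
    x / y ∈ A ↔ A.valuation x ≤ A.valuation y := by
  rw [← A.valuation_le_one_iff, map_div₀, div_le_one₀ (val_pos' A hy)]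

private lemma one_lt_val_of_notMem_s12 (A : ValuationSubring K) {x : K} (hx : x ∉ A) :
    1 < A.valuation x :=
  lt_of_not_ge fun h => hx ((A.valuation_le_one_iff x).mp h)

/-- From two incomparable valuation subrings, an element with small `A`-value and
large `B`-value. -/
private lemma pair_elt_s12 (A B : ValuationSubring K) (hAB : ¬ A ≤ B) (hBA : ¬ B ≤ A) :
    ∃ e : K, e ≠ 0 ∧ A.valuation e < 1 ∧ 1 < B.valuation e := by
  obtain ⟨x, hxA, hxB⟩ := SetLike.not_le_iff_exists.mp hAB
  obtain ⟨y, hyB, hyA⟩ := SetLike.not_le_iff_exists.mp hBA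
  have hy0 : y ≠ 0 := fun h => hyA (h ▸ A.zero_mem)
  have hx0 : x ≠ 0 := fun h => hxB (h ▸ B.zero_mem)
  refine ⟨x / y, div_ne_zero hx0 hy0, ?_, ?_⟩
  · rw [map_div₀, div_lt_iff₀ (val_pos' A hy0), one_mul]
    exact lt_of_le_of_lt ((A.valuation_le_one_iff x).mpr hxA) (one_lt_val_of_notMem_s12 A hyA)
  · rw [map_div₀, lt_div_iff₀ (val_pos' B hy0), one_mul]
    exact lt_of_le_of_lt ((B.valuation_le_one_iff y).mpr hyB) (one_lt_val_of_notMem_s12 B hxB)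

/-- Key approximation lemma: an element with value `< 1` at `O k` and `> 1` at every
index in `s` (with `k ∉ s`). -/
private lemma exists_small_large {n : ℕ} (hn2 : 1 < n) (O : Fin n → ValuationSubring K)
    (hincomp : ∀ i j, i ≠ j → ¬ O i ≤ O j) (k : Fin n) (s : Finset (Fin n)) :
    k ∉ s →
      ∃ c : K, c ≠ 0 ∧ (O k).valuation c < 1 ∧ ∀ j ∈ s, 1 < (O j).valuation c := by
  haveI : Nontrivial (Fin n) := Fin.nontrivial_iff_two_le.mpr hn2
  induction s using Finset.cons_induction with
  | empty =>
    intro _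
    obtain ⟨i, hi⟩ := exists_ne k
    obtain ⟨e, he0, he1, _⟩ := pair_elt_s12 (O k) (O i)
      (hincomp k i (Ne.symm hi)) (hincomp i k hi)
    exact ⟨e, he0, he1, by simp⟩
  | cons i s hi IH =>
    intro hks
    have hki : k ≠ i := fun h => hks (h ▸ Finset.mem_cons_self i s)
    have hksn : k ∉ s := fun h => hks (Finset.mem_cons_of_mem h)
    obtain ⟨c, hc0, hck, hcs⟩ := IH hksn
    obtain ⟨e, he0, hek, hei⟩ := pair_elt_s12 (O k) (O i)
      (hincomp k i hki) (hincomp i k (Ne.symm hki))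
    -- choose a good exponent N
    have hsub : ∀ j ∈ Finset.cons i s hi,
        {N : ℕ | ((O j).valuation e) ^ N = (O j).valuation c}.Subsingleton := by
      intro j hj
      by_cases h1 : (O j).valuation e = 1
      · rcases Finset.mem_cons.mp hj with rfl | hjs
        · exact absurd h1 (ne_of_gt hei)
        · intro N hN
          exfalso
          simp only [Set.mem_setOf_eq, h1, one_pow] at hN
          exact absurd hN.symm (ne_of_gt (hcs j hjs))
      · intro N hN N' hN'
        exact pow_right_injective₀ (val_pos' _ he0) h1 (hN.trans hN'.symm)
    have hBadFin : ((⋃ j ∈ (Finset.cons i s hi : Finset (Fin n)),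
        {N : ℕ | ((O j).valuation e) ^ N = (O j).valuation c}) ∪ {0}).Finite := by
      refine Set.Finite.union ?_ (Set.finite_singleton 0)
      apply Set.Finite.biUnion ((Finset.cons i s hi).finite_toSet)
      intro j hj
      exact Set.Subsingleton.finite (hsub j hj)
    obtain ⟨N, hN⟩ := hBadFin.infinite_compl.nonempty
    rw [Set.mem_compl_iff, Set.mem_union, not_or] at hN
    have hN0 : N ≠ 0 := fun h => hN.2 (by simp [h])
    have hNgood : ∀ j ∈ Finset.cons i s hi,
        ((O j).valuation e) ^ N ≠ (O j).valuation c := by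
      intro j hj hbad
      exact hN.1 (Set.mem_biUnion (Finset.mem_coe.mpr hj) hbad)
    refine ⟨e ^ N + c, ?_, ?_, ?_⟩
    · -- nonzero: value at i is positive
      have hdist := (O i).valuation.map_add_of_distinct_val
        (x := e ^ N) (y := c) (by rw [map_pow]; exact hNgood i (Finset.mem_cons_self i s))
      rw [map_pow] at hdist
      have : (0 : (O i).ValueGroup) < (O i).valuation (e ^ N + c) := by
        rw [hdist]
        exact lt_of_lt_of_le (lt_trans zero_lt_one (one_lt_pow₀ hei hN0)) (le_max_left _ _)
      intro h
      rw [h, map_zero] at this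
      exact lt_irrefl _ this
    · -- value < 1 at k
      refine lt_of_le_of_lt ((O k).valuation.map_add _ _) (max_lt ?_ hck)
      rw [map_pow]
      exact pow_lt_one₀ zero_le' hek hN0
    · -- value > 1 on cons i s
      intro j hj
      have hdist := (O j).valuation.map_add_of_distinct_val
        (x := e ^ N) (y := c) (by rw [map_pow]; exact hNgood j hj)
      rw [map_pow] at hdist
      rw [hdist]
      rcases Finset.mem_cons.mp hj with rfl | hjs
      · exact lt_of_lt_of_le (one_lt_pow₀ hei hN0) (le_max_left _ _)
      · exact lt_of_lt_of_le (hcs j hjs) (le_max_right _ _)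

/-- A "one-unit style" element: value `<1` at `O k`, value `= 1` at all other `O j`. -/
private lemma exists_unit_small {n : ℕ} (hn2 : 1 < n) (O : Fin n → ValuationSubring K)
    (hincomp : ∀ i j, i ≠ j → ¬ O i ≤ O j) (k : Fin n) :
    ∃ g : K, g ≠ 0 ∧ (O k).valuation g < 1 ∧ ∀ j, j ≠ k → (O j).valuation g = 1 := by
  obtain ⟨c, hc0, hck, hcs⟩ := exists_small_large hn2 O hincomp k (Finset.univ.erase k)
    (Finset.notMem_erase k _)
  have hcs' : ∀ j, j ≠ k → 1 < (O j).valuation c := fun j hj =>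
    hcs j (Finset.mem_erase.mpr ⟨hj, Finset.mem_univ j⟩)
  have hk1 : (O k).valuation (1 + c) = 1 := by
    have := (O k).valuation.map_add_of_distinct_val (x := 1) (y := c)
      (by rw [map_one]; exact ne_of_gt hck)
    rw [map_one] at this
    rw [this, max_eq_left (le_of_lt hck)]
  have h1c0 : (1 : K) + c ≠ 0 := by
    intro h
    rw [h, map_zero] at hk1
    exact zero_ne_one hk1
  refine ⟨c / (1 + c), div_ne_zero hc0 h1c0, ?_, ?_⟩
  · rw [map_div₀, hk1, div_one]
    exact hck
  · intro j hj
    have hvj : (O j).valuation (1 + c) = (O j).valuation c := by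
      have := (O j).valuation.map_add_of_distinct_val (x := 1) (y := c)
        (by rw [map_one]; exact ne_of_lt (hcs' j hj))
      rw [map_one] at this
      rw [this, max_eq_right (le_of_lt (hcs' j hj))]
    rw [map_div₀, hvj, div_self (val_ne_zero' _ hc0)]

/-- Merging two elements: an element whose value is the max of the two values at
every `O i`. -/
private lemma exists_val_max {n : ℕ} (hn : 0 < n) (O : Fin n → ValuationSubring K)
    (hincomp : ∀ i j, i ≠ j → ¬ O i ≤ O j) {x y : K} (hx : x ≠ 0) (hy : y ≠ 0) :
    ∃ d : K, d ≠ 0 ∧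
      ∀ i, (O i).valuation d = max ((O i).valuation x) ((O i).valuation y) := by
  classical
  have i0 : Fin n := ⟨0, hn⟩
  set T : Finset (Fin n) :=
    Finset.univ.filter (fun i => (O i).valuation x = (O i).valuation y) with hT
  have key : ∃ d : K, ∀ i, (O i).valuation d
      = max ((O i).valuation x) ((O i).valuation y) := by
    rcases Finset.eq_empty_or_nonempty T with hTe | hTne
    · refine ⟨x + y, fun i => ?_⟩
      have hi : (O i).valuation x ≠ (O i).valuation y := by
        intro h
        have : i ∈ T := Finset.mem_filter.mpr ⟨Finset.mem_univ i, h⟩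
        rw [hTe] at this
        exact absurd this (Finset.notMem_empty i)
      exact (O i).valuation.map_add_of_distinct_val hi
    · by_cases hn2 : 1 < n
      · choose g hg0 hg1 hg2 using fun k => exists_unit_small hn2 O hincomp k
        set t : K := ∏ k ∈ T, g k with ht
        have ht0 : t ≠ 0 := Finset.prod_ne_zero_iff.mpr fun k _ => hg0 k
        have hvt : ∀ i, i ∉ T → (O i).valuation t = 1 := by
          intro i hiT
          rw [ht, map_prod]
          exact Finset.prod_eq_one fun k hk =>
            hg2 k i (fun h => hiT (h ▸ hk))
        have hvt' : ∀ i, i ∈ T → (O i).valuation t < 1 := by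
          intro i hiT
          rw [ht, map_prod]
          rw [Finset.prod_eq_single i
            (fun k hk hki => hg2 k i (Ne.symm hki)) (fun h => absurd hiT h)]
          exact hg1 i
        refine ⟨x + t * y, fun i => ?_⟩
        by_cases hiT : i ∈ T
        · have hxy : (O i).valuation x = (O i).valuation y :=
            (Finset.mem_filter.mp hiT).2
          have hty : (O i).valuation (t * y) < (O i).valuation y := by
            rw [map_mul]
            exact mul_lt_of_lt_one_left (val_pos' _ hy) (hvt' i hiT)
          have hne : (O i).valuation x ≠ (O i).valuation (t * y) :=
            (ne_of_lt (hxy ▸ hty)).symm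
          rw [(O i).valuation.map_add_of_distinct_val hne,
            max_eq_left (le_of_lt (hxy ▸ hty)), hxy, max_self]
        · have hty : (O i).valuation (t * y) = (O i).valuation y := by
            rw [map_mul, hvt i hiT, one_mul]
          have hxyne : (O i).valuation x ≠ (O i).valuation y := by
            intro h
            exact hiT (Finset.mem_filter.mpr ⟨Finset.mem_univ i, h⟩)
          rw [(O i).valuation.map_add_of_distinct_val (hty ▸ hxyne), hty]
      · -- n = 1
        obtain ⟨j0, hj0⟩ := hTne
        refine ⟨x, fun i => ?_⟩
        have hij : i = j0 := by
          have h1 : n = 1 := le_antisymm (not_lt.mp hn2) hn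
          have hi2 := i.isLt
          have hj2 := j0.isLt
          exact Fin.ext (by omega)
        rw [hij, ← (Finset.mem_filter.mp hj0).2, max_self]
  obtain ⟨d, hd⟩ := key
  refine ⟨d, ?_, hd⟩
  intro h
  have := hd i0
  rw [h, map_zero] at this
  have : (0 : (O i0).ValueGroup) < 0 := by
    calc (0 : (O i0).ValueGroup) < (O i0).valuation x := val_pos' _ hx
    _ ≤ max ((O i0).valuation x) ((O i0).valuation y) := le_max_left _ _
    _ = 0 := this.symm
  exact lt_irrefl _ this

/-- Realizing the maximum of the values of finitely many elements. -/
private lemma exists_val_max_finset {n m : ℕ} (hn : 0 < n) (O : Fin n → ValuationSubring K)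
    (hincomp : ∀ i j, i ≠ j → ¬ O i ≤ O j) (a : Fin m → K) (ha : ∀ j, a j ≠ 0)
    (s : Finset (Fin m)) (hs : s.Nonempty) :
    ∃ b : K, b ≠ 0 ∧ ∀ i,
      (∀ j ∈ s, (O i).valuation (a j) ≤ (O i).valuation b) ∧
      (∃ j ∈ s, (O i).valuation b = (O i).valuation (a j)) := by
  induction s using Finset.cons_induction with
  | empty => exact absurd hs (by simp)
  | cons p s hp IH =>
    rcases Finset.eq_empty_or_nonempty s with rfl | hsne
    · refine ⟨a p, ha p, fun i => ⟨?_, ⟨p, Finset.mem_cons_self p _, rfl⟩⟩⟩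
      intro j hj
      have : j = p := by
        rcases Finset.mem_cons.mp hj with h | h
        · exact h
        · exact absurd h (Finset.notMem_empty j)
      rw [this]
    · obtain ⟨b, hb0, hb⟩ := IH hsne
      obtain ⟨d, hd0, hd⟩ := exists_val_max hn O hincomp (ha p) hb0
      refine ⟨d, hd0, fun i => ⟨?_, ?_⟩⟩
      · intro j hj
        rw [hd i]
        rcases Finset.mem_cons.mp hj with rfl | hjs
        · exact le_max_left _ _
        · exact le_trans ((hb i).1 j hjs) (le_max_right _ _)
      · rcases max_choice ((O i).valuation (a p)) ((O i).valuation b) with h | h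
        · exact ⟨p, Finset.mem_cons_self p _, (hd i).trans h⟩
        · obtain ⟨j, hjs, hjb⟩ := (hb i).2
          exact ⟨j, Finset.mem_cons_of_mem hjs, ((hd i).trans h).trans hjb⟩

end Aux

/-- Let `O_1, …, O_n` be pairwise incomparable valuation subrings of a field `K`.  Given
nonzero `a_1, …, a_m ∈ K` (`m ≥ 1`), there are nonzero `b, c ∈ K` such that for every
`i`: `b` realizes at `O_i` the minimum of the additive values of the `a_j`
(`a_j/b ∈ O_i` for all `j`, and `b/a_j ∈ O_i` for some `j`), and `c` realizes at `O_i`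
the maximum of the additive values of the `a_j` (`c/a_j ∈ O_i` for all `j`, and
`a_j/c ∈ O_i` for some `j`). -/
theorem exists_min_and_max_of_values
    {K : Type*} [Field K] (n : ℕ) (hn : 0 < n)
    (O : Fin n → ValuationSubring K)
    (hincomp : ∀ i j, i ≠ j → ¬ O i ≤ O j)
    (m : ℕ) (hm : 0 < m) (a : Fin m → K) (ha : ∀ j, a j ≠ 0) :
    ∃ b c : K, b ≠ 0 ∧ c ≠ 0 ∧ ∀ i,
      ((∀ j, a j / b ∈ O i) ∧ (∃ j, b / a j ∈ O i)) ∧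
      ((∀ j, c / a j ∈ O i) ∧ (∃ j, a j / c ∈ O i)) := by
  haveI : Nonempty (Fin m) := ⟨⟨0, hm⟩⟩
  have huniv : (Finset.univ : Finset (Fin m)).Nonempty := Finset.univ_nonempty
  obtain ⟨b, hb0, hb⟩ := exists_val_max_finset hn O hincomp a ha Finset.univ huniv
  obtain ⟨b', hb'0, hb'⟩ := exists_val_max_finset hn O hincomp (fun j => (a j)⁻¹)
    (fun j => inv_ne_zero (ha j)) Finset.univ huniv
  refine ⟨b, b'⁻¹, hb0, inv_ne_zero hb'0, fun i => ⟨⟨?_, ?_⟩, ?_, ?_⟩⟩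
  · intro j
    exact (div_mem_iff' _ hb0).mpr ((hb i).1 j (Finset.mem_univ j))
  · obtain ⟨j, _, hj⟩ := (hb i).2
    exact ⟨j, (div_mem_iff' _ (ha j)).mpr (le_of_eq hj)⟩
  · intro j
    have heq : b'⁻¹ / a j = (a j)⁻¹ / b' := by
      rw [div_eq_mul_inv, div_eq_mul_inv, mul_comm]
    rw [heq]
    exact (div_mem_iff' _ hb'0).mpr ((hb' i).1 j (Finset.mem_univ j))
  · obtain ⟨j, _, hj⟩ := (hb' i).2
    have heq : a j / b'⁻¹ = b' / (a j)⁻¹ := by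
      rw [div_eq_mul_inv, div_eq_mul_inv, inv_inv, inv_inv, mul_comm]
    exact ⟨j, heq ▸ (div_mem_iff' _ (inv_ne_zero (ha j))).mpr (le_of_eq hj)⟩
end

section
/- Let O_1, …, O_n be pairwise incomparable valuation subrings of a field K, with m_i the maximal ideal of O_i. Then for any elements c_1, …, c_n with c_i ∈ O_i for each i, there exists b ∈ O_1 ∩ ⋯ ∩ O_n such that b − c_i ∈ m_i for every i. (Equivalently, the map from O_1 ∩ ⋯ ∩ O_n to the product of the residue fields k_1 × ⋯ × k_n is surjective.) -/
/-!
For each `i` we find `z i` with `v_i (z i) < 1` and `v_j (z i) > max 1 (v_j (c i))` for `j ≠ i`;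
then `b = ∑ i, c i / (1 + z i)` works, since the `i`-th summand is `≡ c i` modulo `m_i` and lies
in `m_j` for `j ≠ i`. Such a `z i` is built by induction on the number of places: from a
solution `z` for the places so far and an element `w` for one new place (obtained from
incomparability of a pair), `z ^ N + w` is a solution once `N` is chosen so that no
cancellation occurs at any of the places.
-/

open Finset

namespace Valuation

variable {K Γ₀ : Type*} [Field K] [LinearOrderedCommGroupWithZero Γ₀] (v : Valuation K Γ₀)
  {c z : K}

theorem map_div_one_add_sub_lt_one (hz : v z < 1) (hc : v c ≤ 1) : v (c / (1 + z) - c) < 1 := by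
  have hvz : v (1 + z) = 1 := v.map_one_add_of_lt hz
  have hz₀ : 1 + z ≠ 0 := fun h => by simp [h] at hvz
  rw [show c / (1 + z) - c = -(z * c) / (1 + z) by field_simp; ring, map_div, map_neg, hvz,
    div_one, map_mul]
  exact mul_lt_one_of_lt_of_le hz hc

theorem map_div_one_add_lt_one (h : max 1 (v c) < v z) : v (c / (1 + z)) < 1 := by
  have hz : 1 < v z := (le_max_left _ _).trans_lt h
  have hvz : v (1 + z) = v z := v.map_add_eq_of_lt_right (by rwa [v.map_one])
  rw [map_div, hvz, div_lt_one₀ (zero_lt_one.trans hz)]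
  exact (le_max_right _ _).trans_lt h

end Valuation

namespace ValuationSubring

variable {K : Type*} [Field K]

theorem one_lt_valuation_of_notMem (A : ValuationSubring K) {x : K} (hx : x ∉ A) :
    1 < A.valuation x :=
  not_le.mp fun h => hx ((A.valuation_le_one_iff x).mp h)

theorem exists_valuation_lt_one_one_lt_valuation {A B : ValuationSubring K} (hAB : ¬A ≤ B)
    (hBA : ¬B ≤ A) : ∃ x, A.valuation x < 1 ∧ 1 < B.valuation x := by
  obtain ⟨q, hqA, hqB⟩ := SetLike.not_le_iff_exists.mp hAB
  obtain ⟨p, hpB, hpA⟩ := SetLike.not_le_iff_exists.mp hBA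
  have hp : p ≠ 0 := fun h => hpA (h ▸ A.zero_mem)
  refine ⟨q / p, ?_, ?_⟩
  · rw [Valuation.map_div, div_lt_one₀ (zero_lt_one.trans (A.one_lt_valuation_of_notMem hpA))]
    exact ((A.valuation_le_one_iff q).mpr hqA).trans_lt (A.one_lt_valuation_of_notMem hpA)
  · rw [Valuation.map_div, one_lt_div₀ ((Valuation.pos_iff _).mpr hp)]
    exact ((B.valuation_le_one_iff p).mpr hpB).trans_lt (B.one_lt_valuation_of_notMem hqB)

theorem exists_valuation_lt_one_max_lt_valuation {A B : ValuationSubring K} (hAB : ¬A ≤ B)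
    (hBA : ¬B ≤ A) {c : K} (hc : c ∈ A) :
    ∃ w, A.valuation w < 1 ∧ max 1 (B.valuation c) < B.valuation w := by
  obtain ⟨x, hxA, hxB⟩ := exists_valuation_lt_one_one_lt_valuation hAB hBA
  rcases le_or_gt (B.valuation c) 1 with hcB | hcB
  · exact ⟨x, hxA, by rwa [max_eq_left hcB]⟩
  · refine ⟨x * c, ?_, ?_⟩
    · rw [Valuation.map_mul]
      exact mul_lt_one_of_lt_of_le hxA ((A.valuation_le_one_iff c).mpr hc)
    · rw [max_eq_right hcB.le, Valuation.map_mul]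
      exact lt_mul_of_one_lt_left (zero_lt_one.trans hcB) hxB

theorem exists_pow_add_valuation_eq_max {ι : Type*} (O : ι → ValuationSubring K) (s : Finset ι)
    {x y : K} (h : ∀ j ∈ s, 1 < (O j).valuation x ∨ 1 < (O j).valuation y) :
    ∃ N, 0 < N ∧ ∀ j ∈ s,
      (O j).valuation (x ^ N + y) = max ((O j).valuation x ^ N) ((O j).valuation y) := by
  -- At each place at most one exponent `N` makes the two summands equally large.
  have hbad : ∀ j ∈ s, {N : ℕ | (O j).valuation x ^ N = (O j).valuation y}.Subsingleton := by
    intro j hj N hN M hM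
    by_cases hx : 1 < (O j).valuation x
    · exact (pow_right_strictMono₀ hx).injective (hN.trans hM.symm)
    · have hy := (h j hj).resolve_left hx
      exact absurd hN ((pow_le_one₀ zero_le (not_lt.mp hx)).trans_lt hy).ne
  obtain ⟨N, hN, hNpos⟩ := (Set.Finite.biUnion s.finite_toSet fun j hj => (hbad j hj).finite)
    |>.infinite_compl.exists_gt 0
  refine ⟨N, hNpos, fun j hj => ?_⟩
  rw [← Valuation.map_pow]
  apply Valuation.map_add_of_distinct_val
  rw [Valuation.map_pow]
  exact fun heq => hN (Set.mem_biUnion hj heq)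

theorem exists_valuation_lt_one_forall_max_lt_valuation {ι : Type*} (O : ι → ValuationSubring K)
    {A : ValuationSubring K} {c : K} (hc : c ∈ A) (s : Finset ι) (hAO : ∀ j ∈ s, ¬A ≤ O j)
    (hOA : ∀ j ∈ s, ¬O j ≤ A) :
    ∃ z, A.valuation z < 1 ∧ ∀ j ∈ s, max 1 ((O j).valuation c) < (O j).valuation z := by
  classical
  induction s using Finset.induction_on with
  | empty => exact ⟨0, by simp, by simp⟩
  | insert i s _ ih =>
    obtain ⟨z, hzA, hz⟩ := ih (fun j hj => hAO j (mem_insert_of_mem hj))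
      (fun j hj => hOA j (mem_insert_of_mem hj))
    obtain ⟨w, hwA, hw⟩ := exists_valuation_lt_one_max_lt_valuation
      (hAO i (mem_insert_self i s)) (hOA i (mem_insert_self i s)) hc
    have hzw : ∀ j ∈ insert i s, 1 < (O j).valuation z ∨ 1 < (O j).valuation w := by
      intro j hj
      rcases mem_insert.mp hj with rfl | hj
      · exact .inr ((le_max_left _ _).trans_lt hw)
      · exact .inl ((le_max_left _ _).trans_lt (hz j hj))
    obtain ⟨N, hN, hmax⟩ := exists_pow_add_valuation_eq_max O (insert i s) hzw
    refine ⟨z ^ N + w, ?_, fun j hj => ?_⟩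
    · refine A.valuation.map_add_lt ?_ hwA
      rw [Valuation.map_pow]
      exact pow_lt_one₀ zero_le hzA hN.ne'
    · rw [hmax j hj]
      rcases mem_insert.mp hj with rfl | hj
      · exact lt_max_of_lt_right hw
      · exact lt_max_of_lt_left <|
          (hz j hj).trans_le (le_self_pow₀ ((le_max_left _ _).trans (hz j hj).le) hN.ne')

end ValuationSubring

theorem chinese_remainder_for_incomparable_valuationSubrings_general
    {K : Type*} [Field K] (n : ℕ)
    (O : Fin n → ValuationSubring K)
    (hincomp : ∀ i j, i ≠ j → ¬ O i ≤ O j)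
    (c : Fin n → K) (hc : ∀ i, c i ∈ O i) :
    ∃ b : K, (∀ i, b ∈ O i) ∧ ∀ i, b - c i ∈ (O i).nonunits := by
  have hz : ∀ i, ∃ z, (O i).valuation z < 1 ∧
      ∀ j ∈ univ.erase i, max 1 ((O j).valuation (c i)) < (O j).valuation z := fun i =>
    (O i).exists_valuation_lt_one_forall_max_lt_valuation O (hc i) _
      (fun j hj => hincomp i j (ne_of_mem_erase hj).symm)
      (fun j hj => hincomp j i (ne_of_mem_erase hj))
  choose z hzi hzj using hz
  have hb : ∀ k, (O k).valuation (∑ i, c i / (1 + z i) - c k) < 1 := by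
    intro k
    rw [← add_sum_erase _ _ (mem_univ k), add_sub_right_comm]
    refine Valuation.map_add_lt _ ?_ (Valuation.map_sum_lt _ one_ne_zero fun i hi => ?_)
    · exact (O k).valuation.map_div_one_add_sub_lt_one (hzi k)
        (((O k).valuation_le_one_iff _).mpr (hc k))
    · exact (O k).valuation.map_div_one_add_lt_one
        (hzj i k (mem_erase.mpr ⟨(ne_of_mem_erase hi).symm, mem_univ k⟩))
  refine ⟨∑ i, c i / (1 + z i), fun k => ?_, fun k => ((O k).mem_nonunits_iff).mpr (hb k)⟩
  simpa using add_mem ((O k).mem_of_valuation_le_one _ (hb k).le) (hc k)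

/-- Chinese remainder theorem for pairwise incomparable valuation subrings: let
`O_1, …, O_n` be pairwise incomparable valuation subrings of a field `K`, with `m_i` the
maximal ideal of `O_i`.  For any `c_1, …, c_n` with `c_i ∈ O_i`, there exists
`b ∈ O_1 ∩ ⋯ ∩ O_n` with `b − c_i ∈ m_i` for every `i` (membership in `m_i` is expressed
via `(O i).nonunits`). -/
theorem chinese_remainder_for_incomparable_valuationSubrings
    {K : Type*} [Field K] (n : ℕ) (hn : 0 < n)
    (O : Fin n → ValuationSubring K)
    (hincomp : ∀ i j, i ≠ j → ¬ O i ≤ O j)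
    (c : Fin n → K) (hc : ∀ i, c i ∈ O i) :
    ∃ b : K, (∀ i, b ∈ O i) ∧ ∀ i, b - c i ∈ (O i).nonunits :=
  chinese_remainder_for_incomparable_valuationSubrings_general n O hincomp c hc
end

section
/- Let Γ be a linearly ordered abelian group (written additively) and let U ⊆ Γ be an upward-closed subset (if x ∈ U and x ≤ y then y ∈ U), thought of as the set of elements lying strictly above a cut Ξ in Γ. Then at least one of the following holds: (1) there exists γ < 0 in Γ such that for all x ∈ U, x + γ ∈ U; (2) there exists γ ∈ Γ with γ ∉ U and γ + γ ∈ U; (3) there exists γ ∈ Γ with γ + γ ∉ U and γ ∈ U; (4) U = {x ∈ Γ : x > 0}; (5) U = {x ∈ Γ : x ≥ 0}. -/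
/-!
Assume none of (1)–(3) holds. Failure of (2) and (3) says that both `U` and its complement are
closed under doubling; as `U` is an upper set and `Uᶜ` a lower set, both are then closed under
addition, since `a + b` lies between `2 min a b` and `2 max a b`. Failure of (1) now pins `U`
between `{x | 0 < x}` and `{x | 0 ≤ x}`: a negative element of `U` could be added to every element
of `U`, and a positive `x ∉ U` would give `y ∈ U` with `y - x ∉ U`, so that `y = x + (y - x) ∉ U`.
-/

open Set

theorem Set.eq_Ioi_or_eq_Ici_of_Ioi_subset_of_subset_Ici {α : Type*} [PartialOrder α] {a : α}
    {s : Set α} (hIoi : Ioi a ⊆ s) (hIci : s ⊆ Ici a) : s = Ioi a ∨ s = Ici a := by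
  by_cases ha : a ∈ s
  · refine Or.inr (hIci.antisymm fun x hx => ?_)
    rcases (mem_Ici.mp hx).eq_or_lt with rfl | hlt
    exacts [ha, hIoi hlt]
  · exact Or.inl (Subset.antisymm
      (fun x hx => (hIci hx).lt_of_ne fun hax => ha (hax ▸ hx)) hIoi)

section OrderedAddMonoid

variable {Γ : Type*} [AddCommMonoid Γ] [LinearOrder Γ] [IsOrderedAddMonoid Γ] {s : Set Γ}

theorem IsUpperSet.add_mem_of_forall_add_self_mem (hs : IsUpperSet s)
    (hdbl : ∀ a ∈ s, a + a ∈ s) {a b : Γ} (ha : a ∈ s) (hb : b ∈ s) : a + b ∈ s := by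
  rcases le_total a b with hab | hba
  · exact hs (add_le_add_right hab a) (hdbl a ha)
  · exact hs (add_le_add_left hba b) (hdbl b hb)

theorem IsLowerSet.add_mem_of_forall_add_self_mem (hs : IsLowerSet s)
    (hdbl : ∀ a ∈ s, a + a ∈ s) {a b : Γ} (ha : a ∈ s) (hb : b ∈ s) : a + b ∈ s := by
  rcases le_total a b with hab | hba
  · exact hs (add_le_add_left hab b) (hdbl b hb)
  · exact hs (add_le_add_right hba a) (hdbl a ha)

end OrderedAddMonoid

theorem subset_Ici_zero_of_add_mem {Γ : Type*} [Add Γ] [Zero Γ] [LinearOrder Γ] {s : Set Γ}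
    (hadd : ∀ a ∈ s, ∀ b ∈ s, a + b ∈ s)
    (hshift : ∀ γ < 0, ∃ x ∈ s, x + γ ∉ s) : s ⊆ Ici 0 := fun γ hγ => by
  rw [mem_Ici]
  by_contra! hneg
  obtain ⟨x, hx, hxγ⟩ := hshift γ hneg
  exact hxγ (hadd x hx γ hγ)

theorem Ioi_zero_subset_of_add_mem_compl {Γ : Type*} [AddCommGroup Γ] [PartialOrder Γ]
    [IsOrderedAddMonoid Γ] {s : Set Γ} (hadd : ∀ a ∉ s, ∀ b ∉ s, a + b ∉ s)
    (hshift : ∀ γ < 0, ∃ x ∈ s, x + γ ∉ s) : Ioi 0 ⊆ s := fun x hx => by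
  by_contra hxs
  obtain ⟨y, hy, hyx⟩ := hshift (-x) (neg_lt_zero.mpr hx)
  have := hadd x hxs (y + -x) hyx
  rw [add_neg_cancel_comm_assoc] at this
  exact this hy

/-- Let `Γ` be a linearly ordered abelian group and `U ⊆ Γ` an upward-closed subset
(the set of elements lying strictly above a cut `Ξ`).  Then at least one of:
(1) there is `γ < 0` with `x + γ ∈ U` for all `x ∈ U`;
(2) there is `γ` with `γ ∉ U` and `γ + γ ∈ U` (i.e. `γ < Ξ < 2γ`);
(3) there is `γ` with `γ + γ ∉ U` and `γ ∈ U` (i.e. `2γ < Ξ < γ`);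
(4) `U = {x : 0 < x}` (the cut is `0⁺`);
(5) `U = {x : 0 ≤ x}` (the cut is `0⁻`). -/
theorem cut_pentachotomy
    {Γ : Type*} [AddCommGroup Γ] [LinearOrder Γ] [IsOrderedAddMonoid Γ]
    (U : Set Γ) (hU : ∀ x ∈ U, ∀ y, x ≤ y → y ∈ U) :
    (∃ γ : Γ, γ < 0 ∧ ∀ x ∈ U, x + γ ∈ U) ∨
    (∃ γ : Γ, γ ∉ U ∧ γ + γ ∈ U) ∨
    (∃ γ : Γ, γ + γ ∉ U ∧ γ ∈ U) ∨
    U = {x : Γ | 0 < x} ∨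
    U = {x : Γ | 0 ≤ x} := by
  refine or_iff_not_imp_left.2 fun hno1 => or_iff_not_imp_left.2 fun hno2 =>
    or_iff_not_imp_left.2 fun hno3 => ?_
  have hshift : ∀ γ < 0, ∃ x ∈ U, x + γ ∉ U := by simpa using hno1
  have hUpper : IsUpperSet U := fun a b hab ha => hU a ha b hab
  have haddU : ∀ a ∈ U, ∀ b ∈ U, a + b ∈ U := fun a ha b hb =>
    hUpper.add_mem_of_forall_add_self_mem (fun c hc => by_contra fun h => hno3 ⟨c, h, hc⟩) ha hb
  have haddC : ∀ a ∉ U, ∀ b ∉ U, a + b ∉ U := fun a ha b hb =>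
    hUpper.compl.add_mem_of_forall_add_self_mem (fun c hc h => hno2 ⟨c, hc, h⟩) ha hb
  exact eq_Ioi_or_eq_Ici_of_Ioi_subset_of_subset_Ici
    (Ioi_zero_subset_of_add_mem_compl haddC hshift) (subset_Ici_zero_of_add_mem haddU hshift)
end

section
/- Let K be a field, R_0 a multi-valuation ring on K, and J an R_0-submodule of K (where K is an R_0-module via R_0 ⊆ K) such that: (i) J·J = J, i.e., every product of two elements of J lies in J and every element of J is a finite sum x_1y_1 + ⋯ + x_my_m with all x_j, y_j ∈ J; and (ii) 1 + J is a subgroup of the multiplicative group K^×, i.e., −1 ∉ J, (1+x)(1+y) ∈ 1 + J for all x, y ∈ J, and (1+x)⁻¹ ∈ 1 + J for all x ∈ J. Then there exist pairwise incomparable valuation subrings O_1, …, O_n of K (n ≥ 1) such that the subring {x ∈ K : x·J ⊆ J} equals O_1 ∩ ⋯ ∩ O_n and J = m_1 ∩ ⋯ ∩ m_n (as subsets of K), where m_i is the maximal ideal of O_i. In other words, J is the Jacobson radical of the multi-valuation ring {x ∈ K : x·J ⊆ J}. -/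
/-!
Write `R₀ = ⋂ Oᵢ`. For `a ∈ K` and a prime `p` avoiding finitely many exceptions, the geometric
sum `g = 1 + a + ⋯ + a^(p-1)` has `vⱼ(g) = max(1, vⱼ(a))^(p-1)` at every `Oⱼ`, so `a^(p-2)/g` and
`a^(p-1)/g` lie in `R₀`: each `Oᵢ` is a localisation of `R₀`. Hence every valuation overring of
`R₀` contains some `Oᵢ`, and membership in an `R₀`-module `J` is decided in the modules `Oᵢ J`.

Let `S = {x : x J ⊆ J}`. If `J = J²`, the complement of `Oᵢ J` is multiplicatively closed, and
since `1 + J` is a group, `J` generates a proper ideal of `S[x⁻¹]` for every `x ∉ J`. Chevalley's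
extension theorem then yields a valuation ring `V ⊇ S` with `J ⊆ m_V` and `x⁻¹ ∈ V`. The maximal
such `V` are finitely many, because each contains some `Oᵢ` and the overrings of `Oᵢ` form a
chain. They are the `O'ᵢ`: `J` is the intersection of their maximal ideals, and `S` is the
intersection of the rings.
-/

open Polynomial Finset IsLocalRing Pointwise

section

variable {K : Type*} [Field K]

theorem eq_of_geom_sum_eq_zero {R : Type*} [CommRing R] [Nontrivial R] {b : R} {p q : ℕ}
    (hp : p.Prime) (hq : q.Prime) (hbp : ∑ i ∈ range p, b ^ i = 0)
    (hbq : ∑ i ∈ range q, b ^ i = 0) : p = q := by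
  have pow_eq_one {r : ℕ} (h : ∑ i ∈ range r, b ^ i = 0) : b ^ r = 1 := by
    have := geom_sum_mul b r
    rwa [h, zero_mul, eq_comm, sub_eq_zero] at this
  by_contra hpq
  have hcop : p.Coprime q := (Nat.coprime_primes hp hq).mpr hpq
  obtain rfl : b = 1 := (pow_eq_one_iff_of_coprime hcop).mp ⟨pow_eq_one hbp, pow_eq_one hbq⟩
  simp only [one_pow, sum_const, card_range, nsmul_eq_mul, mul_one] at hbp hbq
  have := (Nat.isCoprime_iff_coprime.mpr hcop).map (Int.castRingHom R)
  simp only [eq_intCast, Int.cast_natCast, hbp, hbq, isCoprime_zero_left] at this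
  exact not_isUnit_zero this

theorem ValuationSubring.setOf_prime_valuation_geom_sum_lt_one_subsingleton
    (A : ValuationSubring K) {a : K} (ha : a ∈ A) :
    {p : ℕ | p.Prime ∧ A.valuation (∑ i ∈ range p, a ^ i) < 1}.Subsingleton := by
  have residue_geom_sum {p : ℕ} (h : A.valuation (∑ i ∈ range p, a ^ i) < 1) :
      ∑ i ∈ range p, residue A ⟨a, ha⟩ ^ i = 0 := by
    have := (A.valuation_lt_one_iff (∑ i ∈ range p, ⟨a, ha⟩ ^ i)).mpr (by simpa using h)
    rw [← residue_eq_zero_iff] at this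
    simpa only [map_sum, map_pow] using this
  exact fun p hp q hq ↦ eq_of_geom_sum_eq_zero hp.1 hq.1 (residue_geom_sum hp.2)
    (residue_geom_sum hq.2)

theorem ValuationSubring.valuation_geom_sum (A : ValuationSubring K) {a : K} {N : ℕ}
    (h : a ∈ A → A.valuation (∑ k ∈ range (N + 1), a ^ k) = 1) :
    A.valuation (∑ k ∈ range (N + 1), a ^ k) = max 1 (A.valuation a) ^ N := by
  by_cases ha : A.valuation a ≤ 1
  · rw [h ((A.valuation_le_one_iff a).mp ha), max_eq_left ha, one_pow]
  replace ha := not_le.mp ha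
  rw [max_eq_right ha.le, sum_range_succ, add_comm, Valuation.map_add_eq_of_lt_left, map_pow]
  rw [map_pow]
  exact Valuation.map_sum_lt _ (pow_ne_zero _ (zero_le.trans_lt ha).ne') fun k hk ↦ by
    rw [map_pow]; exact pow_lt_pow_right₀ ha (mem_range.mp hk)

theorem exists_valuation_geom_sum_eq_one {ι : Type*} [Finite ι] (O : ι → ValuationSubring K)
    (a : K) : ∃ N, 0 < N ∧ ∑ k ∈ range (N + 1), a ^ k ≠ 0 ∧
      ∀ i, a ∈ O i → (O i).valuation (∑ k ∈ range (N + 1), a ^ k) = 1 := by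
  have hbad : ({p : ℕ | p.Prime ∧ ∑ k ∈ range p, a ^ k = 0} ∪
      ⋃ i, {p : ℕ | p.Prime ∧ a ∈ O i ∧ (O i).valuation (∑ k ∈ range p, a ^ k) < 1}).Finite := by
    refine .union (Set.Subsingleton.finite fun p hp q hq ↦
        eq_of_geom_sum_eq_zero hp.1 hq.1 hp.2 hq.2)
      (Set.finite_iUnion fun i ↦ Set.Subsingleton.finite fun p hp q hq ↦
        (O i).setOf_prime_valuation_geom_sum_lt_one_subsingleton hp.2.1 ⟨hp.1, hp.2.2⟩
          ⟨hq.1, hq.2.2⟩)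
  obtain ⟨p, hp, hpbad⟩ := (Nat.infinite_setOfPred_prime.sdiff hbad).nonempty
  simp only [Set.mem_union, Set.mem_ofPred_eq, Set.mem_iUnion, not_or, not_exists, not_and,
    not_lt] at hpbad
  obtain ⟨N, rfl⟩ : ∃ N, p = N + 1 := ⟨p - 1, (Nat.sub_add_cancel hp.one_lt.le).symm⟩
  refine ⟨N, by have := hp.two_le; omega, hpbad.1 hp, fun i hi ↦ le_antisymm ?_ (hpbad.2 i hp hi)⟩
  exact ((O i).valuation_le_one_iff _).mpr (sum_mem fun k _ ↦ pow_mem hi k)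

/-- `O i` is the localisation of `⨅ j, O j` at the centre of `O i`. -/
theorem exists_mem_iInf_valuation_eq_one_mul_mem {ι : Type*} [Finite ι]
    (O : ι → ValuationSubring K) {i : ι} {a : K} (ha : a ∈ O i) :
    ∃ s ∈ ⨅ j, (O j).toSubring, (O i).valuation s = 1 ∧ s * a ∈ ⨅ j, (O j).toSubring := by
  suffices of_unit : ∀ b, (O i).valuation b = 1 →
      ∃ s ∈ ⨅ j, (O j).toSubring, (O i).valuation s = 1 ∧ s * b ∈ ⨅ j, (O j).toSubring by
    rcases (((O i).valuation_le_one_iff a).mpr ha).lt_or_eq with hlt | heq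
    · obtain ⟨s, hs, hs1, hsb⟩ := of_unit (1 + a) (Valuation.map_one_add_of_lt _ hlt)
      exact ⟨s, hs, hs1, by simpa [mul_add] using sub_mem hsb hs⟩
    · exact of_unit a heq
  intro b hb
  obtain ⟨N, hN, hg0, hg⟩ := exists_valuation_geom_sum_eq_one O b
  set g := ∑ k ∈ range (N + 1), b ^ k
  have hmem : ∀ k ≤ N, b ^ k / g ∈ ⨅ j, (O j).toSubring := fun k hk ↦ by
    refine Subring.mem_iInf.mpr fun j ↦ ((O j).valuation_le_one_iff _).mp ?_
    rw [map_div₀, (O j).valuation_geom_sum (hg j), map_pow,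
      div_le_one₀ (pow_pos (zero_lt_one.trans_le (le_max_left _ _)) _)]
    exact (pow_le_pow_left₀ zero_le (le_max_right _ _) k).trans
      (pow_le_pow_right₀ (le_max_left _ _) hk)
  refine ⟨b ^ (N - 1) / g, hmem _ (Nat.sub_le _ _), ?_, ?_⟩
  · rw [map_div₀, map_pow, hb, one_pow, hg i (((O i).valuation_le_one_iff b).mp hb.le), div_one]
  · rw [div_mul_eq_mul_div, ← pow_succ, Nat.sub_add_cancel hN]
    exact hmem N le_rfl

def ValuationSubring.centerIdeal {R : Subring K} (V : ValuationSubring K)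
    (h : R ≤ V.toSubring) : Ideal R :=
  (maximalIdeal V).comap (Subring.inclusion h)

theorem ValuationSubring.mem_centerIdeal {R : Subring K} {V : ValuationSubring K}
    (h : R ≤ V.toSubring) {r : R} : r ∈ V.centerIdeal h ↔ V.valuation r < 1 :=
  V.valuation_lt_one_iff _

theorem ValuationSubring.le_total_of_le {A V W : ValuationSubring K} (hV : A ≤ V) (hW : A ≤ W) :
    V ≤ W ∨ W ≤ V :=
  le_total (⟨V, hV⟩ : {S // A ≤ S}) ⟨W, hW⟩

theorem ValuationSubring.exists_coe_eq_biUnion_of_isChain {c : Set (ValuationSubring K)}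
    (hc : IsChain (· ≤ ·) c) (hne : c.Nonempty) :
    ∃ U : ValuationSubring K, (U : Set K) = ⋃ V ∈ c, (V : Set K) := by
  have : Nonempty c := hne.to_subtype
  have hdir : Directed (· ≤ ·) fun V : c ↦ V.1.toSubring := hc.directed
  refine ⟨.ofSubring (⨆ V : c, V.1.toSubring) fun x ↦ ?_, ?_⟩
  · obtain ⟨V, hV⟩ := hne
    exact (V.mem_or_inv_mem x).imp (fun h ↦ le_iSup (fun V : c ↦ V.1.toSubring) ⟨V, hV⟩ h)
      (fun h ↦ le_iSup (fun V : c ↦ V.1.toSubring) ⟨V, hV⟩ h)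
  · exact (Subring.coe_iSup_of_directed hdir).trans
      (Set.biUnion_eq_iUnion c fun V _ ↦ (V : Set K)).symm

def AddSubgroup.multiplierRing (J : AddSubgroup K) : Subring K where
  carrier := {x | ∀ y ∈ J, x * y ∈ J}
  one_mem' y hy := by rwa [one_mul]
  mul_mem' ha hb y hy := by rw [mul_assoc]; exact ha _ (hb y hy)
  zero_mem' y _ := by rw [zero_mul]; exact J.zero_mem
  add_mem' ha hb y hy := by rw [add_mul]; exact J.add_mem (ha y hy) (hb y hy)
  neg_mem' ha y hy := by rw [neg_mul]; exact J.neg_mem (ha y hy)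

theorem AddSubgroup.mem_multiplierRing_of_mul_le {J : AddSubgroup K}
    (hJ : J.toAddSubmonoid * J.toAddSubmonoid ≤ J.toAddSubmonoid) {x : K} (hx : x ∈ J) :
    x ∈ J.multiplierRing := fun _ hy ↦ hJ (AddSubmonoid.mul_mem_mul hx hy)

/-- As `J ⊆ J * J`, the elements outside `A • J` are closed under products. -/
theorem ValuationSubring.valuation_lt_valuation_pow (A : ValuationSubring K) {J : AddSubgroup K}
    (hJ : J.toAddSubmonoid ≤ J.toAddSubmonoid * J.toAddSubmonoid) {x : K}
    (hx : ∀ w ∈ J, A.valuation w < A.valuation x) (n : ℕ) :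
    ∀ w ∈ J, A.valuation w < A.valuation (x ^ (n + 1)) := by
  induction n with
  | zero => simpa using hx
  | succ n ih =>
    intro w hw
    refine AddSubmonoid.mul_induction_on (hJ hw) (fun a ha b hb ↦ ?_) fun a b ha hb ↦
      (A.valuation.map_add a b).trans_lt (max_lt ha hb)
    rw [map_mul, pow_succ, map_mul]
    exact mul_lt_mul_of_le_of_lt_of_nonneg_of_pos (ih a ha).le (hx b hb) zero_le
      (zero_le.trans_lt (ih a ha))

def IsAdmissible (J : AddSubgroup K) (V : ValuationSubring K) : Prop :=
  J.multiplierRing ≤ V.toSubring ∧ (J : Set K) ⊆ V.nonunits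

section

variable {ι : Type*} [Fintype ι] [Nonempty ι] (O : ι → ValuationSubring K) {J : AddSubgroup K}

theorem exists_forall_valuation_lt_one_of_ne_top (I : Ideal ↥(⨅ i, (O i).toSubring))
    (hI : I ≠ ⊤) : ∃ i, ∀ r ∈ I, (O i).valuation r < 1 := by
  obtain ⟨M, hM, hIM⟩ := I.exists_le_maximal hI
  have hcover : (M : Set ↥(⨅ i, (O i).toSubring)) ⊆
      ⋃ i ∈ (univ : Finset ι),
        ((O i).centerIdeal (iInf_le (fun j ↦ (O j).toSubring) i) : Set _) := by
    intro r hr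
    by_contra! hr'
    simp only [Set.mem_iUnion, SetLike.mem_coe, ValuationSubring.mem_centerIdeal, mem_univ,
      exists_const, not_exists, not_lt] at hr'
    have hr1 (i : ι) : (O i).valuation r = 1 :=
      le_antisymm (((O i).valuation_le_one_iff _).mpr (Subring.mem_iInf.mp r.2 i)) (hr' i)
    have hr0 : (r : K) ≠ 0 := fun h ↦ by simpa [h] using hr1 (Classical.arbitrary ι)
    have hinv : (r : K)⁻¹ ∈ ⨅ i, (O i).toSubring := Subring.mem_iInf.mpr fun i ↦
      ((O i).valuation_le_one_iff _).mp (by rw [map_inv₀, hr1, inv_one])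
    exact hM.ne_top (M.eq_top_of_isUnit_mem hr
      (isUnit_iff_exists_inv.mpr ⟨⟨_, hinv⟩, Subtype.ext (mul_inv_cancel₀ hr0)⟩))
  obtain ⟨i, -, hi⟩ := (Ideal.subset_union_prime (Classical.arbitrary ι) (Classical.arbitrary ι)
    fun i _ _ _ ↦ Ideal.comap_isPrime _ _).mp hcover
  exact ⟨i, fun r hr ↦ ((O i).mem_centerIdeal _).mp (hi (hIM hr))⟩

theorem exists_le_of_iInf_le {V : ValuationSubring K}
    (hV : ⨅ i, (O i).toSubring ≤ V.toSubring) : ∃ i, O i ≤ V := by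
  obtain ⟨i, hi⟩ := exists_forall_valuation_lt_one_of_ne_top O (V.centerIdeal hV)
    (Ideal.comap_ne_top _ (maximalIdeal.isMaximal _).ne_top)
  refine ⟨i, fun a ha ↦ ?_⟩
  obtain ⟨s, hs, hs1, hsa⟩ := exists_mem_iInf_valuation_eq_one_mul_mem O ha
  have hsV : V.valuation s = 1 := le_antisymm ((V.valuation_le_one_iff _).mpr (hV hs))
    (not_lt.mp fun h ↦ (hs1.symm.trans_lt (hi ⟨s, hs⟩ ((V.mem_centerIdeal hV).mpr h))).false)
  have hsaV := (V.valuation_le_one_iff _).mpr (hV hsa)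
  rwa [map_mul, hsV, one_mul, V.valuation_le_one_iff] at hsaV

/-- `∃ w ∈ J, v x ≤ v w` says `x ∈ O i • J`: this is the local–global principle
`J = ⋂ i, O i • J`. -/
theorem mem_of_forall_exists_valuation_le (hJ : ⨅ i, (O i).toSubring ≤ J.multiplierRing) {x : K}
    (hx : ∀ i, ∃ w ∈ J, (O i).valuation x ≤ (O i).valuation w) : x ∈ J := by
  let I : Ideal ↥(⨅ i, (O i).toSubring) :=
    { carrier := {r | (r : K) * x ∈ J}
      zero_mem' := by simp
      add_mem' {r s} hr hs := by simpa [add_mul] using J.add_mem hr hs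
      smul_mem' c r hr := by simpa [mul_assoc] using hJ c.2 _ hr }
  by_cases hI : I = ⊤
  · simpa [I] using (hI ▸ Submodule.mem_top : (1 : ↥(⨅ i, (O i).toSubring)) ∈ I)
  obtain ⟨i, hi⟩ := exists_forall_valuation_lt_one_of_ne_top O I hI
  obtain ⟨w, hw, hxw⟩ := hx i
  obtain rfl | hw0 := eq_or_ne w 0
  · obtain rfl : x = 0 := by simpa using hxw
    exact J.zero_mem
  have hxw' : x / w ∈ O i := ((O i).valuation_le_one_iff _).mp <| by
    rwa [map_div₀, div_le_one₀ (zero_lt_iff.mpr ((O i).valuation.ne_zero_iff.mpr hw0))]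
  obtain ⟨s, hs, hs1, hsa⟩ := exists_mem_iInf_valuation_eq_one_mul_mem O hxw'
  have hsI : (⟨s, hs⟩ : ↥(⨅ i, (O i).toSubring)) ∈ I := by
    simpa [I, mul_div_assoc', div_mul_cancel₀ _ hw0] using hJ hsa w hw
  exact ((hs1.symm.trans_lt (hi _ hsI)).false).elim

theorem mem_of_inv_mul_eval_eq_one (hR : ⨅ i, (O i).toSubring ≤ J.multiplierRing)
    (hJ : J.toAddSubmonoid ≤ J.toAddSubmonoid * J.toAddSubmonoid) {x : K} {q : K[X]}
    (hq : ∀ l, q.coeff l ∈ J) (h : x⁻¹ * q.eval x⁻¹ = 1) : x ∈ J := by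
  by_contra hxJ
  obtain ⟨i, hi⟩ : ∃ i, ∀ w ∈ J, (O i).valuation w < (O i).valuation x := by
    by_contra! hx
    exact hxJ (mem_of_forall_exists_valuation_le O hR hx)
  have hx0 : x ≠ 0 := by
    rintro rfl
    simpa using hi 0 J.zero_mem
  have hsum : x⁻¹ * q.eval x⁻¹ = ∑ l ∈ range (q.natDegree + 1), q.coeff l / x ^ (l + 1) := by
    rw [eval_eq_sum_range, mul_sum]
    exact sum_congr rfl fun l _ ↦ by ring
  have hlt : (O i).valuation (x⁻¹ * q.eval x⁻¹) < 1 := by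
    rw [hsum]
    refine Valuation.map_sum_lt _ one_ne_zero fun l _ ↦ ?_
    rw [map_div₀, div_lt_one₀ (zero_lt_iff.mpr ((O i).valuation.ne_zero_iff.mpr
      (pow_ne_zero _ hx0)))]
    exact (O i).valuation_lt_valuation_pow hJ hi l _ (hq l)
  rw [h, map_one] at hlt
  exact lt_irrefl _ hlt

theorem mem_of_eval_inv_eq_one (hR : ⨅ i, (O i).toSubring ≤ J.multiplierRing)
    (hJ : J.toAddSubmonoid * J.toAddSubmonoid = J.toAddSubmonoid) (h1 : (1 : K) ∉ J)
    (hinv : ∀ y ∈ J, (1 + y)⁻¹ - 1 ∈ J) {x : K} {p : K[X]} (hp : ∀ l, p.coeff l ∈ J)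
    (h : p.eval x⁻¹ = 1) : x ∈ J := by
  set c := p.coeff 0
  -- `1 + J` being a group makes `1 - c` a unit of the multiplier ring; dividing by it removes
  -- the constant term of `p`.
  have hc : 1 - c ≠ 0 := fun hc ↦ h1 (by rw [sub_eq_zero.mp hc]; exact hp 0)
  have hu : (1 - c)⁻¹ ∈ J.multiplierRing := by
    have := J.mem_multiplierRing_of_mul_le hJ.le (hinv (-c) (J.neg_mem (hp 0)))
    simpa [← sub_eq_add_neg] using add_mem (one_mem _) this
  refine mem_of_inv_mul_eval_eq_one O hR hJ.ge (q := C (1 - c)⁻¹ * p.divX)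
    (fun l ↦ by rw [coeff_C_mul, coeff_divX]; exact hu _ (hp _)) ?_
  have hp' := congrArg (eval x⁻¹) (X_mul_divX_add p)
  simp only [eval_add, eval_mul, eval_X, eval_C, h] at hp'
  rw [eval_mul, eval_C, mul_left_comm, show x⁻¹ * p.divX.eval x⁻¹ = 1 - c by
    linear_combination hp', inv_mul_cancel₀ hc]

theorem exists_isAdmissible_inv_mem (hR : ⨅ i, (O i).toSubring ≤ J.multiplierRing)
    (hJ : J.toAddSubmonoid * J.toAddSubmonoid = J.toAddSubmonoid) (h1 : (1 : K) ∉ J)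
    (hinv : ∀ y ∈ J, (1 + y)⁻¹ - 1 ∈ J) {x : K} (hx : x ∉ J) :
    ∃ V, IsAdmissible J V ∧ x⁻¹ ∈ V := by
  let S := J.multiplierRing
  let JS : Ideal S :=
    { carrier := {s | (s : K) ∈ J}
      add_mem' := J.add_mem
      zero_mem' := J.zero_mem
      smul_mem' c _ hs := c.2 _ hs }
  let B := Algebra.adjoin S {x⁻¹}
  have hI : JS.map (algebraMap S B) ≠ ⊤ := by
    intro htop
    obtain ⟨p, hp, hpx⟩ := (Algebra.mem_ideal_map_adjoin x⁻¹ JS).mp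
      (htop ▸ Submodule.mem_top : (1 : B) ∈ JS.map (algebraMap S B))
    refine hx (mem_of_eval_inv_eq_one O hR hJ h1 hinv (p := p.map (algebraMap S K))
      (fun l ↦ by rw [coeff_map]; exact hp l) ?_)
    rw [eval_map_algebraMap, hpx]
    rfl
  obtain ⟨V, hBV, hIV⟩ := Ideal.image_subset_nonunits_valuationSubring (A := B.toSubring) _ hI
  refine ⟨V, ⟨fun s hs ↦ hBV (B.algebraMap_mem ⟨s, hs⟩), fun z hz ↦ ?_⟩,
    hBV (Algebra.subset_adjoin rfl)⟩
  exact hIV ⟨_, Ideal.mem_map_of_mem _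
    (show ⟨z, J.mem_multiplierRing_of_mul_le hJ.le hz⟩ ∈ JS from hz), rfl⟩

theorem finite_setOf_maximal_isAdmissible (hR : ⨅ i, (O i).toSubring ≤ J.multiplierRing) :
    {U | Maximal (IsAdmissible J) U}.Finite := by
  refine (Set.finite_iUnion fun i ↦ Set.Subsingleton.finite
    (s := {U | Maximal (IsAdmissible J) U ∧ O i ≤ U}) fun U hU W hW ↦ ?_).subset fun U hU ↦ ?_
  · rcases ValuationSubring.le_total_of_le hU.2 hW.2 with h | h
    · exact hU.1.eq_of_le hW.1.prop h
    · exact (hW.1.eq_of_le hU.1.prop h).symm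
  · obtain ⟨i, hi⟩ := exists_le_of_iInf_le O (hR.trans hU.prop.1)
    exact Set.mem_iUnion.mpr ⟨i, hU, hi⟩

end

section

variable {J : AddSubgroup K}

theorem exists_maximal_isAdmissible_ge {V : ValuationSubring K} (hV : IsAdmissible J V) :
    ∃ U, V ≤ U ∧ Maximal (IsAdmissible J) U := by
  refine zorn_le_nonempty₀ {V | IsAdmissible J V} (fun c hcA hc W hW ↦ ?_) V hV
  obtain ⟨U, hU⟩ := ValuationSubring.exists_coe_eq_biUnion_of_isChain hc ⟨W, hW⟩
  have hle : ∀ V ∈ c, V ≤ U := fun V hV x hx ↦ by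
    rw [← SetLike.mem_coe, hU]; exact Set.mem_biUnion hV hx
  refine ⟨U, ⟨(hcA hW).1.trans (hle W hW), fun z hz ↦ ?_⟩, hle⟩
  refine U.mem_nonunits_iff_or.mpr (or_iff_not_imp_left.mpr fun hz0 hzU ↦ ?_)
  rw [← SetLike.mem_coe, hU] at hzU
  obtain ⟨V, hVc, hzV⟩ := Set.mem_iUnion₂.mp hzU
  exact ((V.mem_nonunits_iff_or.mp ((hcA hVc).2 hz)).resolve_left hz0) hzV

theorem coe_eq_biInter_nonunits (hsep : ∀ x ∉ J, ∃ V, IsAdmissible J V ∧ x⁻¹ ∈ V) :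
    (J : Set K) = ⋂ U ∈ {U | Maximal (IsAdmissible J) U}, (U.nonunits : Set K) := by
  refine subset_antisymm (fun z hz ↦ Set.mem_iInter₂.mpr fun U hU ↦ hU.prop.2 hz) fun z hz ↦ ?_
  by_contra hzJ
  obtain ⟨V, hV, hzV⟩ := hsep z hzJ
  obtain ⟨U, hVU, hU⟩ := exists_maximal_isAdmissible_ge hV
  have hz0 : z ≠ 0 := by rintro rfl; exact hzJ J.zero_mem
  exact (U.mem_nonunits_iff_or.mp (Set.mem_iInter₂.mp hz U hU)).resolve_left hz0 (hVU hzV)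

theorem coe_multiplierRing_eq_biInter
    (hJ : (J : Set K) = ⋂ U ∈ {U | Maximal (IsAdmissible J) U}, (U.nonunits : Set K)) :
    (J.multiplierRing : Set K) = ⋂ U ∈ {U | Maximal (IsAdmissible J) U}, (U : Set K) := by
  refine subset_antisymm (fun r hr ↦ Set.mem_iInter₂.mpr fun U hU ↦ hU.prop.1 hr) fun r hr y hy ↦ ?_
  rw [← SetLike.mem_coe, hJ] at hy ⊢
  refine Set.mem_iInter₂.mpr fun U hU ↦ ?_
  have hrU := (U.valuation_le_one_iff r).mpr (Set.mem_iInter₂.mp hr U hU)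
  have hyU := U.mem_nonunits_iff.mp (Set.mem_iInter₂.mp hy U hU)
  rw [SetLike.mem_coe, U.mem_nonunits_iff, map_mul]
  exact (mul_le_of_le_one_left zero_le hrU).trans_lt hyU

end

end

theorem idempotent_module_is_jacobson_radical_of_multiValuationRing_general
    {K : Type*} [Field K] (R₀ : Subring K)
    (hR₀ : ∃ n : ℕ, 0 < n ∧ ∃ O : Fin n → ValuationSubring K,
        R₀ = ⨅ i, (O i).toSubring)
    (J : Submodule ↥R₀ K)
    (hmul : ∀ x ∈ J, ∀ y ∈ J, x * y ∈ J)
    (hsum : ∀ z ∈ J, ∃ (m : ℕ) (x y : Fin m → K),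
        (∀ j, x j ∈ J) ∧ (∀ j, y j ∈ J) ∧ z = ∑ j, x j * y j)
    (hneg : (-1 : K) ∉ J)
    (hgrp_inv : ∀ x ∈ J, (1 + x)⁻¹ - 1 ∈ J) :
    ∃ (m : ℕ), 0 < m ∧ ∃ O' : Fin m → ValuationSubring K,
      (∀ i j, i ≠ j → ¬ O' i ≤ O' j) ∧
      ({x : K | ∀ y ∈ J, x * y ∈ J} = ⋂ i, (O' i : Set K)) ∧
      ((J : Set K) = ⋂ i, ((O' i).nonunits : Set K)) := by
  obtain ⟨n, hn, O, rfl⟩ := hR₀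
  have : Nonempty (Fin n) := ⟨⟨0, hn⟩⟩
  have hR : ⨅ i, (O i).toSubring ≤ J.toAddSubgroup.multiplierRing :=
    fun r hr _ hy ↦ J.smul_mem ⟨r, hr⟩ hy
  have hJ : J.toAddSubgroup.toAddSubmonoid * J.toAddSubgroup.toAddSubmonoid =
      J.toAddSubgroup.toAddSubmonoid := by
    refine le_antisymm (AddSubmonoid.mul_le.mpr hmul) fun z hz ↦ ?_
    obtain ⟨m, x, y, hx, hy, rfl⟩ := hsum z hz
    exact sum_mem fun j _ ↦ AddSubmonoid.mul_mem_mul (hx j) (hy j)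
  have h1 : (1 : K) ∉ J := fun h ↦ hneg (J.neg_mem h)
  have hsep (x : K) (hx : x ∉ J.toAddSubgroup) :=
    exists_isAdmissible_inv_mem O hR hJ h1 hgrp_inv hx
  have hJeq := coe_eq_biInter_nonunits hsep
  have hSeq := coe_multiplierRing_eq_biInter hJeq
  obtain ⟨m, f, hf⟩ := (finite_setOf_maximal_isAdmissible O hR).fin_embedding
  rw [← hf, Set.biInter_range] at hJeq hSeq
  have hmax (k : Fin m) : Maximal (IsAdmissible J.toAddSubgroup) (f k) :=
    hf.subset (Set.mem_range_self k)
  obtain ⟨V, hV, -⟩ := hsep 1 h1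
  obtain ⟨U, -, hU⟩ := exists_maximal_isAdmissible_ge hV
  obtain ⟨k, -⟩ : U ∈ Set.range f := hf.superset hU
  exact ⟨m, k.pos, f, fun i j hij hle ↦ hij (f.injective ((hmax i).eq_of_le (hmax j).prop hle)),
    hSeq, hJeq⟩

/-- Let `K` be a field, `R₀` a multi-valuation ring on `K`, and `J` an `R₀`-submodule
of `K` such that (i) `J·J = J` and (ii) `1 + J` is a subgroup of `Kˣ`.  Then the
stabilizer ring `{x ∈ K : x·J ⊆ J}` is an intersection of pairwise incomparable
valuation subrings `O_1, …, O_n` of `K`, and `J = m_1 ∩ ⋯ ∩ m_n` where `m_i` is the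
maximal ideal of `O_i` (expressed via `(O i).nonunits`); i.e. `J` is the Jacobson
radical of the multi-valuation ring `{x ∈ K : x·J ⊆ J}`. -/
theorem idempotent_module_is_jacobson_radical_of_multiValuationRing
    {K : Type*} [Field K] (R₀ : Subring K)
    (hR₀ : ∃ n : ℕ, 0 < n ∧ ∃ O : Fin n → ValuationSubring K,
        R₀ = ⨅ i, (O i).toSubring)
    (J : Submodule ↥R₀ K)
    (hmul : ∀ x ∈ J, ∀ y ∈ J, x * y ∈ J)
    (hsum : ∀ z ∈ J, ∃ (m : ℕ) (x y : Fin m → K),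
        (∀ j, x j ∈ J) ∧ (∀ j, y j ∈ J) ∧ z = ∑ j, x j * y j)
    (hneg : (-1 : K) ∉ J)
    (hgrp_mul : ∀ x ∈ J, ∀ y ∈ J, (1 + x) * (1 + y) - 1 ∈ J)
    (hgrp_inv : ∀ x ∈ J, (1 + x)⁻¹ - 1 ∈ J) :
    ∃ (m : ℕ), 0 < m ∧ ∃ O' : Fin m → ValuationSubring K,
      (∀ i j, i ≠ j → ¬ O' i ≤ O' j) ∧
      ({x : K | ∀ y ∈ J, x * y ∈ J} = ⋂ i, (O' i : Set K)) ∧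
      ((J : Set K) = ⋂ i, ((O' i).nonunits : Set K)) :=
  idempotent_module_is_jacobson_radical_of_multiValuationRing_general R₀ hR₀ J hmul hsum hneg
    hgrp_inv
end

section
/- Let L/K be a finite separable extension of fields and let O be a valuation subring of K. Then there exist n ≥ 1 and valuation subrings O_1, …, O_n of L, each lying over O (i.e., O_i ∩ K = O for each i), such that for every x ∈ O_1 ∩ ⋯ ∩ O_n, the field trace Tr_{L/K}(x) lies in O. -/
/-- Chevalley extension theorem in "lying over" form: a valuation subring of `K`
extends to a valuation subring of any field extension `E` of `K`. -/
lemma exists_valuationSubring_lying_over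
    {K E : Type*} [Field K] [Field E] [Algebra K E] (O : ValuationSubring K) :
    ∃ B : ValuationSubring E, ∀ x : K, algebraMap K E x ∈ B ↔ x ∈ O := by
  obtain ⟨B, hB, hloc⟩ :=
    IsLocalRing.exists_factor_valuationRing ((algebraMap K E).comp O.subtype)
  refine ⟨B, fun x ↦ ⟨fun hx ↦ ?_, fun hx ↦ hB ⟨x, hx⟩⟩⟩
  by_contra hxO
  have hx0 : x ≠ 0 := fun h ↦ hxO (h ▸ O.zero_mem)
  have hxinv : x⁻¹ ∈ O := by
    rcases O.mem_or_inv_mem x with h | h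
    · exact absurd h hxO
    · exact h
  -- the image of `x⁻¹` in `B` is a unit, since `algebraMap K E x ∈ B` is its inverse
  have hunit : IsUnit (((algebraMap K E).comp O.subtype).codRestrict B.toSubring hB
      ⟨x⁻¹, hxinv⟩) := by
    refine isUnit_iff_exists_inv.mpr ⟨⟨algebraMap K E x, hx⟩, ?_⟩
    ext
    show algebraMap K E x⁻¹ * algebraMap K E x = 1
    rw [← map_mul, inv_mul_cancel₀ hx0, map_one]
  have := hloc.1 _ hunit
  obtain ⟨y, hy⟩ := isUnit_iff_exists_inv.mp this
  have hxy : x = (y : K) := by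
    have h1 : x⁻¹ * (y : K) = 1 := congrArg Subtype.val hy
    field_simp at h1
    exact h1.symm
  exact hxO (hxy ▸ y.2)

/-- Let `L/K` be a finite separable extension of fields and `O` a valuation subring of
`K`.  Then there exist `n ≥ 1` and valuation subrings `O_1, …, O_n` of `L`, each lying
over `O` (i.e. `O_i ∩ K = O`), such that for every `x ∈ O_1 ∩ ⋯ ∩ O_n` the field trace
`Tr_{L/K}(x)` lies in `O`. -/
theorem exists_extensions_with_trace_mem
    {K L : Type*} [Field K] [Field L] [Algebra K L]
    [FiniteDimensional K L] [Algebra.IsSeparable K L]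
    (O : ValuationSubring K) :
    ∃ n : ℕ, 0 < n ∧ ∃ O' : Fin n → ValuationSubring L,
      (∀ i, ∀ x : K, algebraMap K L x ∈ O' i ↔ x ∈ O) ∧
      ∀ x : L, (∀ i, x ∈ O' i) → Algebra.trace K L x ∈ O := by
  classical
  set E := AlgebraicClosure L
  obtain ⟨B, hB⟩ := exists_valuationSubring_lying_over (E := E) O
  have : Nonempty (L →ₐ[K] E) := ⟨IsScalarTower.toAlgHom K L E⟩
  set n := Fintype.card (L →ₐ[K] E) with hn
  have hnpos : 0 < n := Fintype.card_pos
  set e : Fin n ≃ (L →ₐ[K] E) := (Fintype.equivFin (L →ₐ[K] E)).symm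
  refine ⟨n, hnpos, fun i ↦ B.comap (e i : L →+* E), fun i x ↦ ?_, fun x hx ↦ ?_⟩
  · have h : (e i) (algebraMap K L x) = algebraMap K E x := (e i).commutes x
    simp only [ValuationSubring.mem_comap, AlgHom.coe_toRingHom, h]
    exact hB x
  · have key : algebraMap K E (Algebra.trace K L x) = ∑ σ : L →ₐ[K] E, σ x :=
      trace_eq_sum_embeddings E
    rw [← hB, key]
    refine Subring.sum_mem _ fun σ _ ↦ ?_
    have := hx (e.symm σ)
    simpa using this
end
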